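/- arXiv:2211.04858 — 6 statements merged into one kernel-verified Lean document; each statement's English description precedes it below -/
import Mathlib

section
/- The weights w₁(x) = x^α e^{-x} and w₂(x) = x^α E_{ν+1}(x) satisfy the matrix Pearson equation: (x w₁)' = (α+1-x) w₁ and (x w₂)' = -w₁ + (α+ν+1) w₂ on (0,∞). -/
open MeasureTheory Set

/-- The generalized exponential integral `E_ν(x) = ∫₁^∞ e^{-xt} t^{-ν} dt`. -/
noncomputable def expE (ν x : ℝ) : ℝ := ∫ t in Ioi (1:ℝ), Real.exp (-(x * t)) * t ^ (-ν)

open Filter Real in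
lemma aux_integrable (c p : ℝ) (hc : 0 < c) :
    IntegrableOn (fun t : ℝ => Real.exp (-(c * t)) * t ^ p) (Ioi 1) := by
  apply integrable_of_isBigO_exp_neg (half_pos hc)
  · apply ContinuousOn.mul
    · exact (Real.continuous_exp.comp (continuous_const.mul continuous_id).neg).continuousOn
    · exact fun t ht => (continuousWithinAt_id.rpow_const
        (Or.inl (lt_of_lt_of_le one_pos ht).ne'))
  · apply Asymptotics.IsLittleO.isBigO
    apply Asymptotics.isLittleO_of_tendsto (fun t ht => absurd ht (Real.exp_pos _).ne')
    have h := tendsto_rpow_mul_exp_neg_mul_atTop_nhds_zero p (c / 2) (half_pos hc)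
    refine h.congr' ?_
    filter_upwards [eventually_gt_atTop (0 : ℝ)] with t ht
    rw [eq_div_iff (Real.exp_pos _).ne']
    rw [neg_mul, mul_comm (Real.exp _) (t ^ p), mul_assoc, ← Real.exp_add]
    ring_nf

open Filter Real in
lemma expE_hasDerivAt (ν x : ℝ) (hx : 0 < x) :
    HasDerivAt (expE (ν + 1)) (-(expE ν x)) x := by
  have key := hasDerivAt_integral_of_dominated_loc_of_deriv_le
    (μ := volume.restrict (Ioi (1:ℝ)))
    (F := fun y t => Real.exp (-(y * t)) * t ^ (-(ν + 1)))
    (F' := fun y t => -(Real.exp (-(y * t)) * t ^ (-ν)))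
    (bound := fun t => Real.exp (-(x / 2 * t)) * t ^ (-ν))
    (x₀ := x) (s := Metric.ball x (x / 2)) (Metric.ball_mem_nhds x (half_pos hx))
    ?_ ?_ ?_ ?_ ?_ ?_
  · have := key.2
    rw [integral_neg] at this
    exact this
  · filter_upwards with y
    apply ContinuousOn.aestronglyMeasurable _ measurableSet_Ioi
    apply ContinuousOn.mul
    · exact (Real.continuous_exp.comp (continuous_const.mul continuous_id).neg).continuousOn
    · exact fun t ht => (continuousWithinAt_id.rpow_const (Or.inl (lt_trans one_pos ht).ne'))
  · exact aux_integrable x (-(ν + 1)) hx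
  · exact ((aux_integrable x (-ν) hx).neg).aestronglyMeasurable
  · filter_upwards [ae_restrict_mem measurableSet_Ioi] with t ht y hy
    have ht1 : (1:ℝ) < t := ht
    have ht0 : (0:ℝ) < t := lt_trans one_pos ht1
    rw [norm_neg, norm_mul, Real.norm_eq_abs, Real.norm_eq_abs,
      abs_of_pos (Real.exp_pos _), abs_of_pos (Real.rpow_pos_of_pos ht0 _)]
    have hy2 : x / 2 < y := by
      have := abs_lt.mp (mem_ball_iff_norm.mp hy)
      linarith [this.1]
    exact mul_le_mul (by rw [Real.exp_le_exp]; nlinarith) le_rfl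
      (Real.rpow_pos_of_pos ht0 _).le (Real.exp_pos _).le
  · exact aux_integrable (x / 2) (-ν) (half_pos hx)
  · filter_upwards [ae_restrict_mem measurableSet_Ioi] with t ht y hy
    have ht0 : (0:ℝ) < t := lt_trans one_pos ht
    have hexp : HasDerivAt (fun y : ℝ => Real.exp (-(y * t))) (-t * Real.exp (-(y * t))) y := by
      have := (((hasDerivAt_id y).mul_const t).neg).exp
      simpa [mul_comm] using this
    have := hexp.mul_const (t ^ (-(ν + 1)))
    refine this.congr_deriv (Eq.symm ?_)
    have : t * t ^ (-(ν + 1)) = t ^ (-ν) := by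
      rw [show (-ν) = 1 + (-(ν+1)) by ring, Real.rpow_add ht0, Real.rpow_one]
    linear_combination Real.exp (-(y*t)) * this

open Filter Real in
lemma expE_identity (ν x : ℝ) (hx : 0 < x) :
    x * expE ν x + ν * expE (ν + 1) x = Real.exp (-x) := by
  set f : ℝ → ℝ := fun t => Real.exp (-(x * t)) * t ^ (-ν) with hf
  set f' : ℝ → ℝ := fun t => (-x) * (Real.exp (-(x * t)) * t ^ (-ν))
      + (-ν) * (Real.exp (-(x * t)) * t ^ (-(ν + 1))) with hf'
  have hint1 := aux_integrable x (-ν) hx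
  have hint2 := aux_integrable x (-(ν + 1)) hx
  have hderiv : ∀ t ∈ Ici (1:ℝ), HasDerivAt f (f' t) t := by
    intro t ht
    have ht0 : (0:ℝ) < t := lt_of_lt_of_le one_pos ht
    have hexp : HasDerivAt (fun t : ℝ => Real.exp (-(x * t))) (-x * Real.exp (-(x * t))) t := by
      have := ((hasDerivAt_id t).const_mul x).neg.exp
      simpa [mul_comm] using this
    have hrpow : HasDerivAt (fun t : ℝ => t ^ (-ν)) (-ν * t ^ (-ν - 1)) t :=
      Real.hasDerivAt_rpow_const (Or.inl ht0.ne')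
    have := hexp.mul hrpow
    refine this.congr_deriv ?_
    rw [hf']
    simp only
    rw [show (-(ν + 1) : ℝ) = -ν - 1 by ring]
    ring
  have hfint : IntegrableOn f' (Ioi 1) :=
    (hint1.const_mul (-x)).add (hint2.const_mul (-ν))
  have htend : Tendsto f atTop (nhds 0) := by
    have h := tendsto_rpow_mul_exp_neg_mul_atTop_nhds_zero (-ν) x hx
    refine h.congr' ?_
    filter_upwards with t
    rw [hf]
    simp only [neg_mul]
    ring
  have key := integral_Ioi_of_hasDerivAt_of_tendsto' hderiv hfint htend
  have hf1 : f 1 = Real.exp (-x) := by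
    rw [hf]; simp [Real.one_rpow]
  rw [hf1, zero_sub] at key
  have hsplit : ∫ t in Ioi (1:ℝ), f' t
      = (-x) * expE ν x + (-ν) * expE (ν + 1) x := by
    simp only [hf']
    rw [MeasureTheory.integral_add (hint1.const_mul (-x)) (hint2.const_mul (-ν)),
      MeasureTheory.integral_const_mul, MeasureTheory.integral_const_mul]
    simp only [expE]
  rw [hsplit] at key
  linarith

/-- The weights `w₁(x) = x^α e^{-x}` and `w₂(x) = x^α E_{ν+1}(x)` satisfy the matrix
Pearson equation `(x w₁)' = (α+1-x) w₁` and `(x w₂)' = -w₁ + (α+ν+1) w₂` on `(0,∞)`. -/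
theorem matrix_pearson (α ν : ℝ) (x : ℝ) (hx : 0 < x) :
    HasDerivAt (fun y => y * (y ^ α * Real.exp (-y)))
      ((α + 1 - x) * (x ^ α * Real.exp (-x))) x ∧
    HasDerivAt (fun y => y * (y ^ α * expE (ν + 1) y))
      (-(x ^ α * Real.exp (-x)) + (α + ν + 1) * (x ^ α * expE (ν + 1) x)) x := by
  have hα : x ^ α = x * x ^ (α - 1) := by
    rw [show α = 1 + (α - 1) by ring, Real.rpow_add hx, Real.rpow_one]
    ring_nf
  have h1 : HasDerivAt (fun y : ℝ => y ^ α) (α * x ^ (α - 1)) x :=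
    Real.hasDerivAt_rpow_const (Or.inl hx.ne')
  have h2 : HasDerivAt (fun y : ℝ => Real.exp (-y)) (Real.exp (-x) * (-1)) x :=
    (hasDerivAt_neg x).exp
  constructor
  · have := (hasDerivAt_id x).mul (h1.mul h2)
    refine this.congr_deriv (Eq.symm ?_)
    simp only [id_eq, one_mul, Pi.mul_apply]
    linear_combination (α * Real.exp (-x)) * hα
  · have hE : HasDerivAt (expE (ν + 1)) (-(expE ν x)) x := expE_hasDerivAt ν x hx
    have hid := expE_identity ν x hx
    have := (hasDerivAt_id x).mul (h1.mul hE)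
    refine this.congr_deriv (Eq.symm ?_)
    simp only [id_eq, one_mul, Pi.mul_apply]
    linear_combination (α * expE (ν + 1) x) * hα + (x ^ α) * hid
end

section
/- For n+1 ≥ m ≥ 1, the Mellin transform of F_{n,m}(x) = ∫_x^∞ L_{n+m-1}^{(α)}(t) e^{-t} (1-x/t)^{m-1} (x/t)^ν dt/t is Γ(s)(α+1-s)_{n+m-1} (m-1)! / ((n+m-1)! (s+ν)_m) for s > max{0,-ν}. -/
open MeasureTheory Set Finset

/-- Pochhammer symbol `(z)_n = z(z+1)⋯(z+n-1)`. -/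
noncomputable def poch (z : ℝ) (n : ℕ) : ℝ := ∏ i ∈ Finset.range n, (z + i)

/-- Laguerre polynomial via the Rodrigues formula. -/
noncomputable def Lag (n : ℕ) (α : ℝ) (x : ℝ) : ℝ :=
  x ^ (-α) * Real.exp x / n.factorial *
    iteratedDeriv n (fun t => t ^ ((n : ℝ) + α) * Real.exp (-t)) x

/-- The type I function as a Mellin convolution. -/
noncomputable def Ftyp (n m : ℕ) (α ν : ℝ) (x : ℝ) : ℝ :=
  ∫ t in Ioi x, Lag (n + m - 1) α t * Real.exp (-t) * (1 - x / t) ^ (m - 1) * (x / t) ^ ν / t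

noncomputable def pf (β : ℝ) (j : ℕ) : ℝ := ∏ i ∈ Finset.range j, (β - i)

lemma pf_succ (β : ℝ) (j : ℕ) : pf β (j+1) = pf β j * (β - j) := Finset.prod_range_succ _ _

lemma pf_zero (β : ℝ) : pf β 0 = 1 := rfl

lemma sum_step (n : ℕ) (β : ℝ) (A : ℕ → ℝ) :
    ∑ j ∈ range (n+1), ((-1:ℝ)^j * (n.choose j) * pf β j) * ((β - j) * A (j+1) - A j)
    = -∑ j ∈ range (n+2), ((-1:ℝ)^j * ((n+1).choose j) * pf β j) * A j := by
  set d : ℕ → ℝ := fun j => (-1:ℝ)^j * (n.choose j) * pf β j with hd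
  set e : ℕ → ℝ := fun j => (-1:ℝ)^j * ((n+1).choose j) * pf β j with he
  have h0 : ∑ j ∈ range (n+1), d j * ((β - j) * A (j+1) - A j)
      = ∑ j ∈ range (n+1), d j * (β - j) * A (j+1) - ∑ j ∈ range (n+1), d j * A j := by
    rw [← Finset.sum_sub_distrib]; exact Finset.sum_congr rfl fun j _ => by ring
  have h1 : ∑ j ∈ range (n+1), d j * A j = ∑ j ∈ range (n+1), d (j+1) * A (j+1) + A 0 := by
    rw [Finset.sum_range_succ (fun j => d (j+1) * A (j+1)) n]
    have hz : d (n+1) = 0 := by simp [hd, Nat.choose_succ_self]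
    rw [hz, zero_mul, add_zero, Finset.sum_range_succ']
    simp [hd, pf_zero]
  have h2 : ∑ j ∈ range (n+2), e j * A j = ∑ j ∈ range (n+1), e (j+1) * A (j+1) + A 0 := by
    rw [Finset.sum_range_succ']; simp [he, pf_zero]
  have h3 : ∀ j : ℕ, e (j+1) = d (j+1) - d j * (β - j) := by
    intro j
    simp only [hd, he, pf_succ, Nat.choose_succ_succ]
    push_cast
    ring
  have h4 : ∑ j ∈ range (n+1), (d (j+1) - d j * (β - j)) * A (j+1)
      = ∑ j ∈ range (n+1), d (j+1) * A (j+1) - ∑ j ∈ range (n+1), d j * (β-j) * A (j+1) := by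
    rw [← Finset.sum_sub_distrib]; exact Finset.sum_congr rfl fun j _ => by ring
  rw [h0, h1, h2]
  simp only [h3]
  rw [h4]; ring

lemma hasDerivAt_exp_neg (x : ℝ) : HasDerivAt (fun y : ℝ => Real.exp (-y)) (-Real.exp (-x)) x := by
  simpa [Function.comp_def] using (Real.hasDerivAt_exp (-x)).comp x (hasDerivAt_neg x)

lemma iterderiv_formula (β : ℝ) (n : ℕ) : ∀ {x : ℝ}, 0 < x →
    iteratedDeriv n (fun t => t ^ β * Real.exp (-t)) x
    = (-1:ℝ)^n * (∑ j ∈ range (n+1), ((-1:ℝ)^j * (n.choose j) * pf β j) * x ^ (β - j)) * Real.exp (-x) := by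
  induction n with
  | zero => intro x hx; simp [iteratedDeriv_zero, pf]
  | succ n IH =>
    intro x hx
    set d : ℕ → ℝ := fun j => (-1:ℝ)^j * (n.choose j) * pf β j with hd
    set G : ℝ → ℝ := fun y => ∑ j ∈ range (n+1), ((-1:ℝ)^n * d j) * (y ^ (β - j) * Real.exp (-y)) with hGdef
    have hGeq : ∀ y : ℝ, G y = (-1:ℝ)^n * (∑ j ∈ range (n+1), d j * y ^ (β - j)) * Real.exp (-y) := by
      intro y
      rw [Finset.mul_sum, Finset.sum_mul]
      exact Finset.sum_congr rfl fun j _ => by ring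
    have hev : iteratedDeriv n (fun t => t ^ β * Real.exp (-t)) =ᶠ[nhds x] G := by
      filter_upwards [Ioi_mem_nhds hx] with y hy
      rw [IH hy, hGeq]
    have hder : HasDerivAt G
        (∑ j ∈ range (n+1), ((-1:ℝ)^n * d j) *
          ((β - j) * x ^ (β - j - 1) * Real.exp (-x) + x ^ (β - j) * (-Real.exp (-x)))) x := by
      apply HasDerivAt.fun_sum
      intro j _
      exact (((Real.hasDerivAt_rpow_const (Or.inl hx.ne')).mul (hasDerivAt_exp_neg x))).const_mul _
    rw [iteratedDeriv_succ, hev.deriv_eq, hder.deriv]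
    have hA : ∀ j : ℕ, x ^ (β - (j:ℝ) - 1) = x ^ (β - ((j+1 : ℕ):ℝ)) := by
      intro j; push_cast; ring_nf
    calc ∑ j ∈ range (n+1), ((-1:ℝ)^n * d j) *
          ((β - j) * x ^ (β - j - 1) * Real.exp (-x) + x ^ (β - j) * (-Real.exp (-x)))
        = (-1:ℝ)^n * (∑ j ∈ range (n+1), d j *
            ((β - j) * x ^ (β - ((j+1:ℕ):ℝ)) - x ^ (β - (j:ℝ)))) * Real.exp (-x) := by
          rw [Finset.mul_sum, Finset.sum_mul]
          exact Finset.sum_congr rfl fun j _ => by rw [hA j]; ring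
      _ = (-1:ℝ)^n * (-∑ j ∈ range (n+2), ((-1:ℝ)^j * ((n+1).choose j) * pf β j) * x ^ (β - j)) * Real.exp (-x) := by
          rw [sum_step n β (fun j => x ^ (β - (j:ℝ)))]
      _ = (-1:ℝ)^(n+1) * (∑ j ∈ range (n+1+1), ((-1:ℝ)^j * ((n+1).choose j) * pf β j) * x ^ (β - j)) * Real.exp (-x) := by
          ring

lemma poch_succ_left (z : ℝ) (m : ℕ) : poch z (m+1) = z * poch (z+1) m := by
  rw [poch, Finset.prod_range_succ']
  simp only [Nat.cast_zero, add_zero]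
  rw [mul_comm, poch]
  congr 1
  exact Finset.prod_congr rfl fun i _ => by push_cast; ring

lemma poch_succ (z : ℝ) (m : ℕ) : poch z (m+1) = poch z m * (z + m) := Finset.prod_range_succ _ _

lemma poch_zero (z : ℝ) : poch z 0 = 1 := rfl

lemma comb_core : ∀ (k : ℕ) (a s : ℝ),
    ∑ l ∈ range (k+1), (-1:ℝ)^l * (k.choose l) * poch (a + 1 + l) (k - l) * poch s l
      = poch (a + 1 - s) k := by
  intro k
  induction k with
  | zero => intro a s; simp [poch]
  | succ k IH =>
    intro a s
    rw [Finset.sum_range_succ']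
    set D : ℕ → ℝ := fun l => poch (a + 2 + l) (k - l) * poch s l with hD
    have e0 : (-1:ℝ)^0 * (((k+1).choose 0 : ℕ) : ℝ) * poch (a + 1 + ((0:ℕ):ℝ)) (k + 1 - 0) * poch s 0
        = (a+1) * poch (a+2) k := by
      simp only [pow_zero, Nat.choose_zero_right, Nat.cast_one, Nat.cast_zero, add_zero,
        Nat.sub_zero, one_mul, poch_zero, mul_one]
      rw [poch_succ_left, show (a:ℝ)+1+1 = a+2 by ring]
    have hT : ∀ l ∈ range (k+1),
        (-1:ℝ)^(l+1) * (((k+1).choose (l+1) : ℕ) : ℝ) * poch (a + 1 + ((l+1:ℕ):ℝ)) (k + 1 - (l+1)) * poch s (l+1)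
        = -((-1:ℝ)^l * (k.choose l) * (s + l) * D l)
          + (-1:ℝ)^(l+1) * (k.choose (l+1) : ℝ) * poch (a + 2 + l) (k - l) * poch s (l+1) := by
      intro l hl
      rw [Nat.choose_succ_succ, Nat.succ_sub_succ, poch_succ s l,
        show a + 1 + ((l+1:ℕ):ℝ) = a + 2 + l by push_cast; ring]
      simp only [hD]
      push_cast
      ring
    rw [Finset.sum_congr rfl hT, Finset.sum_add_distrib]
    have hW : ∑ l ∈ range (k+1), (-1:ℝ)^(l+1) * (k.choose (l+1) : ℝ) * poch (a + 2 + l) (k - l) * poch s (l+1)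
        = ∑ l ∈ range k, (-1:ℝ)^(l+1) * (k.choose (l+1) : ℝ) * poch (a + 2 + l) (k - l) * poch s (l+1) := by
      rw [Finset.sum_range_succ, Nat.choose_succ_self]
      simp
    have hA : ∑ l ∈ range (k+1), (-1:ℝ)^l * (k.choose l) * (a + 1 + l) * D l
        = ∑ l ∈ range k, (-1:ℝ)^(l+1) * (k.choose (l+1) : ℝ) * poch (a + 2 + l) (k - l) * poch s (l+1)
          + (a+1) * poch (a+2) k := by
      rw [Finset.sum_range_succ']
      congr 1
      · apply Finset.sum_congr rfl
        intro l hl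
        have hlk : l < k := Finset.mem_range.mp hl
        have hk1 : k - l = (k - (l+1)) + 1 := by omega
        simp only [hD]
        rw [show a + 2 + ((l+1:ℕ):ℝ) = (a + 2 + l) + 1 by push_cast; ring, hk1,
          poch_succ_left (a+2+l) (k-(l+1))]
        push_cast
        ring
      · simp [hD, poch_zero, show a + 2 + ((0:ℕ):ℝ) = a + 2 by push_cast; ring]
    rw [e0, hW, add_assoc, ← hA, ← Finset.sum_add_distrib]
    have hcomb : ∀ l ∈ range (k+1),
        -((-1:ℝ)^l * (k.choose l) * (s + l) * D l) + (-1:ℝ)^l * (k.choose l) * (a + 1 + l) * D l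
        = (a + 1 - s) * ((-1:ℝ)^l * (k.choose l) * poch ((a+1) + 1 + l) (k - l) * poch s l) := by
      intro l hl
      simp only [hD]
      rw [show (a+1) + 1 + (l:ℝ) = a + 2 + l by ring]
      ring
    rw [Finset.sum_congr rfl hcomb, ← Finset.mul_sum, IH (a+1) s, poch_succ_left (a+1-s) k,
      show a + 1 - s + 1 = a + 1 + 1 - s by ring]

lemma neg_one_pow_sub {k l : ℕ} (h : l ≤ k) : (-1:ℝ)^(k-l) = (-1:ℝ)^k * (-1:ℝ)^l := by
  have h1 : (-1:ℝ)^(k-l) * (-1:ℝ)^l = (-1:ℝ)^k := by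
    rw [← pow_add]; congr 1; omega
  have h2 : ((-1:ℝ)^l) * ((-1:ℝ)^l) = 1 := by
    rw [← pow_add, ← two_mul, pow_mul]; norm_num
  calc (-1:ℝ)^(k-l) = (-1:ℝ)^(k-l) * (((-1:ℝ)^l) * ((-1:ℝ)^l)) := by rw [h2, mul_one]
    _ = ((-1:ℝ)^(k-l) * (-1:ℝ)^l) * (-1:ℝ)^l := by ring
    _ = (-1:ℝ)^k * (-1:ℝ)^l := by rw [h1]

lemma pf_reflect (k l : ℕ) (α : ℝ) (h : l ≤ k) :
    pf ((k:ℝ) + α) (k - l) = poch (α + 1 + l) (k - l) := by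
  rw [pf, poch, ← Finset.prod_range_reflect (fun i => α + 1 + l + i) (k - l)]
  apply Finset.prod_congr rfl
  intro i hi
  have hik : i < k - l := Finset.mem_range.mp hi
  have : ((k - l - 1 - i : ℕ) : ℝ) = (k:ℝ) - l - 1 - i := by
    push_cast [Nat.cast_sub (by omega : l ≤ k), Nat.cast_sub (by omega : 1 ≤ k - l),
      Nat.cast_sub (by omega : i ≤ k - l - 1)]
    ring
  rw [this]; ring

lemma comb_refl (k : ℕ) (α s : ℝ) :
    ∑ j ∈ range (k+1), (-1:ℝ)^j * (k.choose j) * pf ((k:ℝ)+α) j * poch s (k-j)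
      = (-1:ℝ)^k * poch (α + 1 - s) k := by
  rw [← Finset.sum_range_reflect]
  have h : ∀ l ∈ range (k+1),
      (-1:ℝ)^(k+1-1-l) * (k.choose (k+1-1-l)) * pf ((k:ℝ)+α) (k+1-1-l) * poch s (k-(k+1-1-l))
      = (-1:ℝ)^k * ((-1:ℝ)^l * (k.choose l) * poch (α + 1 + l) (k - l) * poch s l) := by
    intro l hl
    have hlk : l ≤ k := by have := Finset.mem_range.mp hl; omega
    have h1 : k + 1 - 1 - l = k - l := by omega
    have h2 : k - (k - l) = l := by omega
    rw [h1, h2, Nat.choose_symm hlk, pf_reflect k l α hlk, neg_one_pow_sub hlk]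
    ring
  rw [Finset.sum_congr rfl h, ← Finset.mul_sum, comb_core k α s]

noncomputable def cLag (k : ℕ) (α : ℝ) (j : ℕ) : ℝ :=
  (-1:ℝ)^k / k.factorial * ((-1:ℝ)^j * (k.choose j) * pf ((k:ℝ)+α) j)

lemma Lag_eq' (k : ℕ) (α : ℝ) {x : ℝ} (hx : 0 < x) :
    Lag k α x = ∑ j ∈ range (k+1),
      ((-1:ℝ)^k / k.factorial * ((-1:ℝ)^j * (k.choose j) * pf ((k:ℝ)+α) j)) * x ^ (((k-j:ℕ)):ℝ) := by
  rw [Lag, iterderiv_formula ((k:ℝ)+α) k hx]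
  set S := ∑ j ∈ range (k+1), ((-1:ℝ)^j * (k.choose j) * pf ((k:ℝ)+α) j) * x ^ (((k:ℝ)+α) - j) with hS
  rw [show x ^ (-α) * Real.exp x / (k.factorial:ℝ) * ((-1:ℝ)^k * S * Real.exp (-x))
      = (x ^ (-α) * (Real.exp x * Real.exp (-x)) * (-1:ℝ)^k / (k.factorial:ℝ)) * S by ring,
    hS, Finset.mul_sum]
  apply Finset.sum_congr rfl
  intro j hj
  have hjk : j ≤ k := by have := Finset.mem_range.mp hj; omega
  rw [← Real.exp_add, add_neg_cancel, Real.exp_zero]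
  have hxp : x ^ (-α) * x ^ (((k:ℝ)+α) - j) = x ^ (((k-j:ℕ)):ℝ) := by
    rw [← Real.rpow_add hx]
    congr 1
    rw [Nat.cast_sub hjk]
    ring
  calc x ^ (-α) * 1 * (-1:ℝ)^k / (k.factorial:ℝ) * (((-1:ℝ)^j * (k.choose j) * pf ((k:ℝ)+α) j) * x ^ (((k:ℝ)+α) - j))
      = ((-1:ℝ)^k / k.factorial * ((-1:ℝ)^j * (k.choose j) * pf ((k:ℝ)+α) j)) * (x ^ (-α) * x ^ (((k:ℝ)+α) - j)) := by ring
    _ = _ := by rw [hxp]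

lemma Lag_eq (k : ℕ) (α : ℝ) {x : ℝ} (hx : 0 < x) :
    Lag k α x = ∑ j ∈ Finset.range (k+1), cLag k α j * x ^ (((k-j:ℕ)):ℝ) := by
  simp only [cLag]
  exact Lag_eq' k α hx

lemma Gamma_nat_shift (u : ℝ) (hu : 0 < u) (n : ℕ) :
    Real.Gamma (u + n) = poch u n * Real.Gamma u := by
  induction n with
  | zero => simp [poch_zero]
  | succ n IH =>
    have h1 : u + ((n+1:ℕ):ℝ) = (u + n) + 1 := by push_cast; ring
    have h2 : u + (n:ℝ) ≠ 0 := by positivity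
    rw [h1, Real.Gamma_add_one h2, IH, poch_succ]
    ring

lemma mellin_Lag (k : ℕ) (α : ℝ) {s : ℝ} (hs : 0 < s) :
    ∫ t in Ioi (0:ℝ), Lag k α t * Real.exp (-t) * t ^ (s-1)
      = Real.Gamma s * poch (α+1-s) k / k.factorial := by
  have hcong : ∀ t ∈ Ioi (0:ℝ), Lag k α t * Real.exp (-t) * t ^ (s-1)
      = ∑ j ∈ range (k+1), ((-1:ℝ)^k / k.factorial * ((-1:ℝ)^j * (k.choose j) * pf ((k:ℝ)+α) j))
          * (Real.exp (-t) * t ^ (s + ((k-j:ℕ):ℝ) - 1)) := by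
    intro t ht
    rw [Lag_eq k α ht, Finset.sum_mul, Finset.sum_mul]
    apply Finset.sum_congr rfl
    intro j hj
    have h3 : t ^ (((k-j:ℕ)):ℝ) * t ^ (s - 1) = t ^ (s + ((k-j:ℕ):ℝ) - 1) := by
      rw [← Real.rpow_add ht]
      congr 1
      ring
    calc ((-1:ℝ)^k / k.factorial * ((-1:ℝ)^j * (k.choose j) * pf ((k:ℝ)+α) j)) * t ^ (((k-j:ℕ)):ℝ)
          * Real.exp (-t) * t ^ (s-1)
        = ((-1:ℝ)^k / k.factorial * ((-1:ℝ)^j * (k.choose j) * pf ((k:ℝ)+α) j))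
          * (Real.exp (-t) * (t ^ (((k-j:ℕ)):ℝ) * t ^ (s - 1))) := by ring
      _ = _ := by rw [h3]
  rw [setIntegral_congr_fun measurableSet_Ioi hcong]
  have hint : ∀ j ∈ range (k+1), IntegrableOn
      (fun t => ((-1:ℝ)^k / k.factorial * ((-1:ℝ)^j * (k.choose j) * pf ((k:ℝ)+α) j))
          * (Real.exp (-t) * t ^ (s + ((k-j:ℕ):ℝ) - 1))) (Ioi 0) := by
    intro j hj
    exact (Real.GammaIntegral_convergent (by positivity)).const_mul _
  rw [MeasureTheory.integral_finset_sum _ hint]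
  have hval : ∀ j ∈ range (k+1),
      (∫ t in Ioi (0:ℝ), ((-1:ℝ)^k / k.factorial * ((-1:ℝ)^j * (k.choose j) * pf ((k:ℝ)+α) j))
          * (Real.exp (-t) * t ^ (s + ((k-j:ℕ):ℝ) - 1)))
      = ((-1:ℝ)^k / k.factorial * ((-1:ℝ)^j * (k.choose j) * pf ((k:ℝ)+α) j)) * (poch s (k-j) * Real.Gamma s) := by
    intro j hj
    rw [MeasureTheory.integral_const_mul, ← Real.Gamma_eq_integral (by positivity),
      Gamma_nat_shift s hs (k-j)]
  rw [Finset.sum_congr rfl hval]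
  have : ∑ j ∈ range (k+1), ((-1:ℝ)^k / k.factorial * ((-1:ℝ)^j * (k.choose j) * pf ((k:ℝ)+α) j)) * (poch s (k-j) * Real.Gamma s)
      = ((-1:ℝ)^k * Real.Gamma s / k.factorial) * ∑ j ∈ range (k+1), (-1:ℝ)^j * (k.choose j) * pf ((k:ℝ)+α) j * poch s (k-j) := by
    rw [Finset.mul_sum]
    exact Finset.sum_congr rfl fun j _ => by ring
  rw [this, comb_refl k α s]
  have hsq : (-1:ℝ)^k * (-1:ℝ)^k = 1 := by
    rw [← pow_add, ← two_mul, pow_mul]; norm_num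
  calc ((-1:ℝ)^k * Real.Gamma s / k.factorial) * ((-1:ℝ)^k * poch (α + 1 - s) k)
      = ((-1:ℝ)^k * (-1:ℝ)^k) * (Real.Gamma s * poch (α+1-s) k / k.factorial) := by ring
    _ = _ := by rw [hsq]; ring

lemma betaReal (a : ℝ) (ha : 0 < a) (m : ℕ) (hm : 1 ≤ m) :
    ∫ x in (0:ℝ)..1, x ^ (a-1) * (1-x)^(m-1) = (m-1).factorial / poch a m := by
  have hre : 0 < (Complex.ofReal a).re := by simpa using ha
  have h1 := Complex.betaIntegral_eval_nat_add_one_right hre (m-1)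
  have h2 : Complex.betaIntegral a (((m-1:ℕ):ℂ) + 1)
      = ((∫ x in (0:ℝ)..1, x ^ (a-1) * (1-x)^(m-1) : ℝ) : ℂ) := by
    rw [Complex.betaIntegral, ← intervalIntegral.integral_ofReal]
    apply intervalIntegral.integral_congr
    intro x hx
    rw [Set.uIcc_of_le (zero_le_one' ℝ)] at hx
    have hx0 : (0:ℝ) ≤ x := hx.1
    simp only []
    have e1 : (((m-1:ℕ):ℂ) + 1 - 1) = ((m-1 : ℕ) : ℂ) := by ring
    rw [e1, Complex.cpow_natCast]
    have e2 : ((a:ℂ) - 1) = ((a - 1 : ℝ) : ℂ) := by push_cast; ring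
    rw [e2, ← Complex.ofReal_cpow hx0]
    push_cast
    ring
  rw [h2] at h1
  have h3 : ((m-1).factorial : ℂ) / ∏ j ∈ Finset.range ((m-1) + 1), ((a:ℂ) + j)
      = (((m-1).factorial / poch a m : ℝ) : ℂ) := by
    rw [Nat.sub_add_cancel hm]
    push_cast [poch]
    rfl
  rw [h3] at h1
  exact_mod_cast h1

lemma phi_eq {t x : ℝ} (ht : 0 < t) (hx : x ∈ Ioo (0:ℝ) t) (ν s : ℝ) (m : ℕ) :
    (1 - x/t)^(m-1) * (x/t)^ν * x^(s-1) = (t^ν)⁻¹ * ((1 - x/t)^(m-1) * x^(s+ν-1)) := by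
  rw [Real.div_rpow hx.1.le ht.le, show s + ν - 1 = ν + (s-1) by ring, Real.rpow_add hx.1]
  ring

lemma psi_integrable {t s ν : ℝ} (ht : 0 < t) (hsν : 0 < s + ν) (m : ℕ) :
    IntegrableOn (fun x => (1 - x/t)^(m-1) * x^(s+ν-1)) (Ioo (0:ℝ) t) := by
  have hbase : IntegrableOn (fun x : ℝ => x^(s+ν-1)) (Ioo (0:ℝ) t) := by
    have := (intervalIntegral.intervalIntegrable_rpow' (by linarith : (-1:ℝ) < s+ν-1)
      (a := 0) (b := t))
    rw [intervalIntegrable_iff_integrableOn_Ioc_of_le ht.le] at this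
    exact this.mono_set Ioo_subset_Ioc_self
  apply Integrable.bdd_mul (c := 1) hbase
  · apply Continuous.aestronglyMeasurable
    continuity
  · filter_upwards [ae_restrict_mem measurableSet_Ioo] with x hx
    rw [Real.norm_eq_abs, abs_pow]
    have h1 : |1 - x/t| ≤ 1 := by
      rw [abs_le]
      constructor
      · have : x / t ≤ 1 := (div_le_one ht).mpr hx.2.le
        linarith
      · have : 0 < x / t := div_pos hx.1 ht
        linarith
    calc |1 - x/t|^(m-1) ≤ 1^(m-1) := pow_le_pow_left₀ (abs_nonneg _) h1 _
      _ = 1 := one_pow _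

lemma Jval {t s ν : ℝ} (ht : 0 < t) (hsν : 0 < s + ν) (m : ℕ) (hm : 1 ≤ m) :
    ∫ x in Ioo (0:ℝ) t, (1 - x/t)^(m-1) * (x/t)^ν * x^(s-1)
      = t * t^(s-1) * ((m-1).factorial / poch (s+ν) m) := by
  rw [setIntegral_congr_fun measurableSet_Ioo (fun x hx => phi_eq ht hx ν s m)]
  rw [MeasureTheory.integral_const_mul]
  have h1 : ∫ x in Ioo (0:ℝ) t, (1 - x/t)^(m-1) * x^(s+ν-1)
      = ∫ x in (0:ℝ)..t, (1 - x/t)^(m-1) * x^(s+ν-1) := by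
    rw [intervalIntegral.integral_of_le ht.le, MeasureTheory.integral_Ioc_eq_integral_Ioo]
  rw [h1]
  have h2 : ∫ x in (0:ℝ)..t, (1 - x/t)^(m-1) * x^(s+ν-1)
      = ∫ x in (0:ℝ)..t, (fun u => (1-u)^(m-1) * (t*u)^(s+ν-1)) (x/t) := by
    apply intervalIntegral.integral_congr
    intro x _
    simp only []
    rw [mul_div_cancel₀ _ ht.ne']
  rw [h2, intervalIntegral.integral_comp_div (fun u => (1-u)^(m-1) * (t*u)^(s+ν-1)) ht.ne',
    zero_div, div_self ht.ne']
  have h3 : ∫ u in (0:ℝ)..1, (1-u)^(m-1) * (t*u)^(s+ν-1)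
      = t^(s+ν-1) * ((m-1).factorial / poch (s+ν) m) := by
    rw [← betaReal (s+ν) hsν m hm]
    rw [← intervalIntegral.integral_const_mul]
    rw [intervalIntegral.integral_of_le (zero_le_one' ℝ),
      MeasureTheory.integral_Ioc_eq_integral_Ioo,
      intervalIntegral.integral_of_le (zero_le_one' ℝ),
      MeasureTheory.integral_Ioc_eq_integral_Ioo]
    apply setIntegral_congr_fun measurableSet_Ioo
    intro u hu
    show (1-u)^(m-1) * (t*u)^(s+ν-1) = t^(s+ν-1) * (u^(s+ν-1) * (1-u)^(m-1))
    rw [Real.mul_rpow ht.le hu.1.le]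
    ring
  rw [h3, smul_eq_mul]
  have h4 : (t^ν)⁻¹ * (t * (t^(s+ν-1) * ((m-1).factorial / poch (s+ν) m)))
      = t * ((t^ν)⁻¹ * t^(s+ν-1)) * ((m-1).factorial / poch (s+ν) m) := by ring
  rw [h4, ← Real.rpow_neg ht.le, ← Real.rpow_add ht, show -ν + (s+ν-1) = s - 1 by ring]

lemma lag_measurable (k : ℕ) (α : ℝ) : Measurable (Lag k α) := by
  have hf : Measurable (fun t : ℝ => t ^ ((k : ℝ) + α) * Real.exp (-t)) := by
    apply Measurable.mul
    · exact measurable_id.pow_const _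
    · exact (Real.continuous_exp.comp continuous_neg).measurable
  have hiter : Measurable (iteratedDeriv k (fun t : ℝ => t ^ ((k : ℝ) + α) * Real.exp (-t))) := by
    cases k with
    | zero => simpa [iteratedDeriv_zero] using hf
    | succ k => rw [iteratedDeriv_succ]; exact measurable_deriv _
  apply Measurable.mul
  · apply Measurable.div
    · exact (measurable_id.pow_const _).mul (Real.continuous_exp.measurable)
    · exact measurable_const
  · exact hiter

lemma lag_bound (k : ℕ) (α : ℝ) {t : ℝ} (ht : 0 < t) :
    |Lag k α t| ≤ ∑ j ∈ Finset.range (k+1), |cLag k α j| * t ^ (((k-j:ℕ)):ℝ) := by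
  rw [Lag_eq k α ht]
  refine (Finset.abs_sum_le_sum_abs _ _).trans ?_
  apply Finset.sum_le_sum
  intro j _
  rw [abs_mul, abs_of_nonneg (Real.rpow_nonneg ht.le _)]

lemma poch_pos {z : ℝ} (hz : 0 < z) (n : ℕ) : 0 < poch z n := by
  rw [poch]
  exact Finset.prod_pos fun i _ => by positivity

/-- The Mellin transform of the type I function `F_{n,m}` is
`Γ(s)(α+1-s)_{n+m-1}(m-1)!/((n+m-1)!(s+ν)_m)` for `s > max{0,-ν}`. -/
theorem mellin_typeI (n m : ℕ) (hm : 1 ≤ m) (hnm : m ≤ n + 1) (α ν s : ℝ)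
    (hα : -1 < α) (hαν : -1 < α + ν) (hs : max 0 (-ν) < s) :
    ∫ x in Ioi (0:ℝ), Ftyp n m α ν x * x ^ (s - 1) =
      Real.Gamma s * poch (α + 1 - s) (n + m - 1) * (m - 1).factorial /
        ((n + m - 1).factorial * poch (s + ν) m) := by
  have hs0 : 0 < s := lt_of_le_of_lt (le_max_left _ _) hs
  have hsν : 0 < s + ν := by have := lt_of_le_of_lt (le_max_right _ _) hs; linarith
  set K := n + m - 1 with hK
  set μ : Measure ℝ := volume.restrict (Ioi 0) with hμ
  set B : ℝ := ((m-1).factorial : ℝ) / poch (s+ν) m with hB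
  set g : ℝ → ℝ → ℝ := fun x t =>
    Lag K α t * Real.exp (-t) * (1 - x / t) ^ (m - 1) * (x / t) ^ ν / t * x ^ (s-1) with hg
  set F : ℝ → ℝ → ℝ := fun x t => if x < t then g x t else 0 with hF
  -- Step A
  have stepA : ∀ x ∈ Ioi (0:ℝ), Ftyp n m α ν x * x ^ (s-1) = ∫ t, F x t ∂μ := by
    intro x hx
    have h1 : (fun t => F x t) = (Ioi x).indicator (fun t => g x t) := by
      funext t
      rw [Set.indicator_apply]
      simp [hF, Set.mem_Ioi]
    rw [h1, hμ, MeasureTheory.setIntegral_indicator measurableSet_Ioi,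
      Set.Ioi_inter_Ioi, max_eq_right (le_of_lt hx)]
    rw [Ftyp, ← MeasureTheory.integral_mul_const]
  -- Step C (value of inner integral after swap)
  have stepC : ∀ t ∈ Ioi (0:ℝ), (∫ x, F x t ∂μ)
      = Lag K α t * Real.exp (-t) * t ^ (s-1) * B := by
    intro t ht
    have h1 : (fun x => F x t) = (Iio t).indicator (fun x => g x t) := by
      funext x
      rw [Set.indicator_apply]
      simp [hF, Set.mem_Iio]
    rw [h1, hμ, MeasureTheory.setIntegral_indicator measurableSet_Iio,
      Set.Ioi_inter_Iio]
    have h2 : ∀ x ∈ Ioo (0:ℝ) t, g x t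
        = (Lag K α t * Real.exp (-t) / t) * ((1 - x/t)^(m-1) * (x/t)^ν * x^(s-1)) := by
      intro x _
      simp only [hg]
      ring
    rw [setIntegral_congr_fun measurableSet_Ioo h2, MeasureTheory.integral_const_mul,
      Jval ht hsν m hm]
    rw [hB]
    have htne : t ≠ 0 := (mem_Ioi.mp ht).ne'
    have hre : ∀ a c d : ℝ, a / t * (t * c * d) = t / t * (a * c * d) := by intro a c d; ring
    rw [hre, div_self htne, one_mul]
  -- norm version of step C
  have stepN : ∀ t ∈ Ioi (0:ℝ), (∫ x, ‖F x t‖ ∂μ)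
      = |Lag K α t| * Real.exp (-t) * t ^ (s-1) * B := by
    intro t ht
    have h1 : (fun x => ‖F x t‖) = (Iio t).indicator (fun x => ‖g x t‖) := by
      funext x
      rw [Set.indicator_apply]
      by_cases h : x < t <;> simp [hF, Set.mem_Iio, h]
    rw [h1, hμ, MeasureTheory.setIntegral_indicator measurableSet_Iio,
      Set.Ioi_inter_Iio]
    have h2 : ∀ x ∈ Ioo (0:ℝ) t, ‖g x t‖
        = (|Lag K α t| * Real.exp (-t) / t) * ((1 - x/t)^(m-1) * (x/t)^ν * x^(s-1)) := by
      intro x hx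
      have hφ : (0:ℝ) ≤ (1 - x/t)^(m-1) * (x/t)^ν * x^(s-1) := by
        have h3 : (0:ℝ) ≤ 1 - x/t := by
          have : x / t ≤ 1 := (div_le_one (mem_Ioi.mp ht)).mpr hx.2.le
          linarith
        have := Real.rpow_nonneg (le_of_lt (div_pos hx.1 (mem_Ioi.mp ht))) ν
        have := Real.rpow_nonneg hx.1.le (s-1)
        positivity
      have h4 : g x t = (Lag K α t * Real.exp (-t) / t) * ((1 - x/t)^(m-1) * (x/t)^ν * x^(s-1)) := by
        simp only [hg]; ring
      rw [Real.norm_eq_abs, h4, abs_mul, abs_of_nonneg hφ, abs_div, abs_of_pos (mem_Ioi.mp ht),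
        abs_mul, abs_of_pos (Real.exp_pos _)]
    rw [setIntegral_congr_fun measurableSet_Ioo h2, MeasureTheory.integral_const_mul,
      Jval (mem_Ioi.mp ht) hsν m hm]
    rw [hB]
    have htpos : (0:ℝ) < t := mem_Ioi.mp ht
    have htne : t ≠ 0 := htpos.ne'
    have hre : ∀ a c d : ℝ, a / t * (t * c * d) = t / t * (a * c * d) := by intro a c d; ring
    rw [hre, div_self htne, one_mul]
  -- integrability of the x-slices
  have slice_int : ∀ t ∈ Ioi (0:ℝ), Integrable (fun x => F x t) μ := by
    intro t ht
    have htpos : (0:ℝ) < t := mem_Ioi.mp ht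
    have h1 : (fun x => F x t) = (Iio t).indicator (fun x => g x t) := by
      funext x
      rw [Set.indicator_apply]
      simp [hF, Set.mem_Iio]
    rw [h1, hμ]
    rw [MeasureTheory.integrable_indicator_iff measurableSet_Iio]
    rw [IntegrableOn, Measure.restrict_restrict measurableSet_Iio, Set.Iio_inter_Ioi]
    have base : IntegrableOn (fun x => (1 - x/t)^(m-1) * (x/t)^ν * x^(s-1)) (Ioo (0:ℝ) t) := by
      exact MeasureTheory.IntegrableOn.congr_fun
        ((psi_integrable htpos hsν m).const_mul ((t^ν)⁻¹))
        (fun x hx => (phi_eq htpos hx ν s m).symm) measurableSet_Ioo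
    exact MeasureTheory.IntegrableOn.congr_fun
      (base.const_mul (Lag K α t * Real.exp (-t) / t))
      (fun x hx => by simp only [hg]; ring) measurableSet_Ioo
  -- measurability
  have measF : AEStronglyMeasurable (Function.uncurry F) (μ.prod μ) := by
    have h1 : Function.uncurry F = {p : ℝ × ℝ | p.1 < p.2}.indicator (fun p => g p.1 p.2) := by
      funext p
      rw [Set.indicator_apply]
      simp [hF, Function.uncurry]
    rw [h1]
    apply Measurable.aestronglyMeasurable
    apply Measurable.indicator
    · apply Measurable.mul
      apply Measurable.div
      apply Measurable.mul
      apply Measurable.mul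
      apply Measurable.mul
      · exact (lag_measurable K α).comp measurable_snd
      · exact (Real.continuous_exp.comp continuous_neg).measurable.comp measurable_snd
      · exact (measurable_const.sub (measurable_fst.div measurable_snd)).pow_const _
      · exact (measurable_fst.div measurable_snd).pow_const _
      · exact measurable_snd
      · exact measurable_fst.pow_const _
    · exact measurableSet_lt measurable_fst measurable_snd
  -- integrability of the norm integral
  have norm_int : Integrable (fun t => ∫ x, ‖F x t‖ ∂μ) μ := by
    have maj : Integrable (fun t => ∑ j ∈ Finset.range (K+1),
        (|cLag K α j| * B) * (Real.exp (-t) * t ^ (s + ((K-j:ℕ):ℝ) - 1))) μ := by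
      apply MeasureTheory.integrable_finset_sum
      intro j _
      exact (Real.GammaIntegral_convergent (by positivity)).const_mul _
    have hBpos : 0 < B := by
      rw [hB]
      have := poch_pos hsν m
      have := Nat.factorial_pos (m-1)
      positivity
    apply MeasureTheory.Integrable.congr (MeasureTheory.Integrable.mono maj ?_ ?_)
    · filter_upwards [ae_restrict_mem measurableSet_Ioi] with t ht
      rw [stepN t ht]
    · apply AEStronglyMeasurable.mul
      apply AEStronglyMeasurable.mul
      apply AEStronglyMeasurable.mul
      · exact ((lag_measurable K α).abs).aestronglyMeasurable
      · exact ((Real.continuous_exp.comp continuous_neg).measurable).aestronglyMeasurable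
      · exact (measurable_id.pow_const _).aestronglyMeasurable
      · exact aestronglyMeasurable_const
    · filter_upwards [ae_restrict_mem measurableSet_Ioi] with t ht
      have htpos : (0:ℝ) < t := mem_Ioi.mp ht
      have hBpos' : 0 < B := hBpos
      have hrw : ∀ j ∈ Finset.range (K+1),
          (|cLag K α j| * t ^ ((K-j:ℕ):ℝ)) * Real.exp (-t) * t ^ (s-1) * B
          = (|cLag K α j| * B) * (Real.exp (-t) * t ^ (s + ((K-j:ℕ):ℝ) - 1)) := by
        intro j _
        have : t ^ ((K-j:ℕ):ℝ) * t ^ (s-1) = t ^ (s + ((K-j:ℕ):ℝ) - 1) := by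
          rw [← Real.rpow_add htpos]; congr 1; ring
        calc (|cLag K α j| * t ^ ((K-j:ℕ):ℝ)) * Real.exp (-t) * t ^ (s-1) * B
            = (|cLag K α j| * B) * (Real.exp (-t) * (t ^ ((K-j:ℕ):ℝ) * t ^ (s-1))) := by ring
          _ = _ := by rw [this]
      have hmajpos : (0:ℝ) ≤ ∑ j ∈ Finset.range (K+1),
          (|cLag K α j| * B) * (Real.exp (-t) * t ^ (s + ((K-j:ℕ):ℝ) - 1)) := by
        apply Finset.sum_nonneg
        intro j _
        have := Real.rpow_nonneg htpos.le (s + ((K-j:ℕ):ℝ) - 1)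
        have := Real.exp_pos (-t)
        positivity
      rw [Real.norm_eq_abs, Real.norm_eq_abs, abs_of_nonneg hmajpos]
      have h5 : (0:ℝ) ≤ |Lag K α t| * Real.exp (-t) * t ^ (s-1) * B := by
        have h6 := Real.rpow_nonneg htpos.le (s-1)
        have h7 := abs_nonneg (Lag K α t)
        positivity
      rw [abs_of_nonneg h5]
      calc |Lag K α t| * Real.exp (-t) * t ^ (s-1) * B
          ≤ (∑ j ∈ Finset.range (K+1), |cLag K α j| * t ^ ((K-j:ℕ):ℝ)) * Real.exp (-t) * t ^ (s-1) * B := by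
            have hb := lag_bound K α htpos
            have hnn : (0:ℝ) ≤ Real.exp (-t) * t ^ (s-1) * B := by
              have := Real.rpow_nonneg htpos.le (s-1)
              positivity
            calc |Lag K α t| * Real.exp (-t) * t ^ (s-1) * B
                = |Lag K α t| * (Real.exp (-t) * t ^ (s-1) * B) := by ring
              _ ≤ (∑ j ∈ Finset.range (K+1), |cLag K α j| * t ^ ((K-j:ℕ):ℝ)) * (Real.exp (-t) * t ^ (s-1) * B) :=
                  mul_le_mul_of_nonneg_right hb hnn
              _ = _ := by ring
        _ = ∑ j ∈ Finset.range (K+1), (|cLag K α j| * B) * (Real.exp (-t) * t ^ (s + ((K-j:ℕ):ℝ) - 1)) := by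
            rw [Finset.sum_mul, Finset.sum_mul, Finset.sum_mul]
            exact Finset.sum_congr rfl hrw
  -- full integrability
  have hInt : Integrable (Function.uncurry F) (μ.prod μ) := by
    rw [MeasureTheory.integrable_prod_iff' measF]
    constructor
    · filter_upwards [ae_restrict_mem measurableSet_Ioi] with t ht
      exact slice_int t ht
    · exact norm_int
  -- assemble
  rw [setIntegral_congr_fun measurableSet_Ioi stepA]
  have hswap := MeasureTheory.integral_integral_swap hInt
  rw [hswap]
  rw [MeasureTheory.setIntegral_congr_fun measurableSet_Ioi stepC]
  rw [MeasureTheory.integral_mul_const, mellin_Lag K α hs0, hB, div_mul_div_comm]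
end

section
/- The function F_{n,m}(x) = ∫_x^∞ L_{n+m-1}^{(α)}(t) e^{-t} (1-x/t)^{m-1} (x/t)^ν dt/t, for n+1 ≥ m ≥ 1, satisfies the type I orthogonality conditions ∫₀^∞ F_{n,m}(x) x^{α+k} dx = 0 for k = 0, …, n+m-2. -/
open MeasureTheory Set

open Filter Topology Polynomial

namespace TypeIAux


/-- `q(t) * t^β * exp(-t)` -/
noncomputable def pe (q : Polynomial ℝ) (β : ℝ) : ℝ → ℝ :=
  fun t => q.eval t * t ^ β * Real.exp (-t)

lemma pe_hasDerivAt (q : Polynomial ℝ) (β : ℝ) {t : ℝ} (ht : 0 < t) :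
    HasDerivAt (pe q β)
      (pe (X * derivative q + C β * q - X * q) (β - 1) t) t := by
  have h1 : HasDerivAt (fun t : ℝ => q.eval t) ((derivative q).eval t) t := q.hasDerivAt t
  have h2 : HasDerivAt (fun t : ℝ => t ^ β) (β * t ^ (β - 1)) t :=
    Real.hasDerivAt_rpow_const (Or.inl ht.ne')
  have h3 : HasDerivAt (fun t : ℝ => Real.exp (-t)) (-Real.exp (-t)) t := by
    simpa using (hasDerivAt_neg t).exp
  have h := (h1.mul h2).mul h3
  refine h.congr_deriv ?_
  have hts : t ^ β = t ^ (β - 1) * t := by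
    rw [← Real.rpow_add_one ht.ne']; ring_nf
  simp only [pe, eval_sub, eval_add, eval_mul, eval_X, eval_C, hts, Pi.mul_apply]
  ring

lemma iter_form (c : ℝ) (j : ℕ) :
    ∃ q : Polynomial ℝ, ∀ t ∈ Ioi (0:ℝ),
      iteratedDeriv j (fun t : ℝ => t ^ c * Real.exp (-t)) t = pe q (c - j) t := by
  induction j with
  | zero => exact ⟨1, fun t _ => by simp [pe]⟩
  | succ j ih =>
    obtain ⟨q, hq⟩ := ih
    refine ⟨X * derivative q + C (c - j) * q - X * q, fun t ht => ?_⟩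
    rw [iteratedDeriv_succ]
    have heq : iteratedDeriv j (fun t : ℝ => t ^ c * Real.exp (-t)) =ᶠ[𝓝 t] pe q (c - j) :=
      eventuallyEq_of_mem (isOpen_Ioi.mem_nhds ht) hq
    rw [heq.deriv_eq, (pe_hasDerivAt q (c - j) ht).deriv]
    have : c - (j:ℝ) - 1 = c - ((j:ℕ) + 1 : ℕ) := by push_cast; ring
    rw [this]

lemma iter_hasDerivAt (c : ℝ) (j : ℕ) {t : ℝ} (ht : 0 < t) :
    HasDerivAt (iteratedDeriv j (fun t : ℝ => t ^ c * Real.exp (-t)))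
      (iteratedDeriv (j+1) (fun t : ℝ => t ^ c * Real.exp (-t)) t) t := by
  obtain ⟨q, hq⟩ := iter_form c j
  have heq : iteratedDeriv j (fun t : ℝ => t ^ c * Real.exp (-t)) =ᶠ[𝓝 t] pe q (c - j) :=
    eventuallyEq_of_mem (isOpen_Ioi.mem_nhds ht) hq
  have h := (pe_hasDerivAt q (c - j) ht).congr_of_eventuallyEq heq
  have h2 : iteratedDeriv (j+1) (fun t : ℝ => t ^ c * Real.exp (-t)) t
      = deriv (iteratedDeriv j (fun t : ℝ => t ^ c * Real.exp (-t))) t := by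
    rw [iteratedDeriv_succ]
  rw [h2, h.deriv]
  exact h


lemma pe_tendsto_atTop (q : Polynomial ℝ) (β : ℝ) :
    Tendsto (pe q β) atTop (𝓝 0) := by
  have key : ∀ᶠ t : ℝ in atTop, pe q β t
      = ∑ i ∈ Finset.range (q.natDegree + 1), q.coeff i * (t ^ (β + i) * Real.exp (-t)) := by
    filter_upwards [eventually_gt_atTop (0:ℝ)] with t ht
    rw [pe, Polynomial.eval_eq_sum_range, Finset.sum_mul, Finset.sum_mul]
    refine Finset.sum_congr rfl fun i _ => ?_
    rw [Real.rpow_add ht, Real.rpow_natCast]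
    ring
  have : Tendsto (fun t : ℝ => ∑ i ∈ Finset.range (q.natDegree + 1),
      q.coeff i * (t ^ (β + i) * Real.exp (-t))) atTop (𝓝 0) := by
    have : Tendsto (fun t : ℝ => ∑ i ∈ Finset.range (q.natDegree + 1),
        q.coeff i * (t ^ (β + i) * Real.exp (-t))) atTop
        (𝓝 (∑ i ∈ Finset.range (q.natDegree + 1), q.coeff i * 0)) := by
      refine tendsto_finset_sum _ fun i _ => ?_
      refine Tendsto.const_mul _ ?_
      have h := tendsto_rpow_mul_exp_neg_mul_atTop_nhds_zero (β + i) 1 one_pos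
      simpa using h
    simpa using this
  exact this.congr' (key.mono fun _ h => h.symm)

lemma pe_tendsto_zero (q : Polynomial ℝ) {β : ℝ} (hβ : 0 < β) :
    Tendsto (pe q β) (𝓝[>] (0:ℝ)) (𝓝 0) := by
  have hc : ContinuousAt (pe q β) 0 := by
    have h1 : ContinuousAt (fun t : ℝ => q.eval t) 0 := q.continuous.continuousAt
    have h2 : ContinuousAt (fun t : ℝ => t ^ β) 0 :=
      Real.continuousAt_rpow_const 0 β (Or.inr hβ.le)
    have h3 : ContinuousAt (fun t : ℝ => Real.exp (-t)) 0 :=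
      (Real.continuous_exp.comp continuous_neg).continuousAt
    exact (h1.mul h2).mul h3
  have h0 : pe q β 0 = 0 := by
    simp [pe, Real.zero_rpow hβ.ne']
  have := hc.tendsto
  rw [h0] at this
  exact this.mono_left nhdsWithin_le_nhds

lemma pe_integrable (q : Polynomial ℝ) {β : ℝ} (hβ : -1 < β) :
    IntegrableOn (pe q β) (Ioi (0:ℝ)) := by
  have hsum : IntegrableOn (fun t : ℝ => ∑ i ∈ Finset.range (q.natDegree + 1),
      q.coeff i * (Real.exp (-t) * t ^ (β + i))) (Ioi 0) := by
    refine integrable_finset_sum _ fun i _ => ?_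
    have h : (0:ℝ) < β + i + 1 := by
      have : (0:ℝ) ≤ i := Nat.cast_nonneg i
      linarith
    have := (Real.GammaIntegral_convergent h).const_mul (q.coeff i)
    have he : β + (i:ℝ) + 1 - 1 = β + i := by ring
    rwa [he] at this
  refine hsum.congr_fun (fun t ht => ?_) measurableSet_Ioi
  rw [pe, Polynomial.eval_eq_sum_range, Finset.sum_mul, Finset.sum_mul]
  refine Finset.sum_congr rfl fun i _ => ?_
  rw [Real.rpow_add ht, Real.rpow_natCast]
  ring

lemma moment_zero (c : ℝ) (N k : ℕ) (hk : k + 1 ≤ N) (hc : -1 < c - N) :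
    ∫ t in Ioi (0:ℝ),
      (t:ℝ) ^ k * iteratedDeriv N (fun t : ℝ => t ^ c * Real.exp (-t)) t = 0 := by
  set f : ℝ → ℝ := fun t => t ^ c * Real.exp (-t) with hf
  choose Q hQ using fun j => iter_form c j
  set A : ℕ → ℝ → ℝ := fun i t =>
    (-1:ℝ)^i * (k.descFactorial i) * t^(k-i) * iteratedDeriv (N-i) f t with hA
  set G : ℝ → ℝ := fun t => ∑ i ∈ Finset.range (k+1),
    (-1:ℝ)^i * (k.descFactorial i) * t^(k-i) * iteratedDeriv (N-1-i) f t with hG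
  -- derivative of G
  have hGd : ∀ t ∈ Ioi (0:ℝ), HasDerivAt G ((t:ℝ)^k * iteratedDeriv N f t) t := by
    intro t ht
    have hterm : ∀ i ∈ Finset.range (k+1), HasDerivAt
        (fun t : ℝ => (-1:ℝ)^i * (k.descFactorial i) * t^(k-i) * iteratedDeriv (N-1-i) f t)
        (A i t - A (i+1) t) t := by
      intro i hi
      have hik : i ≤ k := Nat.lt_succ_iff.mp (Finset.mem_range.mp hi)
      have h1 : HasDerivAt (fun t : ℝ => t ^ (k-i)) ((k-i : ℕ) * t^(k-i-1)) t :=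
        hasDerivAt_pow (k-i) t
      have h2 : HasDerivAt (iteratedDeriv (N-1-i) f) (iteratedDeriv (N-1-i+1) f t) t :=
        iter_hasDerivAt c (N-1-i) ht
      have hNi : N - 1 - i + 1 = N - i := by omega
      rw [hNi] at h2
      have h := ((h1.const_mul ((-1:ℝ)^i * (k.descFactorial i))).mul h2)
      refine h.congr_deriv ?_
      have hd1 : N - (i+1) = N - 1 - i := by omega
      have hd2 : k - (i+1) = k - i - 1 := by omega
      have hd3 : (k.descFactorial (i+1) : ℝ) = (k - i : ℕ) * (k.descFactorial i) := by
        rw [Nat.descFactorial_succ]; push_cast; ring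
      simp only [hA, hd1, hd2, hd3, pow_succ]
      ring
    have h := HasDerivAt.sum hterm
    have hsum : ∑ i ∈ Finset.range (k+1), (A i t - A (i+1) t) = A 0 t - A (k+1) t :=
      Finset.sum_range_sub' (fun i => A i t) (k+1)
    rw [hsum] at h
    have hA0 : A 0 t = t^k * iteratedDeriv N f t := by simp [hA]
    have hAk : A (k+1) t = 0 := by
      have : k.descFactorial (k+1) = 0 := Nat.descFactorial_eq_zero_iff_lt.mpr (Nat.lt_succ_self k)
      simp [hA, this]
    rw [hA0, hAk, sub_zero] at h
    exact h.congr_of_eventuallyEq (Filter.Eventually.of_forall fun x => by simp [hG, Finset.sum_apply])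
  -- representation of each term of G as pe
  have hrep : ∀ i ∈ Finset.range (k+1), ∀ t ∈ Ioi (0:ℝ),
      (-1:ℝ)^i * (k.descFactorial i) * t^(k-i) * iteratedDeriv (N-1-i) f t
        = pe (C ((-1:ℝ)^i * (k.descFactorial i)) * X^(k-i) * Q (N-1-i)) (c - (N-1-i)) t := by
    intro i hi t ht
    have hik : i ≤ k := Nat.lt_succ_iff.mp (Finset.mem_range.mp hi)
    have hcast : ((N-1-i : ℕ) : ℝ) = (N:ℝ) - 1 - i := by
      have h1 : N - 1 - i + (1 + i) = N := by omega
      have := congrArg (fun x : ℕ => (x:ℝ)) h1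
      push_cast at this
      linarith
    rw [hQ (N-1-i) t ht]
    simp only [pe, eval_mul, eval_C, eval_pow, eval_X, hcast]
    ring
  have hGtop : Tendsto G atTop (𝓝 0) := by
    have : Tendsto (fun t => ∑ i ∈ Finset.range (k+1),
        pe (C ((-1:ℝ)^i * (k.descFactorial i)) * X^(k-i) * Q (N-1-i)) (c - (N-1-i)) t)
        atTop (𝓝 0) := by
      have := tendsto_finset_sum (Finset.range (k+1))
        (fun i _ => pe_tendsto_atTop (C ((-1:ℝ)^i * (k.descFactorial i)) * X^(k-i) * Q (N-1-i))
          (c - (N-1-i)))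
      simpa using this
    refine this.congr' ?_
    filter_upwards [eventually_gt_atTop (0:ℝ)] with t ht
    exact (Finset.sum_congr rfl fun i hi => (hrep i hi t ht).symm)
  have hG0 : Tendsto G (𝓝[>] (0:ℝ)) (𝓝 0) := by
    have : Tendsto (fun t => ∑ i ∈ Finset.range (k+1),
        pe (C ((-1:ℝ)^i * (k.descFactorial i)) * X^(k-i) * Q (N-1-i)) (c - (N-1-i)) t)
        (𝓝[>] (0:ℝ)) (𝓝 0) := by
      have := tendsto_finset_sum (Finset.range (k+1))
        (fun i (hi : i ∈ Finset.range (k+1)) =>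
          pe_tendsto_zero (C ((-1:ℝ)^i * (k.descFactorial i)) * X^(k-i) * Q (N-1-i))
          (show (0:ℝ) < c - (N-1-i) by
            have hik : i ≤ k := Nat.lt_succ_iff.mp (Finset.mem_range.mp hi)
            have : ((N-1-i : ℕ) : ℝ) ≤ (N:ℝ) - 1 - i := by
              have h1 : N - 1 - i + (1 + i) = N := by omega
              have := congrArg (fun x : ℕ => (x:ℝ)) h1
              push_cast at this
              linarith
            have hi0 : (0:ℝ) ≤ i := Nat.cast_nonneg i
            linarith))
      simpa using this
    refine this.congr' ?_
    filter_upwards [self_mem_nhdsWithin] with t ht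
    exact (Finset.sum_congr rfl fun i hi => (hrep i hi t ht).symm)
  have hint : IntegrableOn (fun t : ℝ => t^k * iteratedDeriv N f t) (Ioi (0:ℝ)) := by
    have h := pe_integrable (X^k * Q N) hc
    exact h.congr_fun (fun t ht => by
      rw [hQ N t ht]; simp only [pe, eval_mul, eval_pow, eval_X]; ring) measurableSet_Ioi
  -- split the integral at 1
  have hsplit : Ioc (0:ℝ) 1 ∪ Ioi (1:ℝ) = Ioi (0:ℝ) := Ioc_union_Ioi_eq_Ioi zero_le_one
  have hdisj : Disjoint (Ioc (0:ℝ) 1) (Ioi (1:ℝ)) := Ioc_disjoint_Ioi le_rfl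
  have hi1 : IntegrableOn (fun t : ℝ => t^k * iteratedDeriv N f t) (Ioc (0:ℝ) 1) :=
    hint.mono_set (fun x hx => hx.1)
  have hi2 : IntegrableOn (fun t : ℝ => t^k * iteratedDeriv N f t) (Ioi (1:ℝ)) :=
    hint.mono_set (fun x hx => mem_Ioi.mpr (lt_trans zero_lt_one hx))
  rw [← hsplit, setIntegral_union hdisj measurableSet_Ioi hi1 hi2]
  have hpart2 : ∫ t in Ioi (1:ℝ), t^k * iteratedDeriv N f t = 0 - G 1 := by
    refine integral_Ioi_of_hasDerivAt_of_tendsto ?_ (fun t ht => hGd t (mem_Ioi.mpr (lt_trans zero_lt_one ht))) hi2 hGtop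
    exact (hGd 1 (Set.mem_Ioi.mpr one_pos)).differentiableAt.continuousAt.continuousWithinAt
  have hpart1 : ∫ t in Ioc (0:ℝ) 1, t^k * iteratedDeriv N f t = G 1 - 0 := by
    rw [← intervalIntegral.integral_of_le zero_le_one]
    refine intervalIntegral.integral_eq_sub_of_hasDerivAt_of_tendsto zero_lt_one
      (fun t ht => hGd t ht.1) ?_ hG0 ?_
    · rw [intervalIntegrable_iff_integrableOn_Ioc_of_le zero_le_one]; exact hi1
    · exact ((hGd 1 (Set.mem_Ioi.mpr one_pos)).differentiableAt.continuousAt.tendsto).mono_left nhdsWithin_le_nhds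
  rw [hpart1, hpart2]; ring

/-- The Beta-type integrand. -/
noncomputable def phi (M : ℕ) (ν a : ℝ) : ℝ → ℝ := fun u => (1 - u) ^ M * u ^ ν * u ^ a

lemma phi_meas (M : ℕ) (ν a : ℝ) : Measurable (phi M ν a) := by
  unfold phi
  have h1 : Measurable fun u : ℝ => (1 - u) ^ M :=
    ((measurable_const.sub measurable_id).pow_const M)
  have h2 : Measurable fun u : ℝ => u ^ ν := by measurability
  have h3 : Measurable fun u : ℝ => u ^ a := by measurability
  exact (h1.mul h2).mul h3

lemma phi_nonneg (M : ℕ) (ν a : ℝ) {u : ℝ} (hu : u ∈ Ioo (0:ℝ) 1) : 0 ≤ phi M ν a u := by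
  have h1 : (0:ℝ) ≤ 1 - u := by linarith [hu.2]
  exact mul_nonneg (mul_nonneg (pow_nonneg h1 M) (Real.rpow_nonneg hu.1.le ν))
    (Real.rpow_nonneg hu.1.le a)

lemma phi_le (M : ℕ) (ν a : ℝ) {u : ℝ} (hu : u ∈ Ioo (0:ℝ) 1) :
    phi M ν a u ≤ u ^ (ν + a) := by
  have h1 : (0:ℝ) ≤ 1 - u := by linarith [hu.2]
  have h2 : (1 - u) ^ M ≤ 1 := pow_le_one₀ h1 (by linarith [hu.1])
  have h3 : u ^ ν * u ^ a = u ^ (ν + a) := (Real.rpow_add hu.1 ν a).symm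
  calc (1 - u) ^ M * u ^ ν * u ^ a ≤ 1 * u ^ ν * u ^ a := by
        have := mul_nonneg (Real.rpow_nonneg hu.1.le ν) (Real.rpow_nonneg hu.1.le a)
        nlinarith [Real.rpow_nonneg hu.1.le ν, Real.rpow_nonneg hu.1.le a]
    _ = u ^ (ν + a) := by rw [one_mul, h3]

lemma rpow_integrableOn_Ioo {b t : ℝ} (hb : -1 < b) (ht : 0 < t) :
    IntegrableOn (fun x : ℝ => x ^ b) (Ioo (0:ℝ) t) := by
  have h := (intervalIntegral.intervalIntegrable_rpow' (a := 0) (b := t) hb)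
  rw [intervalIntegrable_iff_integrableOn_Ioc_of_le ht.le] at h
  exact h.mono_set Ioo_subset_Ioc_self

lemma phi_integrableOn (M : ℕ) {ν a : ℝ} (hb : -1 < ν + a) :
    IntegrableOn (phi M ν a) (Ioo (0:ℝ) 1) := by
  refine Integrable.mono' (rpow_integrableOn_Ioo hb one_pos)
    ((phi_meas M ν a).aestronglyMeasurable) ?_
  rw [ae_restrict_iff' measurableSet_Ioo]
  filter_upwards with u hu
  rw [Real.norm_eq_abs, abs_of_nonneg (phi_nonneg M ν a hu)]
  exact phi_le M ν a hu

lemma phi_comp_integrableOn (M : ℕ) {ν a t : ℝ} (hb : -1 < ν + a) (ht : 0 < t) :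
    IntegrableOn (fun x : ℝ => phi M ν a (x / t)) (Ioo (0:ℝ) t) := by
  have hg : IntegrableOn (fun x : ℝ => x ^ (ν + a) / t ^ (ν + a)) (Ioo (0:ℝ) t) :=
    (rpow_integrableOn_Ioo hb ht).div_const _
  refine Integrable.mono' hg ((phi_meas M ν a).comp (measurable_id.div_const t)).aestronglyMeasurable ?_
  rw [ae_restrict_iff' measurableSet_Ioo]
  filter_upwards with x hx
  have hu : x / t ∈ Ioo (0:ℝ) 1 := ⟨div_pos hx.1 ht, (div_lt_one ht).mpr hx.2⟩
  rw [Real.norm_eq_abs, abs_of_nonneg (phi_nonneg M ν a hu)]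
  calc phi M ν a (x / t) ≤ (x / t) ^ (ν + a) := phi_le M ν a hu
    _ = x ^ (ν + a) / t ^ (ν + a) := Real.div_rpow hx.1.le ht.le _

lemma phi_comp_integral (M : ℕ) (ν a : ℝ) {t : ℝ} (ht : 0 < t) :
    ∫ x in Ioo (0:ℝ) t, phi M ν a (x / t) = t * ∫ u in Ioo (0:ℝ) 1, phi M ν a u := by
  rw [← integral_Ioc_eq_integral_Ioo, ← integral_Ioc_eq_integral_Ioo,
    ← intervalIntegral.integral_of_le ht.le, ← intervalIntegral.integral_of_le zero_le_one]
  rw [intervalIntegral.integral_comp_div (fun u => phi M ν a u) ht.ne']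
  rw [zero_div, div_self ht.ne']
  simp [smul_eq_mul]


/-- The two-variable kernel. -/
noncomputable def Wf (P : Polynomial ℝ) (M : ℕ) (ν a : ℝ) : ℝ × ℝ → ℝ := fun p =>
  if p.1 < p.2 then
    P.eval p.2 * Real.exp (-p.2) * (1 - p.1/p.2)^M * (p.1/p.2)^ν / p.2 * p.1 ^ a
  else 0

lemma Wf_meas (P : Polynomial ℝ) (M : ℕ) (ν a : ℝ) : Measurable (Wf P M ν a) := by
  unfold Wf
  have h1 : Measurable fun p : ℝ × ℝ => P.eval p.2 := P.continuous.measurable.comp measurable_snd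
  have h2 : Measurable fun p : ℝ × ℝ => Real.exp (-p.2) :=
    (Real.continuous_exp.comp continuous_neg).measurable.comp measurable_snd
  have h3 : Measurable fun p : ℝ × ℝ => (1 - p.1/p.2)^M :=
    ((measurable_const.sub (measurable_fst.div measurable_snd)).pow_const M)
  have h4 : Measurable fun p : ℝ × ℝ => (p.1/p.2)^ν := by measurability
  have h5 : Measurable fun p : ℝ × ℝ => p.1 ^ a := by measurability
  exact Measurable.ite (measurableSet_lt measurable_fst measurable_snd)
    (((((h1.mul h2).mul h3).mul h4).div measurable_snd).mul h5) measurable_const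

lemma Wf_indicator (P : Polynomial ℝ) (M : ℕ) (ν a t : ℝ) :
    (fun x => Wf P M ν a (x, t)) = indicator (Iio t)
      (fun x => P.eval t * Real.exp (-t) * (1 - x/t)^M * (x/t)^ν / t * x ^ a) := by
  funext x
  by_cases h : x < t <;> simp [Wf, h, indicator, mem_Iio]

lemma Wf_eq_phi (P : Polynomial ℝ) (M : ℕ) (ν a : ℝ) {t : ℝ} (ht : 0 < t)
    {x : ℝ} (hx : x ∈ Ioo (0:ℝ) t) :
    P.eval t * Real.exp (-t) * (1 - x/t)^M * (x/t)^ν / t * x ^ a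
      = (P.eval t * Real.exp (-t) / t * t ^ a) * phi M ν a (x / t) := by
  have hxa : x ^ a = t ^ a * (x/t) ^ a := by
    rw [← Real.mul_rpow ht.le (div_nonneg hx.1.le ht.le), mul_div_cancel₀ _ ht.ne']
  rw [phi, hxa]
  ring

/-- Section integral values of the kernel. -/
lemma Wf_section (P : Polynomial ℝ) (M : ℕ) {ν a : ℝ} (hb : -1 < ν + a) {t : ℝ} (ht : 0 < t) :
    IntegrableOn (fun x => Wf P M ν a (x, t)) (Ioi (0:ℝ)) ∧
    (∫ x in Ioi (0:ℝ), Wf P M ν a (x, t))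
      = P.eval t * Real.exp (-t) * t ^ a * ∫ u in Ioo (0:ℝ) 1, phi M ν a u ∧
    (∫ x in Ioi (0:ℝ), ‖Wf P M ν a (x, t)‖)
      = ‖P.eval t * Real.exp (-t) * t ^ a‖ * ∫ u in Ioo (0:ℝ) 1, phi M ν a u := by
  set K : ℝ := P.eval t * Real.exp (-t) / t * t ^ a with hK
  set B : ℝ := ∫ u in Ioo (0:ℝ) 1, phi M ν a u with hBdef
  have hB0 : 0 ≤ B := setIntegral_nonneg measurableSet_Ioo (fun u hu => phi_nonneg M ν a hu)
  have hKint : IntegrableOn (fun x => K * phi M ν a (x / t)) (Ioo (0:ℝ) t) :=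
    (phi_comp_integrableOn M hb ht).const_mul K
  have hinter : Ioi (0:ℝ) ∩ Iio t = Ioo 0 t := Ioi_inter_Iio
  have hKt : K * t = P.eval t * Real.exp (-t) * t ^ a := by
    rw [hK]; field_simp
  refine ⟨?_, ?_, ?_⟩
  · rw [Wf_indicator]
    rw [IntegrableOn, integrable_indicator_iff measurableSet_Iio]
    rw [IntegrableOn, Measure.restrict_restrict measurableSet_Iio]
    rw [inter_comm, hinter]
    exact hKint.congr_fun (fun x hx => (Wf_eq_phi P M ν a ht hx).symm) measurableSet_Ioo
  · rw [Wf_indicator, setIntegral_indicator measurableSet_Iio, hinter,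
      setIntegral_congr_fun measurableSet_Ioo (fun x hx => Wf_eq_phi P M ν a ht hx),
      MeasureTheory.integral_const_mul, phi_comp_integral M ν a ht, ← hBdef, ← hK,
      ← mul_assoc, hKt]
  · have hnorm : (fun x => ‖Wf P M ν a (x, t)‖) = indicator (Iio t)
        (fun x => ‖P.eval t * Real.exp (-t) * (1 - x/t)^M * (x/t)^ν / t * x ^ a‖) := by
      funext x
      rw [congrFun (Wf_indicator P M ν a t) x, norm_indicator_eq_indicator_norm]
    rw [hnorm, setIntegral_indicator measurableSet_Iio, hinter]
    have heq : ∀ x ∈ Ioo (0:ℝ) t,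
        ‖P.eval t * Real.exp (-t) * (1 - x/t)^M * (x/t)^ν / t * x ^ a‖
          = ‖K‖ * phi M ν a (x / t) := by
      intro x hx
      rw [Wf_eq_phi P M ν a ht hx, norm_mul]
      have hu : x / t ∈ Ioo (0:ℝ) 1 := ⟨div_pos hx.1 ht, (div_lt_one ht).mpr hx.2⟩
      rw [Real.norm_eq_abs (phi M ν a (x/t)), abs_of_nonneg (phi_nonneg M ν a hu)]
    rw [setIntegral_congr_fun measurableSet_Ioo heq, MeasureTheory.integral_const_mul,
      phi_comp_integral M ν a ht, ← hBdef, ← mul_assoc]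
    congr 1
    rw [← hKt, Real.norm_eq_abs, Real.norm_eq_abs, abs_mul K t, abs_of_pos ht]

end TypeIAux

open TypeIAux in
/-- The function `F_{n,m}` satisfies the type I orthogonality conditions
`∫₀^∞ F_{n,m}(x) x^{α+k} dx = 0` for `k = 0, …, n+m-2`. -/
theorem typeI_orthogonality (n m : ℕ) (hm : 1 ≤ m) (hnm : m ≤ n + 1) (α ν : ℝ)
    (hα : -1 < α) (hαν : -1 < α + ν) :
    ∀ k : ℕ, k + 2 ≤ n + m →
      ∫ x in Ioi (0:ℝ), Ftyp n m α ν x * x ^ (α + k) = 0 := by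
  intro k hk
  set a : ℝ := α + (k:ℝ) with ha
  set N : ℕ := n + m - 1 with hN
  set M : ℕ := m - 1 with hM
  have hkN : k + 1 ≤ N := by omega
  set c : ℝ := (N:ℝ) + α with hc
  obtain ⟨Q, hQ⟩ := iter_form c N
  set Pq : Polynomial ℝ := Polynomial.C ((N.factorial:ℝ)⁻¹) * Q with hPq
  have haa : -1 < a := by
    have : (0:ℝ) ≤ k := Nat.cast_nonneg k
    rw [ha]; linarith
  have hb : -1 < ν + a := by rw [ha]; linarith
  set B : ℝ := ∫ u in Ioo (0:ℝ) 1, phi M ν a u with hB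
  -- Lag is a polynomial on the positive axis
  have hLag : ∀ t : ℝ, 0 < t → Lag N α t = Pq.eval t := by
    intro t ht
    unfold Lag
    rw [← hc, hQ t (mem_Ioi.mpr ht)]
    simp only [pe, hPq, Polynomial.eval_mul, Polynomial.eval_C]
    have e1 : t ^ (-α) * t ^ α = 1 := by
      rw [← Real.rpow_add ht]; simp
    have e2 : Real.exp t * Real.exp (-t) = 1 := by
      rw [← Real.exp_add]; simp
    have e3 : c - (N:ℝ) = α := by rw [hc]; ring
    rw [e3]
    calc t ^ (-α) * Real.exp t / ↑N.factorial * (Q.eval t * t ^ α * Real.exp (-t))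
        = (t ^ (-α) * t ^ α) * (Real.exp t * Real.exp (-t)) * Q.eval t / ↑N.factorial := by ring
      _ = (↑N.factorial)⁻¹ * Q.eval t := by rw [e1, e2]; ring
  -- rewrite the integrand using the kernel
  have hFx : ∀ x ∈ Ioi (0:ℝ), Ftyp n m α ν x * x ^ a
      = ∫ t in Ioi (0:ℝ), Wf Pq M ν a (x, t) := by
    intro x hx
    have hx0 : 0 < x := mem_Ioi.mp hx
    unfold Ftyp
    rw [← MeasureTheory.integral_mul_const, ← hN, ← hM]
    have h1 : ∀ t ∈ Ioi x,
        Lag N α t * Real.exp (-t) * (1 - x/t)^M * (x/t)^ν / t * x ^ a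
          = Wf Pq M ν a (x, t) := by
      intro t ht
      have htpos : 0 < t := lt_trans hx0 (mem_Ioi.mp ht)
      rw [hLag t htpos, Wf]
      simp only
      rw [if_pos (mem_Ioi.mp ht)]
    rw [setIntegral_congr_fun measurableSet_Ioi h1]
    have h2 : (fun t => Wf Pq M ν a (x, t)) = indicator (Ioi x)
        (fun t => Pq.eval t * Real.exp (-t) * (1 - x/t)^M * (x/t)^ν / t * x ^ a) := by
      funext t
      by_cases h : x < t <;> simp [Wf, h, indicator, mem_Ioi]
    rw [h2, setIntegral_indicator measurableSet_Ioi, setIntegral_indicator measurableSet_Ioi]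
    rw [inter_self, inter_eq_right.mpr (Ioi_subset_Ioi hx0.le)]
  -- integrability of the kernel on the product
  have hWint : Integrable (Wf Pq M ν a)
      ((volume.restrict (Ioi (0:ℝ))).prod (volume.restrict (Ioi (0:ℝ)))) := by
    refine (integrable_prod_iff' (Wf_meas Pq M ν a).aestronglyMeasurable).2 ⟨?_, ?_⟩
    · filter_upwards [ae_restrict_mem measurableSet_Ioi] with t ht
      exact (Wf_section Pq M hb (mem_Ioi.mp ht)).1
    · have base : Integrable (fun t => ‖pe Pq a t‖ * B) (volume.restrict (Ioi (0:ℝ))) :=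
        (pe_integrable Pq haa).norm.mul_const B
      refine base.congr ?_
      filter_upwards [ae_restrict_mem measurableSet_Ioi] with t ht
      rw [(Wf_section Pq M hb (mem_Ioi.mp ht)).2.2, ← hB]
      congr 1
      simp only [pe]
      congr 1
      ring
  -- chain of computations
  rw [setIntegral_congr_fun measurableSet_Ioi hFx]
  rw [MeasureTheory.integral_integral_swap (f := fun x t => Wf Pq M ν a (x, t)) hWint]
  have h3 : ∀ t ∈ Ioi (0:ℝ), (∫ x in Ioi (0:ℝ), Wf Pq M ν a (x, t)) = pe Pq a t * B := by
    intro t ht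
    rw [(Wf_section Pq M hb (mem_Ioi.mp ht)).2.1, ← hB]
    simp only [pe]; ring
  rw [setIntegral_congr_fun measurableSet_Ioi h3, MeasureTheory.integral_mul_const]
  have h4 : ∀ t ∈ Ioi (0:ℝ), pe Pq a t
      = (N.factorial:ℝ)⁻¹ * ((t:ℝ)^k * iteratedDeriv N (fun t : ℝ => t ^ c * Real.exp (-t)) t) := by
    intro t ht
    rw [hQ t ht]
    simp only [pe, hPq, Polynomial.eval_mul, Polynomial.eval_C]
    have e1 : c - (N:ℝ) = α := by rw [hc]; ring
    have e2 : (t:ℝ)^a = t^α * t^(k:ℕ) := by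
      rw [ha, Real.rpow_add (mem_Ioi.mp ht), Real.rpow_natCast]
    rw [e1, e2]; ring
  rw [setIntegral_congr_fun measurableSet_Ioi h4, MeasureTheory.integral_const_mul,
    moment_zero c N k hkN (by rw [hc]; linarith), mul_zero, zero_mul]
end

section
/- For n ≥ m+1, with P_{n,m}(x) = x^{-α-ν} d^m/dx^m[x^{m+α+ν} L_{n+m}^{(α)}(x)] one has d/dx[x^{α+ν} P_{n,m}^{α,ν}(x)] = c · x^{α+ν-1} P_{n-1,m+1}^{α,ν-1}(x) for some nonzero constant c; equivalently, the polynomial P_{n,m}(x) satisfies the type II orthogonality conditions ∫₀^∞ P_{n,m}(x) e^{-x} x^{k+α} dx = 0 for k=0,…,n-1 and ∫₀^∞ P_{n,m}(x) E_{ν+1}(x) x^{k+α} dx = 0 for k=0,…,m-1. -/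
open MeasureTheory Set Polynomial

/-- The type II polynomial `P_{n,m}^{α,ν}(x) = x^{-α-ν} dᵐ/dxᵐ[x^{m+α+ν} L_{n+m}^{(α)}(x)]`. -/
noncomputable def PII (n m : ℕ) (α ν : ℝ) (x : ℝ) : ℝ :=
  x ^ (-(α + ν)) * iteratedDeriv m (fun t => t ^ ((m : ℝ) + α + ν) * Lag (n + m) α t) x

/- ======================  Auxiliary development  ====================== -/

/-- Descending factorial product `β (β-1) ⋯ (β-j+1)`. -/
noncomputable def Dfall (j : ℕ) (β : ℝ) : ℝ := ∏ s ∈ Finset.range j, (β - s)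

@[simp] lemma Dfall_zero (β : ℝ) : Dfall 0 β = 1 := by simp [Dfall]

lemma Dfall_succ (j : ℕ) (β : ℝ) : Dfall (j+1) β = Dfall j β * (β - j) := by
  simp [Dfall, Finset.prod_range_succ]

/-- Coefficients of the Laguerre polynomial. -/
noncomputable def lagC (N : ℕ) (α : ℝ) (j : ℕ) : ℝ :=
  (-1 : ℝ)^(N+j) * (N.choose j) * Dfall j ((N : ℝ) + α) / (N.factorial : ℝ)

/-- Eventual equality propagates through iterated derivatives. -/
lemma iteratedDeriv_congr_nhds {f g : ℝ → ℝ} {x : ℝ} (h : f =ᶠ[nhds x] g) (k : ℕ) :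
    iteratedDeriv k f =ᶠ[nhds x] iteratedDeriv k g := by
  induction k with
  | zero => simpa [iteratedDeriv_zero] using h
  | succ k ih => simpa [iteratedDeriv_succ] using ih.deriv

/-- Iterated derivative of a finite sum of real-power monomials on `(0,∞)`. -/
lemma iterMono (M : ℕ) (c e : ℕ → ℝ) : ∀ (k : ℕ) (x : ℝ), 0 < x →
    iteratedDeriv k (fun t : ℝ => ∑ i ∈ Finset.range M, c i * t ^ (e i)) x
      = ∑ i ∈ Finset.range M, c i * Dfall k (e i) * x ^ (e i - k) := by
  intro k
  induction k with
  | zero => intro x hx; simp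
  | succ k ih =>
    intro x hx
    rw [iteratedDeriv_succ]
    have hev : iteratedDeriv k (fun t : ℝ => ∑ i ∈ Finset.range M, c i * t ^ (e i))
        =ᶠ[nhds x] (fun y => ∑ i ∈ Finset.range M, c i * Dfall k (e i) * y ^ (e i - k)) :=
      Filter.eventuallyEq_of_mem (Ioi_mem_nhds hx) (fun y hy => ih y hy)
    rw [hev.deriv_eq]
    have hd : HasDerivAt (fun y : ℝ => ∑ i ∈ Finset.range M, c i * Dfall k (e i) * y ^ (e i - k))
        (∑ i ∈ Finset.range M, c i * Dfall k (e i) * ((e i - k) * x ^ (e i - k - 1))) x :=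
      HasDerivAt.fun_sum fun i _ =>
        (Real.hasDerivAt_rpow_const (Or.inl hx.ne')).const_mul _
    rw [hd.deriv]
    refine Finset.sum_congr rfl fun i _ => ?_
    rw [show e i - ((k:ℕ)+1:ℕ) = e i - k - 1 by push_cast; ring, Dfall_succ]
    ring

/-- Iterated derivative of `t^β e^{-t}` on `(0,∞)`. -/
lemma iterG (β : ℝ) : ∀ (N : ℕ) (x : ℝ), 0 < x →
    iteratedDeriv N (fun t : ℝ => t ^ β * Real.exp (-t)) x
      = (∑ j ∈ Finset.range (N+1),
          (-1 : ℝ)^(N+j) * (N.choose j) * Dfall j β * x ^ (β - j)) * Real.exp (-x) := by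
  intro N
  induction N with
  | zero => intro x hx; norm_num
  | succ N ih =>
    intro x hx
    rw [iteratedDeriv_succ]
    have hev : iteratedDeriv N (fun t : ℝ => t ^ β * Real.exp (-t)) =ᶠ[nhds x]
        (fun y => (∑ j ∈ Finset.range (N+1),
          (-1 : ℝ)^(N+j) * (N.choose j) * Dfall j β * y ^ (β - j)) * Real.exp (-y)) :=
      Filter.eventuallyEq_of_mem (Ioi_mem_nhds hx) (fun y hy => ih y hy)
    rw [hev.deriv_eq]
    have hsum : HasDerivAt (fun y : ℝ => ∑ j ∈ Finset.range (N+1),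
          (-1 : ℝ)^(N+j) * (N.choose j) * Dfall j β * y ^ (β - j))
        (∑ j ∈ Finset.range (N+1),
          (-1 : ℝ)^(N+j) * (N.choose j) * Dfall j β * ((β - j) * x ^ (β - j - 1))) x :=
      HasDerivAt.fun_sum fun j _ =>
        (Real.hasDerivAt_rpow_const (Or.inl hx.ne')).const_mul _
    have hexp : HasDerivAt (fun y : ℝ => Real.exp (-y)) (-Real.exp (-x)) x := by
      simpa using (hasDerivAt_neg x).exp
    have h := hsum.fun_mul hexp
    rw [h.deriv]
    have key : (∑ j ∈ Finset.range (N+1+1),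
          (-1 : ℝ)^(N+1+j) * ((N+1).choose j) * Dfall j β * x ^ (β - j))
        = (∑ j ∈ Finset.range (N+1),
            (-1 : ℝ)^(N+j) * (N.choose j) * Dfall j β * ((β - j) * x ^ (β - j - 1)))
          - (∑ j ∈ Finset.range (N+1),
            (-1 : ℝ)^(N+j) * (N.choose j) * Dfall j β * x ^ (β - j)) := by
      have hC : (∑ j ∈ Finset.range (N+1),
            (-1 : ℝ)^(N+j) * (N.choose j) * Dfall j β * x ^ (β - j))
          = ∑ j ∈ Finset.range (N+1+1),
            (-1 : ℝ)^(N+j) * (N.choose j) * Dfall j β * x ^ (β - j) := by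
        rw [Finset.sum_range_succ (fun j => (-1 : ℝ)^(N+j) * ((N).choose j) * Dfall j β
          * x ^ (β - (j:ℕ))) (N+1)]
        simp [Nat.choose_succ_self]
      rw [hC, Finset.sum_range_succ' (fun j => (-1 : ℝ)^(N+1+j) * ((N+1).choose j) * Dfall j β
          * x ^ (β - (j:ℕ))) (N+1),
        Finset.sum_range_succ' (fun j => (-1 : ℝ)^(N+j) * ((N).choose j) * Dfall j β
          * x ^ (β - (j:ℕ))) (N+1)]
      have h0 : ((-1 : ℝ)^(N+1+0) * ((N+1).choose 0) * Dfall 0 β * x ^ (β - ((0:ℕ):ℝ)))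
          = - ((-1 : ℝ)^(N+0) * ((N).choose 0) * Dfall 0 β * x ^ (β - ((0:ℕ):ℝ))) := by
        simp [pow_succ]
      have hterm : ∀ j ∈ Finset.range (N+1),
          (-1 : ℝ)^(N+1+(j+1)) * ((N+1).choose (j+1)) * Dfall (j+1) β * x ^ (β - ((j+1:ℕ):ℝ))
          = ((-1 : ℝ)^(N+j) * (N.choose j) * Dfall j β * ((β - j) * x ^ (β - j - 1))
            - (-1 : ℝ)^(N+(j+1)) * (N.choose (j+1)) * Dfall (j+1) β * x ^ (β - ((j+1:ℕ):ℝ))) := by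
        intro j _
        rw [show β - ((j+1:ℕ):ℝ) = β - j - 1 by push_cast; ring, Dfall_succ,
          show N+1+(j+1) = (N+j)+2 from by omega, show N+(j+1) = (N+j)+1 from by omega,
          Nat.choose_succ_succ' N j]
        push_cast
        ring
      rw [Finset.sum_congr rfl hterm, Finset.sum_sub_distrib, h0]
      ring
    rw [key]
    ring

lemma lagEq (N : ℕ) (α : ℝ) {x : ℝ} (hx : 0 < x) :
    Lag N α x = ∑ j ∈ Finset.range (N+1), lagC N α j * x ^ (((N-j : ℕ) : ℝ)) := by
  unfold Lag
  rw [iterG ((N:ℝ)+α) N x hx, Finset.sum_mul, Finset.mul_sum]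
  refine Finset.sum_congr rfl fun j hj => ?_
  have hjN : j ≤ N := Finset.mem_range_succ_iff.mp hj
  have hxp : x ^ (((N-j : ℕ)) : ℝ) = x ^ (-α) * x ^ ((N:ℝ)+α-j) := by
    rw [← Real.rpow_add hx]
    congr 1
    push_cast [hjN]
    ring
  rw [lagC, hxp, Real.exp_neg]
  field_simp

lemma PIIEq (n m : ℕ) (α ν : ℝ) {x : ℝ} (hx : 0 < x) :
    PII n m α ν x = ∑ j ∈ Finset.range (n+m+1),
      Dfall m ((m : ℝ) + α + ν + ((n+m-j : ℕ) : ℝ)) * lagC (n+m) α j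
        * x ^ (((n+m-j : ℕ) : ℝ)) := by
  unfold PII
  have hF : Set.EqOn (fun t : ℝ => t ^ ((m : ℝ) + α + ν) * Lag (n + m) α t)
      (fun t : ℝ => ∑ j ∈ Finset.range (n+m+1),
        lagC (n+m) α j * t ^ ((m : ℝ) + α + ν + ((n+m-j : ℕ) : ℝ))) (Ioi 0) := by
    intro t ht
    simp only
    rw [lagEq (n+m) α ht, Finset.mul_sum]
    refine Finset.sum_congr rfl fun j hj => ?_
    rw [Real.rpow_add ht ((m : ℝ) + α + ν) (((n+m-j : ℕ)) : ℝ)]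
    ring
  have h2 := (iteratedDeriv_congr_nhds
    (Filter.eventuallyEq_of_mem (Ioi_mem_nhds hx) hF) m).self_of_nhds
  rw [h2, iterMono (n+m+1) (fun j => lagC (n+m) α j)
      (fun j => (m : ℝ) + α + ν + ((n+m-j : ℕ) : ℝ)) m x hx, Finset.mul_sum]
  refine Finset.sum_congr rfl fun j hj => ?_
  rw [show (m : ℝ) + α + ν + ((n+m-j : ℕ) : ℝ) - m = ((n+m-j : ℕ) : ℝ) + (α+ν) by ring,
    Real.rpow_add hx]
  have hone : x ^ (-(α + ν)) * x ^ (α + ν) = 1 := by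
    rw [← Real.rpow_add hx, show -(α+ν)+(α+ν) = 0 by ring, Real.rpow_zero]
  linear_combination (lagC (n+m) α j * Dfall m ((m:ℝ)+α+ν+((n+m-j:ℕ):ℝ))
    * x ^ (((n+m-j:ℕ)):ℝ)) * hone

/-- The finite difference of order `N` of a polynomial of degree `< N` vanishes. -/
lemma findiff : ∀ (N : ℕ) (p : Polynomial ℝ), p.degree < (N : WithBot ℕ) →
    ∑ i ∈ Finset.range (N+1), (-1 : ℝ)^i * (N.choose i) * p.eval (i : ℝ) = 0 := by
  intro N
  induction N with
  | zero =>
    intro p hp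
    have h0 : p = 0 := by
      rw [← Polynomial.degree_eq_bot]
      exact Nat.WithBot.lt_zero_iff.mp hp
    simp [h0]
  | succ N ih =>
    intro p hp
    set q : Polynomial ℝ := p.comp (X + C 1) - p with hqdef
    have hq : q.degree < (N : WithBot ℕ) := by
      rcases Nat.eq_zero_or_pos p.natDegree with h0 | h0
      · obtain ⟨a, ha⟩ := Polynomial.natDegree_eq_zero.mp h0
        have : q = 0 := by rw [hqdef, ← ha, Polynomial.C_comp]; ring
        rw [this, Polynomial.degree_zero]
        exact WithBot.bot_lt_coe N
      · have hp0 : p ≠ 0 := fun h => by simp [h] at h0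
        have hndeg : (p.comp (X + C 1)).natDegree = p.natDegree := by
          rw [Polynomial.natDegree_comp, Polynomial.natDegree_X_add_C, mul_one]
        have hlc : (p.comp (X + C 1)).leadingCoeff = p.leadingCoeff := by
          rw [Polynomial.leadingCoeff_comp (by rw [Polynomial.natDegree_X_add_C]; exact one_ne_zero),
            Polynomial.leadingCoeff_X_add_C, one_pow, mul_one]
        have hc0 : p.comp (X + C 1) ≠ 0 := by
          intro h
          exact hp0 (Polynomial.leadingCoeff_eq_zero.mp
            (by rw [← hlc, h, Polynomial.leadingCoeff_zero]))
        have hdeg : (p.comp (X + C 1)).degree = p.degree := by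
          rw [Polynomial.degree_eq_natDegree hc0, Polynomial.degree_eq_natDegree hp0, hndeg]
        have h1 : q.degree < p.degree := by
          have := Polynomial.degree_sub_lt hdeg hc0 hlc
          rwa [hdeg] at this
        have h2 : p.degree ≤ (N : WithBot ℕ) := by
          rw [Polynomial.degree_eq_natDegree hp0] at hp ⊢
          exact_mod_cast Nat.lt_succ_iff.mp (by exact_mod_cast hp)
        exact lt_of_lt_of_le h1 h2
    have hqs := ih q hq
    have heval : ∀ i : ℕ, q.eval (i:ℝ) = p.eval ((i:ℝ)+1) - p.eval (i:ℝ) := by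
      intro i; simp [hqdef, Polynomial.eval_comp]
    simp only [heval] at hqs
    rw [Finset.sum_range_succ' (fun i => (-1:ℝ)^i * ((N+1).choose i) * p.eval (i : ℝ)) (N+1)]
    have hsplit : ∀ i ∈ Finset.range (N+1),
        (-1:ℝ)^(i+1) * (((N+1).choose (i+1) : ℕ) : ℝ) * p.eval (((i+1:ℕ)):ℝ)
        = -((-1:ℝ)^i * (N.choose i) * (p.eval ((i:ℝ)+1) - p.eval (i:ℝ)))
          - ((-1:ℝ)^i * (N.choose i) * p.eval (i:ℝ))
          + (-1:ℝ)^(i+1) * (N.choose (i+1)) * p.eval (((i+1:ℕ)):ℝ) := by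
      intro i _
      rw [Nat.choose_succ_succ' N i]
      push_cast
      ring
    rw [Finset.sum_congr rfl hsplit, Finset.sum_add_distrib, Finset.sum_sub_distrib,
      Finset.sum_neg_distrib]
    have hC : (∑ i ∈ Finset.range (N+1), (-1:ℝ)^(i+1) * (N.choose (i+1)) * p.eval (((i+1:ℕ)):ℝ))
        = (∑ i ∈ Finset.range (N+1), (-1:ℝ)^i * (N.choose i) * p.eval (i:ℝ))
          - (-1:ℝ)^0 * (N.choose 0) * p.eval ((0:ℕ):ℝ) := by
      have hF : (∑ i ∈ Finset.range (N+1+1), (-1:ℝ)^i * (N.choose i) * p.eval (i:ℝ))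
          = ∑ i ∈ Finset.range (N+1), (-1:ℝ)^i * (N.choose i) * p.eval (i:ℝ) := by
        rw [Finset.sum_range_succ]
        simp [Nat.choose_succ_self]
      rw [← hF, Finset.sum_range_succ' (fun i => (-1:ℝ)^i * ((N).choose i) * p.eval (i : ℝ)) (N+1)]
      ring
    rw [hqs, hC]
    simp only [Nat.choose_zero_right, Nat.cast_one, Nat.cast_zero, one_mul, pow_zero]
    abel

lemma GammaP (α : ℝ) (hα : -1 < α) : ∀ (M : ℕ),
    Real.Gamma (α + 1 + M) = Real.Gamma (α+1) * ∏ s ∈ Finset.range M, (α + 1 + s) := by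
  intro M
  induction M with
  | zero => simp
  | succ M ih =>
    have hne : α + 1 + M ≠ 0 := by
      have : (0:ℝ) ≤ M := Nat.cast_nonneg M
      intro h; linarith
    rw [show α + 1 + (((M:ℕ)+1:ℕ):ℝ) = (α + 1 + M) + 1 by push_cast; ring,
      Real.Gamma_add_one hne, ih, Finset.prod_range_succ]
    ring

/- ==================  integral computations  ================== -/

lemma aesm_rpow (c : ℝ) : AEStronglyMeasurable (fun x : ℝ => x ^ c)
    (volume.restrict (Ioi (0:ℝ))) :=
  ContinuousOn.aestronglyMeasurable
    (fun x hx => (Real.continuousAt_rpow_const x c (Or.inl (ne_of_gt hx))).continuousWithinAt)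
    measurableSet_Ioi

lemma int_rpow_exp {a t : ℝ} (h1 : -1 < a) (ht : 0 < t) :
    IntegrableOn (fun x : ℝ => x ^ a * Real.exp (-(x*t))) (Ioi (0:ℝ)) := by
  have h0 : IntegrableOn (fun u : ℝ => Real.exp (-u) * u ^ ((a+1)-1)) (Ioi (0:ℝ)) :=
    Real.GammaIntegral_convergent (by linarith)
  have h2 : IntegrableOn (fun x : ℝ => Real.exp (-(t*x)) * (t*x) ^ ((a+1)-1)) (Ioi (0:ℝ)) := by
    have := (integrableOn_Ioi_comp_mul_left_iff
      (fun u : ℝ => Real.exp (-u) * u ^ ((a+1)-1)) 0 ht).mpr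
    simp only [mul_zero] at this
    exact this h0
  have h3 := h2.const_mul (t ^ (-a))
  refine MeasureTheory.IntegrableOn.congr_fun h3 (fun x hx => ?_) measurableSet_Ioi
  have hx0 : (0:ℝ) < x := hx
  have hmul : (t*x) ^ ((a+1)-1) = t ^ a * x ^ a := by
    rw [show (a+1)-1 = a by ring, Real.mul_rpow ht.le hx0.le]
  rw [hmul, mul_comm t x]
  have hone : t ^ (-a) * t ^ a = 1 := by
    rw [← Real.rpow_add ht, show -a + a = 0 by ring, Real.rpow_zero]
  linear_combination (Real.exp (-(x*t)) * x ^ a) * hone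

lemma val_rpow_exp {a t : ℝ} (h1 : -1 < a) (ht : 0 < t) :
    ∫ x in Ioi (0:ℝ), x ^ a * Real.exp (-(x*t)) = (1/t)^(a+1) * Real.Gamma (a+1) := by
  have h := Real.integral_rpow_mul_exp_neg_mul_Ioi (a := a+1) (r := t) (by linarith) ht
  rw [← h]
  refine setIntegral_congr_fun measurableSet_Ioi (fun x hx => ?_)
  rw [show (a+1)-1 = a by ring, mul_comm t x]

lemma int_g {x ν : ℝ} (hx : 0 < x) :
    IntegrableOn (fun t : ℝ => Real.exp (-(x*t)) * t ^ (-(ν+1))) (Ioi (1:ℝ)) := by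
  obtain ⟨M, hM⟩ := exists_nat_ge (-(ν+1))
  have hMpos : (-1:ℝ) < (M:ℝ) := lt_of_lt_of_le (by norm_num) (Nat.cast_nonneg M)
  have hbound : IntegrableOn (fun t : ℝ => t ^ (M:ℝ) * Real.exp (-(t*x))) (Ioi (1:ℝ)) :=
    (int_rpow_exp hMpos hx).mono_set (Ioi_subset_Ioi zero_le_one)
  refine Integrable.mono' hbound ?_ ?_
  · refine ContinuousOn.aestronglyMeasurable (fun t ht => ?_) measurableSet_Ioi
    have ht0 : (0:ℝ) < t := lt_trans one_pos ht
    exact ((Real.continuous_exp.comp ((continuous_const.mul continuous_id).neg)).continuousAt.mul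
      (Real.continuousAt_rpow_const t _ (Or.inl (ne_of_gt ht0)))).continuousWithinAt
  · filter_upwards [ae_restrict_mem measurableSet_Ioi] with t ht
    have ht1 : (1:ℝ) ≤ t := le_of_lt ht
    have ht0 : (0:ℝ) < t := lt_of_lt_of_le one_pos ht1
    rw [Real.norm_eq_abs, abs_of_nonneg (by positivity)]
    rw [mul_comm t x] at *
    calc Real.exp (-(x*t)) * t ^ (-(ν+1)) ≤ Real.exp (-(x*t)) * t ^ (M:ℝ) := by
          exact mul_le_mul_of_nonneg_left (Real.rpow_le_rpow_of_exponent_le ht1 hM)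
            (Real.exp_nonneg _)
      _ = t ^ (M:ℝ) * Real.exp (-(x*t)) := by ring

lemma expE_nonneg {ν x : ℝ} : 0 ≤ expE ν x := by
  refine setIntegral_nonneg measurableSet_Ioi (fun t ht => ?_)
  have ht0 : (0:ℝ) < t := lt_trans one_pos ht
  positivity

lemma expE_integral (ν a : ℝ) (h1 : -1 < a) (h2 : 0 < a + ν + 1) :
    IntegrableOn (fun x : ℝ => x ^ a * expE (ν+1) x) (Ioi 0) ∧
      ∫ x in Ioi (0:ℝ), x ^ a * expE (ν+1) x = Real.Gamma (a+1) / (a + ν + 1) := by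
  have hGpos : 0 < Real.Gamma (a+1) := Real.Gamma_pos_of_pos (by linarith)
  set f : ℝ → ℝ → ℝ := fun x t => x ^ a * (Real.exp (-(x*t)) * t ^ (-(ν+1))) with hfdef
  have hprodc : ContinuousOn (fun z : ℝ×ℝ => f z.1 z.2) (Ioi (0:ℝ) ×ˢ Ioi (1:ℝ)) := by
    intro z hz
    have hz1 : (0:ℝ) < z.1 := hz.1
    have hz2 : (0:ℝ) < z.2 := lt_trans one_pos hz.2
    refine ContinuousAt.continuousWithinAt ?_
    have c1 : ContinuousAt (fun z : ℝ×ℝ => z.1 ^ a) z :=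
      (Real.continuousAt_rpow_const z.1 a (Or.inl hz1.ne')).comp continuousAt_fst
    have c2 : ContinuousAt (fun z : ℝ×ℝ => Real.exp (-(z.1*z.2))) z :=
      (Real.continuous_exp.continuousAt).comp ((continuousAt_fst.mul continuousAt_snd).neg)
    have c3 : ContinuousAt (fun z : ℝ×ℝ => z.2 ^ (-(ν+1))) z :=
      (Real.continuousAt_rpow_const z.2 _ (Or.inl hz2.ne')).comp continuousAt_snd
    exact c1.mul (c2.mul c3)
  have hprod : AEStronglyMeasurable (fun z : ℝ×ℝ => f z.1 z.2)
      ((volume.restrict (Ioi (0:ℝ))).prod (volume.restrict (Ioi (1:ℝ)))) := by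
    rw [Measure.prod_restrict]
    exact hprodc.aestronglyMeasurable (measurableSet_Ioi.prod measurableSet_Ioi)
  have hF : AEMeasurable (fun z : ℝ×ℝ => ENNReal.ofReal (f z.1 z.2))
      ((volume.restrict (Ioi (0:ℝ))).prod (volume.restrict (Ioi (1:ℝ)))) :=
    ENNReal.measurable_ofReal.comp_aemeasurable hprod.aemeasurable
  have hswap := MeasureTheory.lintegral_lintegral_swap
    (μ := volume.restrict (Ioi (0:ℝ))) (ν := volume.restrict (Ioi (1:ℝ)))
    (f := fun x t => ENNReal.ofReal (f x t)) hF
  have hinner : ∀ t ∈ Ioi (1:ℝ), (∫⁻ x in Ioi (0:ℝ), ENNReal.ofReal (f x t))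
      = ENNReal.ofReal (Real.Gamma (a+1) * t ^ (-(a+ν+2))) := by
    intro t ht
    have ht0 : (0:ℝ) < t := lt_trans one_pos ht
    have hint : IntegrableOn (fun x : ℝ => x ^ a * Real.exp (-(x*t))) (Ioi (0:ℝ)) :=
      int_rpow_exp h1 ht0
    have hint2 : IntegrableOn (fun x : ℝ => f x t) (Ioi (0:ℝ)) := by
      refine MeasureTheory.IntegrableOn.congr_fun (hint.mul_const (t ^ (-(ν+1))))
        (fun x hx => ?_) measurableSet_Ioi
      simp only [hfdef]; ring
    have hnn : 0 ≤ᵐ[volume.restrict (Ioi (0:ℝ))] fun x => f x t := by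
      filter_upwards [ae_restrict_mem measurableSet_Ioi] with x hx
      have hx0 : (0:ℝ) < x := hx
      simp only [hfdef]
      positivity
    rw [← MeasureTheory.ofReal_integral_eq_lintegral_ofReal hint2 hnn]
    congr 1
    have hsplit : ∫ x in Ioi (0:ℝ), f x t
        = (∫ x in Ioi (0:ℝ), x ^ a * Real.exp (-(x*t))) * t ^ (-(ν+1)) := by
      rw [← integral_mul_const]
      refine setIntegral_congr_fun measurableSet_Ioi (fun x hx => ?_)
      simp only [hfdef]; ring
    rw [hsplit, val_rpow_exp h1 ht0, one_div, Real.inv_rpow ht0.le, ← Real.rpow_neg ht0.le]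
    have htt : t ^ (-(a+1)) * t ^ (-(ν+1)) = t ^ (-(a+ν+2)) := by
      rw [← Real.rpow_add ht0]; congr 1; ring
    linear_combination Real.Gamma (a+1) * htt
  have hti : IntegrableOn (fun t : ℝ => Real.Gamma (a+1) * t ^ (-(a+ν+2))) (Ioi (1:ℝ)) :=
    (integrableOn_Ioi_rpow_of_lt (by linarith) one_pos).const_mul _
  have htnn : 0 ≤ᵐ[volume.restrict (Ioi (1:ℝ))]
      fun t : ℝ => Real.Gamma (a+1) * t ^ (-(a+ν+2)) := by
    filter_upwards [ae_restrict_mem measurableSet_Ioi] with t ht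
    have ht0 : (0:ℝ) < t := lt_trans one_pos ht
    positivity
  have houter : (∫⁻ t in Ioi (1:ℝ), ENNReal.ofReal (Real.Gamma (a+1) * t ^ (-(a+ν+2))))
      = ENNReal.ofReal (Real.Gamma (a+1) / (a+ν+1)) := by
    rw [← MeasureTheory.ofReal_integral_eq_lintegral_ofReal hti htnn]
    congr 1
    rw [integral_const_mul, integral_Ioi_rpow_of_lt (by linarith) one_pos, Real.one_rpow,
      show (-(a+ν+2)+1 : ℝ) = -(a+ν+1) by ring, div_neg, neg_div, neg_neg, mul_one_div]
  have hEq0 : ∀ x ∈ Ioi (0:ℝ), (∫⁻ t in Ioi (1:ℝ), ENNReal.ofReal (f x t))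
      = ENNReal.ofReal (x ^ a * expE (ν+1) x) := by
    intro x hx
    have hx0 : (0:ℝ) < x := hx
    have hgint : IntegrableOn (fun t : ℝ => Real.exp (-(x*t)) * t ^ (-(ν+1))) (Ioi (1:ℝ)) :=
      int_g hx0
    have hgnn : 0 ≤ᵐ[volume.restrict (Ioi (1:ℝ))]
        fun t : ℝ => Real.exp (-(x*t)) * t ^ (-(ν+1)) := by
      filter_upwards [ae_restrict_mem measurableSet_Ioi] with t ht
      have ht0 : (0:ℝ) < t := lt_trans one_pos ht
      positivity
    have h5 : ENNReal.ofReal (expE (ν+1) x)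
        = ∫⁻ t in Ioi (1:ℝ), ENNReal.ofReal (Real.exp (-(x*t)) * t ^ (-(ν+1))) :=
      MeasureTheory.ofReal_integral_eq_lintegral_ofReal hgint hgnn
    rw [ENNReal.ofReal_mul (Real.rpow_nonneg hx0.le a), h5,
      ← MeasureTheory.lintegral_const_mul' _ _ ENNReal.ofReal_ne_top]
    refine setLIntegral_congr_fun measurableSet_Ioi (fun t ht => ?_) |>.symm
    rw [← ENNReal.ofReal_mul (Real.rpow_nonneg hx0.le a)]
  have hL : (∫⁻ x in Ioi (0:ℝ), ENNReal.ofReal (x ^ a * expE (ν+1) x))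
      = ENNReal.ofReal (Real.Gamma (a+1) / (a + ν + 1)) := by
    rw [setLIntegral_congr_fun measurableSet_Ioi
      (fun x hx => (hEq0 x hx).symm), hswap,
      setLIntegral_congr_fun measurableSet_Ioi hinner, houter]
  have hexpE : AEStronglyMeasurable (fun x : ℝ => expE (ν+1) x)
      (volume.restrict (Ioi (0:ℝ))) := by
    have : AEStronglyMeasurable (fun z : ℝ×ℝ => Real.exp (-(z.1*z.2)) * z.2 ^ (-(ν+1)))
        ((volume.restrict (Ioi (0:ℝ))).prod (volume.restrict (Ioi (1:ℝ)))) := by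
      rw [Measure.prod_restrict]
      refine ContinuousOn.aestronglyMeasurable (fun z hz => ?_)
        (measurableSet_Ioi.prod measurableSet_Ioi)
      have hz2 : (0:ℝ) < z.2 := lt_trans one_pos hz.2
      exact (((Real.continuous_exp.continuousAt).comp
        ((continuousAt_fst.mul continuousAt_snd).neg)).mul
        ((Real.continuousAt_rpow_const z.2 _ (Or.inl hz2.ne')).comp
          continuousAt_snd)).continuousWithinAt
    exact this.integral_prod_right'
  have hh : AEStronglyMeasurable (fun x : ℝ => x ^ a * expE (ν+1) x)
      (volume.restrict (Ioi (0:ℝ))) := (aesm_rpow a).mul hexpE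
  have hnn : 0 ≤ᵐ[volume.restrict (Ioi (0:ℝ))] fun x : ℝ => x ^ a * expE (ν+1) x := by
    filter_upwards [ae_restrict_mem measurableSet_Ioi] with x hx
    have hx0 : (0:ℝ) < x := hx
    exact mul_nonneg (Real.rpow_nonneg hx0.le a) expE_nonneg
  constructor
  · refine ⟨hh, ?_⟩
    rw [hasFiniteIntegral_iff_ofReal hnn, hL]
    exact ENNReal.ofReal_lt_top
  · rw [MeasureTheory.integral_eq_lintegral_of_nonneg_ae hnn hh, hL,
      ENNReal.toReal_ofReal (le_of_lt (div_pos hGpos h2))]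

/- ==================  the combinatorial identity  ================== -/

lemma keyProd (α : ℝ) (N j k : ℕ) (hj : j ≤ N) :
    Dfall j ((N : ℝ) + α) * ∏ s ∈ Finset.range (N-j+k), (α+1+(s:ℝ))
      = (∏ s ∈ Finset.range N, (α+1+(s:ℝ)))
        * ∏ s ∈ Finset.range k, (α+1+((N-j:ℕ):ℝ)+(s:ℝ)) := by
  have h1 : (∏ s ∈ Finset.range (N-j+k), (α+1+(s:ℝ)))
      = (∏ s ∈ Finset.range (N-j), (α+1+(s:ℝ)))
        * ∏ s ∈ Finset.range k, (α+1+((N-j:ℕ):ℝ)+(s:ℝ)) := by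
    rw [Finset.prod_range_add]
    congr 1
    refine Finset.prod_congr rfl fun s _ => ?_
    push_cast
    ring
  have h2 : Dfall j ((N : ℝ) + α) = ∏ s ∈ Finset.range j, (α+1+((N-j:ℕ):ℝ)+(s:ℝ)) := by
    rw [Dfall, ← Finset.prod_range_reflect (fun s => α+1+((N-j:ℕ):ℝ)+(s:ℝ)) j]
    refine Finset.prod_congr rfl fun s hs => ?_
    have hs' : s < j := Finset.mem_range.mp hs
    rw [Nat.sub_sub, Nat.cast_sub (by omega : 1+s ≤ j), Nat.cast_sub hj]
    push_cast
    ring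
  have h3 : (∏ s ∈ Finset.range N, (α+1+(s:ℝ)))
      = (∏ s ∈ Finset.range (N-j), (α+1+(s:ℝ)))
        * ∏ s ∈ Finset.range j, (α+1+((N-j:ℕ):ℝ)+(s:ℝ)) := by
    rw [show N = (N-j) + j by omega, Finset.prod_range_add]
    congr 1
    · rw [show (N-j)+j - j = N - j by omega]
    refine Finset.prod_congr rfl fun s _ => ?_
    rw [show (N-j)+j - j = N - j by omega]
    push_cast
    ring
  rw [h1, h2, h3]
  ring

lemma prod_shift_neg (S : Finset ℕ) (g : ℕ → ℝ) :
    ∏ t ∈ S, (-(g t)) = (-1:ℝ)^S.card * ∏ t ∈ S, g t := by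
  rw [← Finset.prod_const (-1:ℝ), ← Finset.prod_mul_distrib]
  exact Finset.prod_congr rfl fun t _ => by ring

lemma algMaster (N k : ℕ) (α : ℝ) (hα : -1 < α) (S : Finset ℕ) (c : ℕ → ℝ)
    (hdeg : S.card + k < N) :
    ∑ j ∈ Finset.range (N+1), ((∏ t ∈ S, (c t + ((N-j:ℕ):ℝ))) * lagC N α j)
      * Real.Gamma (((N-j:ℕ):ℝ) + ((k:ℝ)+α) + 1) = 0 := by
  set p : Polynomial ℝ := (∏ t ∈ S, (X - C (c t + (N:ℝ))))
      * ∏ s ∈ Finset.range k, (X - C (α+1+(N:ℝ)+(s:ℝ))) with hpdef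
  have hm1 : (∏ t ∈ S, (X - C (c t + (N:ℝ)))).Monic :=
    monic_prod_of_monic _ _ fun _ _ => monic_X_sub_C _
  have hm2 : (∏ s ∈ Finset.range k, (X - C (α+1+(N:ℝ)+(s:ℝ)))).Monic :=
    monic_prod_of_monic _ _ fun _ _ => monic_X_sub_C _
  have hmon : p.Monic := hm1.mul hm2
  have hnd : p.natDegree = S.card + k := by
    rw [hpdef, Polynomial.natDegree_mul hm1.ne_zero hm2.ne_zero,
      Polynomial.natDegree_prod_of_monic _ _ (fun _ _ => monic_X_sub_C _),
      Polynomial.natDegree_prod_of_monic _ _ (fun _ _ => monic_X_sub_C _)]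
    simp only [Polynomial.natDegree_X_sub_C, Finset.sum_const, Finset.card_range,
      smul_eq_mul, mul_one]
  have hdlt : p.degree < (N : WithBot ℕ) := by
    rw [Polynomial.degree_eq_natDegree hmon.ne_zero, hnd]
    exact_mod_cast hdeg
  have hfd := findiff N p hdlt
  have hterm : ∀ j ∈ Finset.range (N+1),
      ((∏ t ∈ S, (c t + ((N-j:ℕ):ℝ))) * lagC N α j)
        * Real.Gamma (((N-j:ℕ):ℝ) + ((k:ℝ)+α) + 1)
      = ((-1:ℝ)^N * (-1:ℝ)^(S.card) * (-1:ℝ)^k * Real.Gamma (α+1)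
          * (∏ s ∈ Finset.range N, (α+1+(s:ℝ))) / (N.factorial : ℝ))
        * ((-1:ℝ)^j * (N.choose j) * p.eval (j:ℝ)) := by
    intro j hj
    have hjN : j ≤ N := Finset.mem_range_succ_iff.mp hj
    have hcastΓ : ((N-j:ℕ):ℝ) + ((k:ℝ)+α) + 1 = α + 1 + ((N-j+k:ℕ):ℝ) := by
      push_cast
      ring
    have hkey := keyProd α N j k hjN
    have hS : (∏ t ∈ S, (c t + ((N-j:ℕ):ℝ)))
        = (-1:ℝ)^S.card * Polynomial.eval (j:ℝ) (∏ t ∈ S, (X - C (c t + (N:ℝ)))) := by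
      rw [Polynomial.eval_prod, ← prod_shift_neg]
      refine Finset.prod_congr rfl fun t _ => ?_
      rw [Nat.cast_sub hjN]
      simp only [Polynomial.eval_sub, Polynomial.eval_X, Polynomial.eval_C]
      ring
    have hQ : (∏ s ∈ Finset.range k, (α+1+((N-j:ℕ):ℝ)+(s:ℝ)))
        = (-1:ℝ)^k * Polynomial.eval (j:ℝ)
            (∏ s ∈ Finset.range k, (X - C (α+1+(N:ℝ)+(s:ℝ)))) := by
      have hps := prod_shift_neg (Finset.range k)
        (fun s => Polynomial.eval (j:ℝ) (X - C (α+1+(N:ℝ)+(s:ℝ))))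
      rw [Finset.card_range] at hps
      rw [Polynomial.eval_prod, ← hps]
      refine Finset.prod_congr rfl fun s _ => ?_
      rw [Nat.cast_sub hjN]
      simp only [Polynomial.eval_sub, Polynomial.eval_X, Polynomial.eval_C]
      ring
    rw [hcastΓ, GammaP α hα, hpdef, Polynomial.eval_mul, lagC, hS]
    have : Dfall j ((N : ℝ) + α) * (∏ s ∈ Finset.range (N-j+k), (α+1+(s:ℝ)))
        = (∏ s ∈ Finset.range N, (α+1+(s:ℝ)))
          * ((-1:ℝ)^k * Polynomial.eval (j:ℝ)
            (∏ s ∈ Finset.range k, (X - C (α+1+(N:ℝ)+(s:ℝ))))) := by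
      rw [← hQ]; exact hkey
    linear_combination ((-1:ℝ)^S.card * Polynomial.eval (j:ℝ) (∏ t ∈ S, (X - C (c t + (N:ℝ))))
      * (-1:ℝ)^(N+j) * (N.choose j) * Real.Gamma (α+1) / (N.factorial : ℝ)) * this
  rw [Finset.sum_congr rfl hterm, ← Finset.mul_sum, hfd, mul_zero]

/- ======================  Main theorem  ====================== -/

/-- For `n ≥ m+1`: `d/dx[x^{α+ν} P_{n,m}^{α,ν}] = c x^{α+ν-1} P_{n-1,m+1}^{α,ν-1}` with `c ≠ 0`;
equivalently `P_{n,m}` satisfies the type II orthogonality conditions. -/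
theorem PII_reduction_and_orthogonality (n m : ℕ) (hnm : m + 1 ≤ n) (α ν : ℝ)
    (hα : -1 < α) (hαν : -1 < α + ν) (hν : ∀ k : ℤ, k ≤ -1 → ν ≠ (k : ℝ)) :
    (∃ c : ℝ, c ≠ 0 ∧ ∀ x : ℝ, 0 < x →
        HasDerivAt (fun y => y ^ (α + ν) * PII n m α ν y)
          (c * x ^ (α + ν - 1) * PII (n - 1) (m + 1) α (ν - 1) x) x) ∧
    (∀ k : ℕ, k < n →
      ∫ x in Ioi (0:ℝ), PII n m α ν x * Real.exp (-x) * x ^ ((k : ℝ) + α) = 0) ∧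
    (∀ k : ℕ, k < m →
      ∫ x in Ioi (0:ℝ), PII n m α ν x * expE (ν + 1) x * x ^ ((k : ℝ) + α) = 0) := by
  refine ⟨⟨1, one_ne_zero, fun x hx => ?_⟩, fun k hk => ?_, fun k hk => ?_⟩
  · -- Part 1: the derivative identity with c = 1
    have hb : HasDerivAt (fun y : ℝ => ∑ j ∈ Finset.range (n+m+1),
        (Dfall m ((m:ℝ)+α+ν+((n+m-j:ℕ):ℝ)) * lagC (n+m) α j) * y ^ (α+ν+((n+m-j:ℕ):ℝ)))
        (∑ j ∈ Finset.range (n+m+1),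
        (Dfall m ((m:ℝ)+α+ν+((n+m-j:ℕ):ℝ)) * lagC (n+m) α j)
          * ((α+ν+((n+m-j:ℕ):ℝ)) * x ^ (α+ν+((n+m-j:ℕ):ℝ)-1))) x :=
      HasDerivAt.fun_sum fun j _ =>
        (Real.hasDerivAt_rpow_const (Or.inl hx.ne')).const_mul _
    have hev : (fun y : ℝ => y ^ (α + ν) * PII n m α ν y) =ᶠ[nhds x]
        (fun y : ℝ => ∑ j ∈ Finset.range (n+m+1),
        (Dfall m ((m:ℝ)+α+ν+((n+m-j:ℕ):ℝ)) * lagC (n+m) α j) * y ^ (α+ν+((n+m-j:ℕ):ℝ))) := by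
      refine Filter.eventuallyEq_of_mem (Ioi_mem_nhds hx) (fun y hy => ?_)
      have hy0 : (0:ℝ) < y := hy
      rw [PIIEq n m α ν hy0, Finset.mul_sum]
      refine Finset.sum_congr rfl fun j hj => ?_
      rw [Real.rpow_add hy0 (α+ν) (((n+m-j:ℕ)):ℝ)]
      ring
    have hd := hb.congr_of_eventuallyEq hev
    refine hd.congr_deriv (Eq.symm ?_)
    rw [one_mul, PIIEq (n-1) (m+1) α (ν-1) hx, show n - 1 + (m + 1) = n + m by omega,
      Finset.mul_sum]
    refine Finset.sum_congr rfl fun j hj => ?_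
    rw [show (((m+1:ℕ)):ℝ)+α+(ν-1) = (m:ℝ)+α+ν by push_cast; ring, Dfall_succ,
      show α+ν+((n+m-j:ℕ):ℝ)-1 = (α+ν-1)+((n+m-j:ℕ):ℝ) by ring, Real.rpow_add hx]
    ring
  · -- Part 2: orthogonality against e^{-x} x^{k+α}
    have hEq : Set.EqOn (fun x : ℝ => PII n m α ν x * Real.exp (-x) * x ^ ((k:ℝ)+α))
        (fun x : ℝ => ∑ j ∈ Finset.range (n+m+1),
          (Dfall m ((m:ℝ)+α+ν+((n+m-j:ℕ):ℝ)) * lagC (n+m) α j)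
            * (Real.exp (-x) * x ^ ((((n+m-j:ℕ):ℝ) + ((k:ℝ)+α) + 1) - 1))) (Ioi 0) := by
      intro x hx
      have hx0 : (0:ℝ) < x := hx
      simp only
      rw [PIIEq n m α ν hx0, Finset.sum_mul, Finset.sum_mul]
      refine Finset.sum_congr rfl fun j hj => ?_
      rw [show (((n+m-j:ℕ):ℝ) + ((k:ℝ)+α) + 1) - 1 = ((n+m-j:ℕ):ℝ) + ((k:ℝ)+α) by ring,
        Real.rpow_add hx0 (((n+m-j:ℕ)):ℝ) ((k:ℝ)+α)]
      ring
    have hspos : ∀ j : ℕ, (0:ℝ) < ((n+m-j:ℕ):ℝ) + ((k:ℝ)+α) + 1 := by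
      intro j
      have h0 : (0:ℝ) ≤ ((n+m-j:ℕ):ℝ) := Nat.cast_nonneg _
      have h1 : (0:ℝ) ≤ (k:ℝ) := Nat.cast_nonneg _
      linarith
    rw [setIntegral_congr_fun measurableSet_Ioi hEq,
      integral_finset_sum _ (fun j _ =>
        (Real.GammaIntegral_convergent (hspos j)).const_mul _)]
    have hval : ∀ j ∈ Finset.range (n+m+1),
        (∫ x in Ioi (0:ℝ), (Dfall m ((m:ℝ)+α+ν+((n+m-j:ℕ):ℝ)) * lagC (n+m) α j)
          * (Real.exp (-x) * x ^ ((((n+m-j:ℕ):ℝ) + ((k:ℝ)+α) + 1) - 1)))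
        = (Dfall m ((m:ℝ)+α+ν+((n+m-j:ℕ):ℝ)) * lagC (n+m) α j)
            * Real.Gamma (((n+m-j:ℕ):ℝ) + ((k:ℝ)+α) + 1) := by
      intro j _
      rw [integral_const_mul, ← Real.Gamma_eq_integral (hspos j)]
    rw [Finset.sum_congr rfl hval]
    have halg := algMaster (n+m) k α hα (Finset.range m) (fun t => ((m:ℝ)+α+ν) - t)
      (by rw [Finset.card_range]; omega)
    rw [← halg]
    refine Finset.sum_congr rfl fun j hj => ?_
    congr 2
    rw [Dfall]
    exact Finset.prod_congr rfl fun t _ => by ring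
  · -- Part 3: orthogonality against E_{ν+1}(x) x^{k+α}
    have ha1 : ∀ j : ℕ, (-1:ℝ) < ((n+m-j:ℕ):ℝ) + ((k:ℝ)+α) := by
      intro j
      have h0 : (0:ℝ) ≤ ((n+m-j:ℕ):ℝ) := Nat.cast_nonneg _
      have h1 : (0:ℝ) ≤ (k:ℝ) := Nat.cast_nonneg _
      linarith
    have ha2 : ∀ j : ℕ, (0:ℝ) < (((n+m-j:ℕ):ℝ) + ((k:ℝ)+α)) + ν + 1 := by
      intro j
      have h0 : (0:ℝ) ≤ ((n+m-j:ℕ):ℝ) := Nat.cast_nonneg _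
      have h1 : (0:ℝ) ≤ (k:ℝ) := Nat.cast_nonneg _
      linarith
    have hEq : Set.EqOn (fun x : ℝ => PII n m α ν x * expE (ν + 1) x * x ^ ((k:ℝ)+α))
        (fun x : ℝ => ∑ j ∈ Finset.range (n+m+1),
          (Dfall m ((m:ℝ)+α+ν+((n+m-j:ℕ):ℝ)) * lagC (n+m) α j)
            * (x ^ (((n+m-j:ℕ):ℝ) + ((k:ℝ)+α)) * expE (ν+1) x)) (Ioi 0) := by
      intro x hx
      have hx0 : (0:ℝ) < x := hx
      simp only
      rw [PIIEq n m α ν hx0, Finset.sum_mul, Finset.sum_mul]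
      refine Finset.sum_congr rfl fun j hj => ?_
      rw [Real.rpow_add hx0 (((n+m-j:ℕ)):ℝ) ((k:ℝ)+α)]
      ring
    rw [setIntegral_congr_fun measurableSet_Ioi hEq,
      integral_finset_sum _ (fun j _ =>
        ((expE_integral ν _ (ha1 j) (ha2 j)).1.const_mul _))]
    have hval : ∀ j ∈ Finset.range (n+m+1),
        (∫ x in Ioi (0:ℝ), (Dfall m ((m:ℝ)+α+ν+((n+m-j:ℕ):ℝ)) * lagC (n+m) α j)
          * (x ^ (((n+m-j:ℕ):ℝ) + ((k:ℝ)+α)) * expE (ν+1) x))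
        = (Dfall m ((m:ℝ)+α+ν+((n+m-j:ℕ):ℝ)) * lagC (n+m) α j)
            * (Real.Gamma ((((n+m-j:ℕ):ℝ) + ((k:ℝ)+α)) + 1)
              / ((((n+m-j:ℕ):ℝ) + ((k:ℝ)+α)) + ν + 1)) := by
      intro j _
      rw [integral_const_mul, (expE_integral ν _ (ha1 j) (ha2 j)).2]
    rw [Finset.sum_congr rfl hval]
    have hmem : (m - k - 1) ∈ Finset.range m := Finset.mem_range.mpr (by omega)
    have halg := algMaster (n+m) k α hα ((Finset.range m).erase (m-k-1))
      (fun t => ((m:ℝ)+α+ν) - t)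
      (by rw [Finset.card_erase_of_mem hmem, Finset.card_range]; omega)
    rw [← halg]
    refine Finset.sum_congr rfl fun j hj => ?_
    have hsplit : Dfall m ((m:ℝ)+α+ν+((n+m-j:ℕ):ℝ))
        = ((((n+m-j:ℕ):ℝ) + ((k:ℝ)+α)) + ν + 1)
          * ∏ t ∈ (Finset.range m).erase (m-k-1), (((m:ℝ)+α+ν) - t + ((n+m-j:ℕ):ℝ)) := by
      rw [Dfall, ← Finset.mul_prod_erase _ _ hmem]
      have hc : ((m:ℝ)+α+ν+((n+m-j:ℕ):ℝ)) - ((m-k-1:ℕ):ℝ)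
          = (((n+m-j:ℕ):ℝ) + ((k:ℝ)+α)) + ν + 1 := by
        rw [show ((m-k-1:ℕ):ℝ) = (m:ℝ) - (k:ℝ) - 1 by
          rw [Nat.sub_sub, Nat.cast_sub (by omega : k+1 ≤ m)]; push_cast; ring]
        ring
      rw [hc]
      congr 1
      exact Finset.prod_congr rfl fun t _ => by ring
    rw [hsplit]
    have hne : ((((n+m-j:ℕ):ℝ) + ((k:ℝ)+α)) + ν + 1) ≠ 0 := ne_of_gt (ha2 j)
    field_simp
end

section
/- The cubic equation z²S³ − z²S² + q₁ zS + q₂ = 0 with q₁+q₂ = 1, 0 ≤ q₂ ≤ q₁ ≤ 1, has exactly one solution branch S(z) (holomorphic near ∞ on ℂ∖[0,c]) satisfying z S(z) → 1 as z → ∞; its two other branches satisfy z S(z) → ∞ and z S(z) → (q₁−q₂−1)/2 respectively. -/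
open Filter Metric
open scoped NNReal

section CB

lemma cb_lip (a b z u v : ℂ) (ha : ‖a‖ ≤ 1) (hb : ‖b‖ ≤ 1) (hab : 1 ≤ ‖a - b‖)
    (hz : 200 ≤ ‖z‖) (hu : u ∈ closedBall a (1/2)) (hv : v ∈ closedBall a (1/2)) :
    ‖(a + u^3/(z*(u-b))) - (a + v^3/(z*(v-b)))‖ ≤ (27/100) * ‖u - v‖ := by
  have hu' : ‖u - a‖ ≤ 1/2 := by simpa [mem_closedBall, dist_eq_norm] using hu
  have hv' : ‖v - a‖ ≤ 1/2 := by simpa [mem_closedBall, dist_eq_norm] using hv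
  have hun : ‖u‖ ≤ 3/2 := by
    calc ‖u‖ = ‖(u - a) + a‖ := by ring_nf
    _ ≤ ‖u - a‖ + ‖a‖ := norm_add_le _ _
    _ ≤ 3/2 := by linarith
  have hvn : ‖v‖ ≤ 3/2 := by
    calc ‖v‖ = ‖(v - a) + a‖ := by ring_nf
    _ ≤ ‖v - a‖ + ‖a‖ := norm_add_le _ _
    _ ≤ 3/2 := by linarith
  have hub : (1:ℝ)/2 ≤ ‖u - b‖ := by
    have h1 : ‖a - b‖ ≤ ‖a - u‖ + ‖u - b‖ := by simpa using norm_add_le (a - u) (u - b)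
    have h2 : ‖a - u‖ = ‖u - a‖ := norm_sub_rev _ _
    linarith
  have hvb : (1:ℝ)/2 ≤ ‖v - b‖ := by
    have h1 : ‖a - b‖ ≤ ‖a - v‖ + ‖v - b‖ := by simpa using norm_add_le (a - v) (v - b)
    have h2 : ‖a - v‖ = ‖v - a‖ := norm_sub_rev _ _
    linarith
  have hz0 : z ≠ 0 := by intro h; rw [h] at hz; simp at hz; linarith
  have hub0 : u - b ≠ 0 := by intro h; rw [h] at hub; simp at hub; linarith
  have hvb0 : v - b ≠ 0 := by intro h; rw [h] at hvb; simp at hvb; linarith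
  have hid : (a + u^3/(z*(u-b))) - (a + v^3/(z*(v-b)))
      = ((u - v) * (u*v*(u+v) - b*(u^2+u*v+v^2))) / (z*(u-b)*(v-b)) := by
    field_simp
    ring
  rw [hid]
  have hN : ‖u*v*(u+v) - b*(u^2+u*v+v^2)‖ ≤ 27/2 := by
    have h1 : ‖u*v*(u+v)‖ ≤ 27/4 := by
      rw [norm_mul, norm_mul]
      have h := norm_add_le u v
      have huv : ‖u‖ * ‖v‖ ≤ 9/4 := by nlinarith [norm_nonneg u, norm_nonneg v]
      have hs : ‖u + v‖ ≤ 3 := by linarith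
      nlinarith [norm_nonneg u, norm_nonneg v, norm_nonneg (u+v), mul_nonneg (norm_nonneg u) (norm_nonneg v)]
    have h2 : ‖b*(u^2+u*v+v^2)‖ ≤ 27/4 := by
      rw [norm_mul]
      have h3 : ‖u^2+u*v+v^2‖ ≤ 27/4 := by
        have t1 : ‖u^2+u*v+v^2‖ ≤ ‖u^2+u*v‖ + ‖v^2‖ := norm_add_le _ _
        have t2 : ‖u^2+u*v‖ ≤ ‖u^2‖ + ‖u*v‖ := norm_add_le _ _
        have t3 : ‖u^2‖ = ‖u‖^2 := norm_pow u 2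
        have t4 : ‖v^2‖ = ‖v‖^2 := norm_pow v 2
        have t5 : ‖u*v‖ = ‖u‖*‖v‖ := norm_mul u v
        nlinarith [norm_nonneg u, norm_nonneg v]
      nlinarith [norm_nonneg (u^2+u*v+v^2), norm_nonneg b]
    calc ‖u*v*(u+v) - b*(u^2+u*v+v^2)‖ ≤ ‖u*v*(u+v)‖ + ‖b*(u^2+u*v+v^2)‖ := norm_sub_le _ _
    _ ≤ 27/2 := by linarith
  have hD : (50:ℝ) ≤ ‖z*(u-b)*(v-b)‖ := by
    rw [norm_mul, norm_mul]
    have t : (1:ℝ)/4 ≤ ‖u-b‖ * ‖v-b‖ := by nlinarith [norm_nonneg (u-b), norm_nonneg (v-b)]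
    calc (50:ℝ) = 200 * (1/4) := by norm_num
    _ ≤ ‖z‖ * (‖u-b‖ * ‖v-b‖) := by
        apply mul_le_mul hz t (by norm_num) (norm_nonneg z)
    _ = ‖z‖ * ‖u-b‖ * ‖v-b‖ := by ring
  rw [norm_div, norm_mul]
  have hD0 : (0:ℝ) < ‖z*(u-b)*(v-b)‖ := by linarith
  calc ‖u-v‖ * ‖u*v*(u+v) - b*(u^2+u*v+v^2)‖ / ‖z*(u-b)*(v-b)‖
      ≤ ‖u-v‖ * (27/2) / 50 := by
        gcongr
  _ = 27/100 * ‖u-v‖ := by ring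

lemma cb_key (a b z : ℂ) (ha : ‖a‖ ≤ 1) (hb : ‖b‖ ≤ 1) (hab : 1 ≤ ‖a - b‖)
    (hz : 200 ≤ ‖z‖) :
    ∃! u, u ∈ closedBall a (1/2) ∧ u ^ 3 = z * (u - a) * (u - b) := by
  have hz0 : z ≠ 0 := by intro h; rw [h] at hz; simp at hz; linarith
  have hball : ∀ u ∈ closedBall a (1/2), ‖u‖ ≤ 3/2 ∧ (1:ℝ)/2 ≤ ‖u - b‖ := by
    intro u hu
    have hu' : ‖u - a‖ ≤ 1/2 := by simpa [mem_closedBall, dist_eq_norm] using hu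
    constructor
    · calc ‖u‖ = ‖(u - a) + a‖ := by ring_nf
      _ ≤ ‖u - a‖ + ‖a‖ := norm_add_le _ _
      _ ≤ 3/2 := by linarith
    · have h1 : ‖a - b‖ ≤ ‖a - u‖ + ‖u - b‖ := by simpa using norm_add_le (a - u) (u - b)
      have h2 : ‖a - u‖ = ‖u - a‖ := norm_sub_rev _ _
      linarith
  have hub0 : ∀ u ∈ closedBall a (1/2), u - b ≠ 0 := by
    intro u hu h
    have := (hball u hu).2
    rw [h] at this; simp at this; linarith
  -- the fixed point equation is equivalent to the root equation
  have hequiv : ∀ u ∈ closedBall a (1/2),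
      (a + u^3/(z*(u-b)) = u ↔ u ^ 3 = z * (u - a) * (u - b)) := by
    intro u hu
    have h0 := hub0 u hu
    have hzb : z * (u - b) ≠ 0 := mul_ne_zero hz0 h0
    constructor
    · intro h
      have h2 : u^3/(z*(u-b)) = u - a := by linear_combination h
      rw [div_eq_iff hzb] at h2
      linear_combination h2
    · intro h
      have h2 : u^3/(z*(u-b)) = u - a := by
        rw [div_eq_iff hzb]; linear_combination h
      linear_combination h2
  -- maps into the ball
  have hmaps : ∀ u ∈ closedBall a (1/2), a + u^3/(z*(u-b)) ∈ closedBall a (1/2) := by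
    intro u hu
    obtain ⟨hun, hub⟩ := hball u hu
    rw [mem_closedBall, dist_eq_norm]
    have : ‖a + u^3/(z*(u-b)) - a‖ = ‖u‖^3 / (‖z‖ * ‖u-b‖) := by
      rw [show a + u^3/(z*(u-b)) - a = u^3/(z*(u-b)) by ring, norm_div, norm_mul, norm_pow]
    rw [this]
    have h1 : ‖u‖^3 ≤ 27/8 := by nlinarith [norm_nonneg u, mul_nonneg (norm_nonneg u) (norm_nonneg u)]
    have h2 : (100:ℝ) ≤ ‖z‖ * ‖u-b‖ := by nlinarith [norm_nonneg z]
    have h3 : ‖u‖^3 / (‖z‖ * ‖u-b‖) ≤ (27/8) / 100 :=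
      div_le_div₀ (by norm_num) h1 (by norm_num) h2
    linarith
  -- the set with subspace structure
  haveI : Nonempty (closedBall a (1/2) : Set ℂ) := ⟨a, mem_closedBall_self (by norm_num)⟩
  haveI : CompleteSpace (closedBall a (1/2) : Set ℂ) :=
    (isClosed_closedBall : IsClosed (closedBall a (1/2) : Set ℂ)).completeSpace_coe
  set g : (closedBall a (1/2) : Set ℂ) → (closedBall a (1/2) : Set ℂ) :=
    fun u => ⟨a + (u:ℂ)^3/(z*((u:ℂ)-b)), hmaps u u.2⟩ with hg
  have hcontr : ContractingWith (27/100) g := by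
    constructor
    · rw [← NNReal.coe_lt_coe]; push_cast; norm_num
    · apply LipschitzWith.of_dist_le_mul
      intro x y
      simp only [Subtype.dist_eq, dist_eq_norm]
      have h := cb_lip a b z (x:ℂ) (y:ℂ) ha hb hab hz x.2 y.2
      have hK : ((27/100 : ℝ≥0) : ℝ) = 27/100 := by push_cast; norm_num
      rw [hK]
      simpa [hg] using h
  obtain ⟨u, hu⟩ : ∃ u : (closedBall a (1/2) : Set ℂ), g u = u :=
    ⟨hcontr.fixedPoint g, hcontr.fixedPoint_isFixedPt⟩
  refine ⟨u, ⟨u.2, ?_⟩, ?_⟩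
  · exact (hequiv u u.2).mp (by exact_mod_cast congrArg Subtype.val hu)
  · rintro v ⟨hvmem, hveq⟩
    have hufix : a + (u:ℂ)^3/(z*((u:ℂ)-b)) = u := by exact_mod_cast congrArg Subtype.val hu
    have hvfix : a + v^3/(z*(v-b)) = v := (hequiv v hvmem).mpr hveq
    have hd := cb_lip a b z v u ha hb hab hz hvmem u.2
    rw [hvfix, hufix] at hd
    have : ‖v - (u:ℂ)‖ = 0 := by nlinarith [norm_nonneg (v - (u:ℂ))]
    have := norm_eq_zero.mp this
    exact sub_eq_zero.mp this

lemma cb_bound (a b z u : ℂ) (ha : ‖a‖ ≤ 1) (hab : 1 ≤ ‖a - b‖) (hz : 200 ≤ ‖z‖)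
    (hu : u ∈ closedBall a (1/2)) (heq : u ^ 3 = z * (u - a) * (u - b)) :
    ‖u - a‖ ≤ 7 / ‖z‖ := by
  have hu' : ‖u - a‖ ≤ 1/2 := by simpa [mem_closedBall, dist_eq_norm] using hu
  have hun : ‖u‖ ≤ 3/2 := by
    calc ‖u‖ = ‖(u - a) + a‖ := by ring_nf
    _ ≤ ‖u - a‖ + ‖a‖ := norm_add_le _ _
    _ ≤ 3/2 := by linarith
  have hub : (1:ℝ)/2 ≤ ‖u - b‖ := by
    have h1 : ‖a - b‖ ≤ ‖a - u‖ + ‖u - b‖ := by simpa using norm_add_le (a - u) (u - b)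
    have h2 : ‖a - u‖ = ‖u - a‖ := norm_sub_rev _ _
    linarith
  have hz0 : (0:ℝ) < ‖z‖ := by linarith
  have hkey : ‖u‖^3 = ‖z‖ * ‖u - a‖ * ‖u - b‖ := by
    rw [← norm_pow, heq, norm_mul, norm_mul]
  have hc : ‖u‖^3 ≤ 27/8 := by
    nlinarith [norm_nonneg u, mul_nonneg (norm_nonneg u) (norm_nonneg u)]
  have hp : ‖z‖ * ‖u - a‖ * (1/2) ≤ ‖z‖ * ‖u - a‖ * ‖u - b‖ := by
    have hzz : (0:ℝ) ≤ ‖z‖ * ‖u - a‖ := mul_nonneg hz0.le (norm_nonneg _)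
    nlinarith
  have h1 : ‖z‖ * ‖u - a‖ * (1/2) ≤ 27/8 := by
    rw [← hkey] at hp; linarith
  rw [div_eq_mul_inv, ← mul_le_mul_iff_of_pos_right hz0, mul_assoc, inv_mul_cancel₀ (ne_of_gt hz0), mul_one]
  nlinarith

noncomputable def cbRoot (a b z : ℂ) : ℂ :=
  if h : ‖a‖ ≤ 1 ∧ ‖b‖ ≤ 1 ∧ 1 ≤ ‖a - b‖ ∧ 200 ≤ ‖z‖ then
    (cb_key a b z h.1 h.2.1 h.2.2.1 h.2.2.2).exists.choose else 1

lemma cbRoot_spec (a b z : ℂ) (ha : ‖a‖ ≤ 1) (hb : ‖b‖ ≤ 1) (hab : 1 ≤ ‖a - b‖)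
    (hz : 200 ≤ ‖z‖) :
    cbRoot a b z ∈ closedBall a (1/2) ∧
      (cbRoot a b z) ^ 3 = z * (cbRoot a b z - a) * (cbRoot a b z - b) := by
  rw [cbRoot, dif_pos ⟨ha, hb, hab, hz⟩]
  exact (cb_key a b z ha hb hab hz).exists.choose_spec

lemma cbRoot_unique (a b z u : ℂ) (ha : ‖a‖ ≤ 1) (hb : ‖b‖ ≤ 1) (hab : 1 ≤ ‖a - b‖)
    (hz : 200 ≤ ‖z‖) (hu : u ∈ closedBall a (1/2))
    (he : u ^ 3 = z * (u - a) * (u - b)) : u = cbRoot a b z :=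
  (cb_key a b z ha hb hab hz).unique ⟨hu, he⟩ (cbRoot_spec a b z ha hb hab hz)

end CB

open Filter

/-- The cubic `z²S³ − z²S² + q₁zS + q₂ = 0` (with `q₁+q₂ = 1`, `0 ≤ q₂ ≤ q₁ ≤ 1`) has, near `∞`,
three solution branches: exactly one branch `S₂` with `zS₂(z) → 1`, while the other two satisfy
`zS₀(z) → ∞` and `zS₁(z) → (q₁−q₂−1)/2`. -/
theorem cubic_branches (q₁ q₂ : ℝ) (hq₂ : 0 ≤ q₂) (hq : q₂ ≤ q₁) (hq₁ : q₁ ≤ 1)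
    (hsum : q₁ + q₂ = 1) :
    ∃ R : ℝ, 0 < R ∧ ∃ S₀ S₁ S₂ : ℂ → ℂ,
      (∀ z : ℂ, R < ‖z‖ → ∀ w : ℂ,
        z ^ 2 * w ^ 3 - z ^ 2 * w ^ 2 + (q₁ : ℂ) * z * w + (q₂ : ℂ) = 0 ↔
          w = S₀ z ∨ w = S₁ z ∨ w = S₂ z) ∧
      Tendsto (fun z => ‖z * S₀ z‖) (Bornology.cobounded ℂ) atTop ∧
      Tendsto (fun z => z * S₁ z) (Bornology.cobounded ℂ)
        (nhds (((q₁ - q₂ - 1) / 2 : ℝ) : ℂ)) ∧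
      Tendsto (fun z => z * S₂ z) (Bornology.cobounded ℂ) (nhds 1) ∧
      (∀ S : ℂ → ℂ, ContinuousOn S {z : ℂ | R < ‖z‖} →
        (∀ z : ℂ, R < ‖z‖ →
          z ^ 2 * (S z) ^ 3 - z ^ 2 * (S z) ^ 2 + (q₁ : ℂ) * z * S z + (q₂ : ℂ) = 0) →
        Tendsto (fun z => z * S z) (Bornology.cobounded ℂ) (nhds 1) →
        ∀ᶠ z in Bornology.cobounded ℂ, S z = S₂ z) := by
  classical
  have hq2half : q₂ ≤ 1 := by linarith
  have hq1C : (q₁ : ℂ) = 1 - (q₂ : ℂ) := by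
    have h : q₁ = 1 - q₂ := by linarith
    rw [h]; push_cast; ring
  have h1n : ‖(1:ℂ)‖ ≤ 1 := by simp
  have haQ : ‖(-(q₂:ℂ))‖ ≤ 1 := by
    rw [norm_neg, Complex.norm_real, Real.norm_eq_abs, abs_of_nonneg hq₂]; linarith
  have hcast1 : (1:ℂ) - (-(q₂:ℂ)) = ((1 + q₂ : ℝ) : ℂ) := by push_cast; ring
  have hab1 : 1 ≤ ‖(1:ℂ) - (-(q₂:ℂ))‖ := by
    rw [hcast1, Complex.norm_real, Real.norm_eq_abs, abs_of_nonneg (by linarith)]; linarith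
  have hab2 : 1 ≤ ‖(-(q₂:ℂ)) - 1‖ := by rw [norm_sub_rev]; exact hab1
  set U1 : ℂ → ℂ := fun z => cbRoot (-(q₂:ℂ)) 1 z with hU1def
  set U2 : ℂ → ℂ := fun z => cbRoot 1 (-(q₂:ℂ)) z with hU2def
  have spec1 : ∀ z : ℂ, 200 ≤ ‖z‖ → U1 z ∈ Metric.closedBall (-(q₂:ℂ)) (1/2) ∧
      (U1 z) ^ 3 = z * (U1 z - (-(q₂:ℂ))) * (U1 z - 1) := fun z hz =>
    cbRoot_spec (-(q₂:ℂ)) 1 z haQ h1n hab2 hz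
  have spec2 : ∀ z : ℂ, 200 ≤ ‖z‖ → U2 z ∈ Metric.closedBall (1:ℂ) (1/2) ∧
      (U2 z) ^ 3 = z * (U2 z - 1) * (U2 z - (-(q₂:ℂ))) := fun z hz =>
    cbRoot_spec 1 (-(q₂:ℂ)) z h1n haQ hab1 hz
  have bd1 : ∀ z : ℂ, 200 ≤ ‖z‖ → ‖U1 z - (-(q₂:ℂ))‖ ≤ 7 / ‖z‖ := fun z hz =>
    cb_bound (-(q₂:ℂ)) 1 z (U1 z) haQ hab2 hz (spec1 z hz).1 (spec1 z hz).2
  have bd2 : ∀ z : ℂ, 200 ≤ ‖z‖ → ‖U2 z - 1‖ ≤ 7 / ‖z‖ := fun z hz =>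
    cb_bound 1 (-(q₂:ℂ)) z (U2 z) h1n hab1 hz (spec2 z hz).1 (spec2 z hz).2
  have hdivb : ∀ z : ℂ, 200 ≤ ‖z‖ → (7:ℝ) / ‖z‖ ≤ 7/200 := by
    intro z hz
    apply div_le_div_of_nonneg_left (by norm_num) (by norm_num) hz
  have norm1 : ∀ z : ℂ, 200 ≤ ‖z‖ → ‖U1 z‖ ≤ 3/2 := by
    intro z hz
    have h := (spec1 z hz).1
    rw [Metric.mem_closedBall, dist_eq_norm] at h
    calc ‖U1 z‖ = ‖(U1 z - (-(q₂:ℂ))) + (-(q₂:ℂ))‖ := by ring_nf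
    _ ≤ ‖U1 z - (-(q₂:ℂ))‖ + ‖(-(q₂:ℂ))‖ := norm_add_le _ _
    _ ≤ 3/2 := by linarith
  have norm2 : ∀ z : ℂ, 200 ≤ ‖z‖ → ‖U2 z‖ ≤ 3/2 := by
    intro z hz
    have h := (spec2 z hz).1
    rw [Metric.mem_closedBall, dist_eq_norm] at h
    calc ‖U2 z‖ = ‖(U2 z - 1) + 1‖ := by ring_nf
    _ ≤ ‖U2 z - 1‖ + ‖(1:ℂ)‖ := norm_add_le _ _
    _ ≤ 3/2 := by simp at *; linarith
  -- the factorization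
  have hfact : ∀ z : ℂ, 200 ≤ ‖z‖ → ∀ w : ℂ,
      w^3 - z*w^2 + (q₁:ℂ)*z*w + (q₂:ℂ)*z
        = (w - (z - U1 z - U2 z)) * (w - U1 z) * (w - U2 z) := by
    intro z hz
    obtain ⟨hm1, he1⟩ := spec1 z hz
    obtain ⟨hm2, he2⟩ := spec2 z hz
    have hne : U1 z - U2 z ≠ 0 := by
      intro h
      have e1 : ‖U1 z - (-(q₂:ℂ))‖ ≤ 7/200 := le_trans (bd1 z hz) (hdivb z hz)
      have e2 : ‖U2 z - 1‖ ≤ 7/200 := le_trans (bd2 z hz) (hdivb z hz)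
      have tri : ‖(1:ℂ) - (-(q₂:ℂ))‖
          ≤ ‖(1:ℂ) - U2 z‖ + ‖U2 z - U1 z‖ + ‖U1 z - (-(q₂:ℂ))‖ := by
        calc ‖(1:ℂ) - (-(q₂:ℂ))‖
            = ‖((1:ℂ) - U2 z) + (U2 z - U1 z) + (U1 z - (-(q₂:ℂ)))‖ := by ring_nf
        _ ≤ ‖((1:ℂ) - U2 z) + (U2 z - U1 z)‖ + ‖U1 z - (-(q₂:ℂ))‖ := norm_add_le _ _
        _ ≤ ‖(1:ℂ) - U2 z‖ + ‖U2 z - U1 z‖ + ‖U1 z - (-(q₂:ℂ))‖ := by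
            have := norm_add_le ((1:ℂ) - U2 z) (U2 z - U1 z); linarith
      have hz21 : U2 z - U1 z = 0 := by rw [← neg_sub]; rw [h]; ring
      rw [hz21, norm_zero, norm_sub_rev (1:ℂ) (U2 z)] at tri
      linarith
    have hA : (((1:ℂ) - (q₂:ℂ))*z - ((z - U1 z - U2 z)*(U1 z) + (z - U1 z - U2 z)*(U2 z)
        + (U1 z)*(U2 z))) * (U1 z - U2 z) = 0 := by
      linear_combination he1 - he2
    have hA0 : ((1:ℂ) - (q₂:ℂ))*z - ((z - U1 z - U2 z)*(U1 z) + (z - U1 z - U2 z)*(U2 z)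
        + (U1 z)*(U2 z)) = 0 := by
      rcases mul_eq_zero.mp hA with h | h
      · exact h
      · exact absurd h hne
    have hB0 : (q₂:ℂ)*z + (z - U1 z - U2 z)*(U1 z)*(U2 z) = 0 := by
      linear_combination he1 - (U1 z) * hA0
    intro w
    rw [hq1C]
    linear_combination w * hA0 + hB0
  -- product form of the original cubic
  have hmul : ∀ z : ℂ, 200 ≤ ‖z‖ → ∀ w : ℂ,
      z * (z^2*w^3 - z^2*w^2 + (q₁:ℂ)*z*w + (q₂:ℂ))
        = (z*w - (z - U1 z - U2 z)) * (z*w - U1 z) * (z*w - U2 z) := by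
    intro z hz w
    linear_combination hfact z hz (z*w)
  have hev200 : ∀ᶠ z : ℂ in Bornology.cobounded ℂ, 200 ≤ ‖z‖ :=
    tendsto_norm_cobounded_atTop.eventually_ge_atTop 200
  refine ⟨200, by norm_num, fun z => (z - U1 z - U2 z)/z, fun z => U1 z / z,
    fun z => U2 z / z, ?_, ?_, ?_, ?_, ?_⟩
  · -- the iff
    intro z hz w
    have hz' : 200 ≤ ‖z‖ := hz.le
    have hz0 : z ≠ 0 := by
      intro h; rw [h, norm_zero] at hz; linarith
    constructor
    · intro hcubic
      have h0 : (z*w - (z - U1 z - U2 z)) * (z*w - U1 z) * (z*w - U2 z) = 0 := by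
        rw [← hmul z hz' w, hcubic, mul_zero]
      rcases mul_eq_zero.mp h0 with h | h
      · rcases mul_eq_zero.mp h with h | h
        · left; rw [eq_div_iff hz0]; linear_combination h
        · right; left; rw [eq_div_iff hz0]; linear_combination h
      · right; right; rw [eq_div_iff hz0]; linear_combination h
    · intro h
      have hresolve : ∀ X : ℂ, z * (X / z) = X := fun X => by
        rw [mul_comm]; exact div_mul_cancel₀ X hz0
      rcases h with rfl | rfl | rfl
      · have h := hmul z hz' ((z - U1 z - U2 z)/z)
        rw [hresolve (z - U1 z - U2 z)] at h
        simp only [sub_self, zero_mul, mul_zero] at h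
        exact (mul_eq_zero.mp h).resolve_left hz0
      · have h := hmul z hz' (U1 z / z)
        rw [hresolve (U1 z)] at h
        simp only [sub_self, zero_mul, mul_zero] at h
        exact (mul_eq_zero.mp h).resolve_left hz0
      · have h := hmul z hz' (U2 z / z)
        rw [hresolve (U2 z)] at h
        simp only [sub_self, zero_mul, mul_zero] at h
        exact (mul_eq_zero.mp h).resolve_left hz0
  · -- S₀
    have hmono : Tendsto (fun z : ℂ => ‖z‖ - 3) (Bornology.cobounded ℂ) atTop := by
      have h : Tendsto (fun x : ℝ => x + (-3)) atTop atTop :=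
        tendsto_atTop_add_const_right atTop (-3) tendsto_id
      have := h.comp (tendsto_norm_cobounded_atTop : Tendsto norm (Bornology.cobounded ℂ) atTop)
      simpa [Function.comp_def, sub_eq_add_neg] using this
    apply tendsto_atTop_mono' _ _ hmono
    filter_upwards [hev200] with z hz
    have hz0 : z ≠ 0 := by intro h; rw [h, norm_zero] at hz; linarith
    have heq : z * ((z - U1 z - U2 z)/z) = z - U1 z - U2 z := by
      rw [mul_comm]; exact div_mul_cancel₀ _ hz0
    rw [heq]
    have tri : ‖z‖ ≤ ‖z - U1 z - U2 z‖ + ‖U1 z‖ + ‖U2 z‖ := by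
      calc ‖z‖ = ‖(z - U1 z - U2 z) + U1 z + U2 z‖ := by ring_nf
      _ ≤ ‖(z - U1 z - U2 z) + U1 z‖ + ‖U2 z‖ := norm_add_le _ _
      _ ≤ ‖z - U1 z - U2 z‖ + ‖U1 z‖ + ‖U2 z‖ := by
          have := norm_add_le (z - U1 z - U2 z) (U1 z); linarith
    have := norm1 z hz
    have := norm2 z hz
    linarith
  · -- S₁
    have hcast : (((q₁ - q₂ - 1)/2 : ℝ) : ℂ) = -(q₂:ℂ) := by
      have hr : (q₁ - q₂ - 1)/2 = -q₂ := by linarith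
      rw [hr]; push_cast; ring
    rw [hcast]
    rw [Metric.tendsto_nhds]
    intro ε hε
    filter_upwards [tendsto_norm_cobounded_atTop.eventually_ge_atTop (max 200 (14/ε))]
      with z hzm
    have hz200 : 200 ≤ ‖z‖ := le_trans (le_max_left _ _) hzm
    have hz14 : 14/ε ≤ ‖z‖ := le_trans (le_max_right _ _) hzm
    have hz0 : z ≠ 0 := by intro h; rw [h, norm_zero] at hz200; linarith
    have heq : z * (U1 z / z) = U1 z := by
      rw [mul_comm]; exact div_mul_cancel₀ _ hz0
    rw [heq, dist_eq_norm]
    have hb := bd1 z hz200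
    have h14 : (0:ℝ) < 14/ε := by positivity
    have : (7:ℝ)/‖z‖ ≤ 7/(14/ε) := div_le_div_of_nonneg_left (by norm_num) h14 hz14
    have h7 : (7:ℝ)/(14/ε) = ε/2 := by field_simp; ring
    calc ‖U1 z - (-(q₂:ℂ))‖ ≤ 7/‖z‖ := hb
    _ ≤ ε/2 := by rw [← h7]; exact this
    _ < ε := by linarith
  · -- S₂
    rw [Metric.tendsto_nhds]
    intro ε hε
    filter_upwards [tendsto_norm_cobounded_atTop.eventually_ge_atTop (max 200 (14/ε))]
      with z hzm
    have hz200 : 200 ≤ ‖z‖ := le_trans (le_max_left _ _) hzm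
    have hz14 : 14/ε ≤ ‖z‖ := le_trans (le_max_right _ _) hzm
    have hz0 : z ≠ 0 := by intro h; rw [h, norm_zero] at hz200; linarith
    have heq : z * (U2 z / z) = U2 z := by
      rw [mul_comm]; exact div_mul_cancel₀ _ hz0
    rw [heq, dist_eq_norm]
    have hb := bd2 z hz200
    have h14 : (0:ℝ) < 14/ε := by positivity
    have : (7:ℝ)/‖z‖ ≤ 7/(14/ε) := div_le_div_of_nonneg_left (by norm_num) h14 hz14
    have h7 : (7:ℝ)/(14/ε) = ε/2 := by field_simp; ring
    calc ‖U2 z - 1‖ ≤ 7/‖z‖ := hb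
    _ ≤ ε/2 := by rw [← h7]; exact this
    _ < ε := by linarith
  · -- uniqueness
    intro S _hScont hSroot hSlim
    have h1 := Metric.tendsto_nhds.mp hSlim (1/4) (by norm_num)
    filter_upwards [tendsto_norm_cobounded_atTop.eventually_ge_atTop 201, h1]
      with z hz hdist
    have hz' : 200 ≤ ‖z‖ := by linarith
    have hz0 : z ≠ 0 := by intro h; rw [h, norm_zero] at hz; linarith
    have hroot := hSroot z (by linarith)
    have h0 : (z*(S z) - (z - U1 z - U2 z)) * (z*(S z) - U1 z) * (z*(S z) - U2 z) = 0 := by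
      rw [← hmul z hz' (S z), hroot, mul_zero]
    rw [dist_eq_norm] at hdist
    have hnear : ‖z * S z‖ < 5/4 := by
      calc ‖z * S z‖ = ‖(z * S z - 1) + 1‖ := by ring_nf
      _ ≤ ‖z * S z - 1‖ + ‖(1:ℂ)‖ := norm_add_le _ _
      _ < 5/4 := by simp at *; linarith
    rcases mul_eq_zero.mp h0 with h | h
    · rcases mul_eq_zero.mp h with h | h
      · exfalso
        have heq : z * S z = z - U1 z - U2 z := by linear_combination h
        have tri : ‖z‖ ≤ ‖z - U1 z - U2 z‖ + ‖U1 z‖ + ‖U2 z‖ := by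
          calc ‖z‖ = ‖(z - U1 z - U2 z) + U1 z + U2 z‖ := by ring_nf
          _ ≤ ‖(z - U1 z - U2 z) + U1 z‖ + ‖U2 z‖ := norm_add_le _ _
          _ ≤ ‖z - U1 z - U2 z‖ + ‖U1 z‖ + ‖U2 z‖ := by
              have := norm_add_le (z - U1 z - U2 z) (U1 z); linarith
        have := norm1 z hz'
        have := norm2 z hz'
        rw [heq] at hnear
        linarith
      · exfalso
        have heq : z * S z = U1 z := by linear_combination h
        have e1 : ‖U1 z - (-(q₂:ℂ))‖ ≤ 7/200 := le_trans (bd1 z hz') (hdivb z hz')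
        have tri : ‖(1:ℂ) - (-(q₂:ℂ))‖ ≤ ‖(1:ℂ) - U1 z‖ + ‖U1 z - (-(q₂:ℂ))‖ := by
          calc ‖(1:ℂ) - (-(q₂:ℂ))‖ = ‖((1:ℂ) - U1 z) + (U1 z - (-(q₂:ℂ)))‖ := by ring_nf
          _ ≤ ‖(1:ℂ) - U1 z‖ + ‖U1 z - (-(q₂:ℂ))‖ := norm_add_le _ _
        have hU11 : ‖(1:ℂ) - U1 z‖ = ‖z * S z - 1‖ := by
          rw [heq, norm_sub_rev]
        linarith
    · rw [eq_div_iff hz0]; linear_combination h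
end

section
/- For n ≥ 1, m ≥ 1 with n+1 ≥ m, α,β > -1, α−β ∉ ℤ, the polynomials C_{n,m}(x) = (1/Z) Σ_{k=0}^{n-1} C(n-1+α−β, n-1−k) C(m-1−α+β, k) x^k / Γ(k+α+1) and D_{n,m}(x) = −(1/Z) Σ_{k=0}^{m-1} C(m-1−α+β, m-1−k) C(n-1+α−β, k) x^k / Γ(k+β+1), with Z = (−1)^{n+m}(α−β)(α−β+1)_{n-1}(β−α+1)_{m-1}, give a type I function L(x) = C_{n,m}(x) x^α + D_{n,m}(x) x^β satisfying ∫₀^∞ L(x) x^k e^{-x} dx = 0 for k = 0, …, n+m−2 and ∫₀^∞ L(x) x^{n+m−1} e^{-x} dx = 1. -/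
open MeasureTheory Set

/-- Generalized binomial coefficient `C(γ,j) = γ(γ-1)⋯(γ-j+1)/j!`. -/
noncomputable def genBinom (γ : ℝ) (j : ℕ) : ℝ :=
  (∏ i ∈ Finset.range j, (γ - i)) / j.factorial


open Polynomial

/- divided difference lemma -/
lemma coeff_basis {s : Finset ℕ} {v : ℕ → ℝ} (i : ℕ) (hi : i ∈ s) :
    (Lagrange.basis s v i).coeff (s.card - 1) = (∏ j ∈ s.erase i, (v i - v j))⁻¹ := by
  have hb : Lagrange.basis s v i
      = C (∏ j ∈ s.erase i, (v i - v j)⁻¹) * ∏ j ∈ s.erase i, (X - C (v j)) := by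
    rw [Lagrange.basis, map_prod, ← Finset.prod_mul_distrib]
    rfl
  have hmonic : (∏ j ∈ s.erase i, (X - C (v j))).Monic :=
    monic_prod_of_monic _ _ fun j _ => monic_X_sub_C _
  have hdeg : (∏ j ∈ s.erase i, (X - C (v j))).natDegree = s.card - 1 := by
    rw [natDegree_prod_of_monic _ _ fun j _ => monic_X_sub_C _]
    simp [Finset.card_erase_of_mem hi]
  rw [hb, coeff_C_mul, ← hdeg, hmonic.coeff_natDegree, mul_one, ← Finset.prod_inv_distrib]

lemma divided_diff {s : Finset ℕ} {v : ℕ → ℝ} (hv : Set.InjOn v s) (p : ℝ[X])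
    (hp : p.degree < s.card) :
    ∑ i ∈ s, p.eval (v i) * (∏ j ∈ s.erase i, (v i - v j))⁻¹ = p.coeff (s.card - 1) := by
  conv_rhs => rw [Lagrange.eq_interpolate hv hp]
  rw [Lagrange.interpolate_apply, finset_sum_coeff]
  exact Finset.sum_congr rfl fun i hi => by rw [coeff_C_mul, coeff_basis i hi]


lemma Gamma_shift (s : ℝ) (hs : 0 < s) (k : ℕ) :
    Real.Gamma (s + k) = (∏ t ∈ Finset.range k, (s + t)) * Real.Gamma s := by
  induction k with
  | zero => simp
  | succ k ih =>
    have h1 : s + ((k : ℕ) + 1 : ℕ) = (s + k) + 1 := by push_cast; ring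
    have h2 : (0:ℝ) < s + k := by positivity
    rw [h1, Real.Gamma_add_one h2.ne', ih, Finset.prod_range_succ]
    push_cast; ring

lemma mono_integral (γ : ℝ) (hγ : -1 < γ) (j K : ℕ) :
    IntegrableOn (fun x : ℝ => x ^ j * x ^ γ * x ^ (K:ℝ) * Real.exp (-x)) (Ioi 0) ∧
    ∫ x in Ioi (0:ℝ), x ^ j * x ^ γ * x ^ (K:ℝ) * Real.exp (-x)
      = Real.Gamma ((j:ℝ) + γ + K + 1) := by
  set s : ℝ := (j:ℝ) + γ + K + 1 with hsdef
  have hs0 : 0 < s := by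
    have : (0:ℝ) ≤ (j:ℝ) := Nat.cast_nonneg j
    have : (0:ℝ) ≤ (K:ℝ) := Nat.cast_nonneg K
    simp only [hsdef]; linarith [Nat.cast_nonneg (α := ℝ) j, Nat.cast_nonneg (α := ℝ) K]
  have heq : EqOn (fun x : ℝ => x ^ j * x ^ γ * x ^ (K:ℝ) * Real.exp (-x))
      (fun x : ℝ => Real.exp (-x) * x ^ (s - 1)) (Ioi 0) := by
    intro x hx
    have hx0 : (0:ℝ) < x := hx
    have : x ^ j * x ^ γ * x ^ (K:ℝ) = x ^ (s - 1) := by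
      rw [← Real.rpow_natCast x j, ← Real.rpow_add hx0, ← Real.rpow_add hx0]
      congr 1
      simp only [hsdef]; ring
    simp only [this]; ring
  constructor
  · exact (Real.GammaIntegral_convergent hs0).congr_fun heq.symm measurableSet_Ioi
  · rw [setIntegral_congr_fun measurableSet_Ioi heq, ← Real.Gamma_eq_integral hs0]

lemma poly_integral (γ : ℝ) (hγ : -1 < γ) (N K : ℕ) (c : ℕ → ℝ) :
    IntegrableOn
      (fun x : ℝ => (∑ j ∈ Finset.range N, c j * x ^ j) * x ^ γ * x ^ (K:ℝ) * Real.exp (-x))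
      (Ioi 0) ∧
    ∫ x in Ioi (0:ℝ), (∑ j ∈ Finset.range N, c j * x ^ j) * x ^ γ * x ^ (K:ℝ) * Real.exp (-x)
      = ∑ j ∈ Finset.range N, c j * Real.Gamma ((j:ℝ) + γ + K + 1) := by
  have hfun : (fun x : ℝ =>
      (∑ j ∈ Finset.range N, c j * x ^ j) * x ^ γ * x ^ (K:ℝ) * Real.exp (-x))
      = fun x => ∑ j ∈ Finset.range N, c j * (x ^ j * x ^ γ * x ^ (K:ℝ) * Real.exp (-x)) := by
    funext x
    rw [Finset.sum_mul, Finset.sum_mul, Finset.sum_mul]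
    exact Finset.sum_congr rfl fun j _ => by ring
  have hint : ∀ j ∈ Finset.range N,
      IntegrableOn (fun x : ℝ => c j * (x ^ j * x ^ γ * x ^ (K:ℝ) * Real.exp (-x))) (Ioi 0) :=
    fun j _ => ((mono_integral γ hγ j K).1).const_mul _
  constructor
  · rw [hfun]; exact integrable_finset_sum _ hint
  · rw [hfun, integral_finset_sum _ hint]
    exact Finset.sum_congr rfl fun j _ => by
      rw [MeasureTheory.integral_const_mul, (mono_integral γ hγ j K).2]

lemma fact_prod (j : ℕ) : ∏ l ∈ Finset.range j, ((j:ℝ) - l) = j.factorial := by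
  rw [← Finset.prod_range_reflect]
  have h : ∀ l ∈ Finset.range j, ((j:ℝ) - ((j - 1 - l : ℕ) : ℝ)) = ((l + 1 : ℕ) : ℝ) := by
    intro l hl
    have hlj : l < j := Finset.mem_range.mp hl
    have : (j - 1 - l : ℕ) = j - (l+1) := by omega
    rw [this, Nat.cast_sub (by omega)]
    push_cast; ring
  rw [Finset.prod_congr rfl h, ← Nat.cast_prod, Finset.prod_range_add_one_eq_factorial]

lemma prod_erase_nat (n j : ℕ) (hj : j < n) :
    ∏ l ∈ (Finset.range n).erase j, ((j:ℝ) - l)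
      = (-1:ℝ)^(n-1-j) * j.factorial * (n-1-j).factorial := by
  have hset : (Finset.range n).erase j = Finset.range j ∪ Finset.Ico (j+1) n := by
    ext l
    simp only [Finset.mem_erase, Finset.mem_range, Finset.mem_union, Finset.mem_Ico]
    omega
  have hdisj : Disjoint (Finset.range j) (Finset.Ico (j+1) n) := by
    simp only [Finset.disjoint_left, Finset.mem_range, Finset.mem_Ico]
    omega
  rw [hset, Finset.prod_union hdisj, fact_prod]
  have h2 : ∏ l ∈ Finset.Ico (j+1) n, ((j:ℝ) - l)
      = (-1:ℝ)^(n-1-j) * (n-1-j).factorial := by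
    rw [Finset.prod_Ico_eq_prod_range]
    have h : ∀ i ∈ Finset.range (n - (j+1)), ((j:ℝ) - ((j + 1 + i : ℕ) : ℝ))
        = (-1) * ((i + 1 : ℕ) : ℝ) := by
      intro i _; push_cast; ring
    rw [Finset.prod_congr rfl h, Finset.prod_mul_distrib, Finset.prod_const,
      Finset.card_range, ← Nat.cast_prod, Finset.prod_range_add_one_eq_factorial]
    have : n - (j+1) = n - 1 - j := by omega
    rw [this]
  rw [h2]; ring

lemma core_prod (n m : ℕ) (hn : 1 ≤ n) (hm : 1 ≤ m) (δ : ℝ) (j : ℕ) (hj : j < n) :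
    (-1:ℝ)^(n-1-j) *
    ((∏ i ∈ Finset.range (n-1-j), ((n:ℝ) - 1 + δ - i)) *
     (∏ i ∈ Finset.range j, ((m:ℝ) - 1 - δ - i)) *
     (∏ i ∈ Finset.range m, (δ + j - i)))
    = (-1:ℝ)^(n+m) * δ * poch (δ+1) (n-1) * poch (1-δ) (m-1) := by
  obtain ⟨r, rfl⟩ : ∃ r, n = j + r + 1 := ⟨n - 1 - j, by omega⟩
  obtain ⟨m', rfl⟩ : ∃ m', m = m' + 1 := ⟨m - 1, by omega⟩
  have hr : j + r + 1 - 1 - j = r := by omega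
  have hn1 : j + r + 1 - 1 = j + r := by omega
  have hm1 : m' + 1 - 1 = m' := by omega
  rw [hr, hn1, hm1]
  have hA : ∏ i ∈ Finset.range r, (((j + r + 1 : ℕ):ℝ) - 1 + δ - i)
      = ∏ i ∈ Finset.range r, (δ + 1 + ((j + i : ℕ):ℝ)) := by
    rw [← Finset.prod_range_reflect]
    refine Finset.prod_congr rfl fun i hi => ?_
    have hir : i < r := Finset.mem_range.mp hi
    have : (r - 1 - i : ℕ) = r - (i+1) := by omega
    rw [this, Nat.cast_sub (by omega)]
    push_cast; ring
  have hB : ∏ i ∈ Finset.range j, (((m' + 1 : ℕ):ℝ) - 1 - δ - i)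
      = (-1:ℝ)^j * ∏ i ∈ Finset.range j, (δ + 1 + (i:ℝ) - (m' + 1)) := by
    have h : ∀ i ∈ Finset.range j, (((m' + 1 : ℕ):ℝ) - 1 - δ - i)
        = (-1) * (δ + 1 + (i:ℝ) - (m' + 1)) := fun i _ => by push_cast; ring
    rw [Finset.prod_congr rfl h, Finset.prod_mul_distrib, Finset.prod_const,
      Finset.card_range]
  have hC : ∏ i ∈ Finset.range (m' + 1), (δ + (j:ℝ) - i)
      = ∏ i ∈ Finset.range (m' + 1), (δ + 1 + ((j + i:ℕ):ℝ) - (m' + 1)) := by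
    rw [← Finset.prod_range_reflect]
    refine Finset.prod_congr rfl fun i hi => ?_
    have him : i < m' + 1 := Finset.mem_range.mp hi
    have : (m' + 1 - 1 - i : ℕ) = m' - i := by omega
    rw [this, Nat.cast_sub (by omega)]
    push_cast; ring
  rw [hA, hB, hC]
  set PA := ∏ i ∈ Finset.range r, (δ + 1 + ((j + i : ℕ):ℝ)) with hPA
  set PB := ∏ i ∈ Finset.range j, (δ + 1 + (i:ℝ) - (m' + 1)) with hPB
  set PC := ∏ i ∈ Finset.range (m' + 1), (δ + 1 + ((j + i:ℕ):ℝ) - (m' + 1)) with hPC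
  set PM := ∏ i ∈ Finset.range (m' + 1), (δ + 1 + (i:ℝ) - (m' + 1)) with hPM
  set PJ := ∏ i ∈ Finset.range j, (δ + 1 + (i:ℝ)) with hPJ
  have hBC : PB * PC = PM * PJ := by
    have h1 : PB * PC = ∏ i ∈ Finset.range (j + (m' + 1)), (δ + 1 + (i:ℝ) - (m' + 1)) := by
      rw [hPB, hPC, ← Finset.prod_range_add (fun i => (δ + 1 + (i:ℝ) - (m' + 1)))]
    have h2 : ∏ i ∈ Finset.range ((m' + 1) + j), (δ + 1 + (i:ℝ) - (m' + 1)) = PM * PJ := by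
      rw [Finset.prod_range_add (fun i => (δ + 1 + (i:ℝ) - (m' + 1))), hPM, hPJ]
      exact congrArg _ (Finset.prod_congr rfl fun i _ => by push_cast; ring)
    rw [h1, add_comm j (m'+1), h2]
  have hD : PM = (-1:ℝ)^m' * poch (1-δ) m' * δ := by
    have hrefl : PM = ∏ i ∈ Finset.range (m' + 1), (δ - (i:ℝ)) := by
      rw [hPM, ← Finset.prod_range_reflect (fun i => (δ - (i:ℝ)))]
      refine Finset.prod_congr rfl fun i hi => ?_
      have him : i < m' + 1 := Finset.mem_range.mp hi
      have : (m' + 1 - 1 - i : ℕ) = m' - i := by omega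
      rw [this, Nat.cast_sub (by omega)]
      push_cast; ring
    rw [hrefl, Finset.prod_range_succ']
    have h : ∀ i ∈ Finset.range m', (δ - (((i + 1 : ℕ)):ℝ))
        = (-1) * (1 - δ + (i:ℝ)) := fun i _ => by push_cast; ring
    rw [Finset.prod_congr rfl h, Finset.prod_mul_distrib, Finset.prod_const,
      Finset.card_range, poch]
    first
    | (push_cast; ring)
    | push_cast
  have hE : PJ * PA = poch (δ+1) (j+r) := by
    rw [hPJ, hPA, poch, Finset.prod_range_add (fun i => (δ + 1 + (i:ℝ)))]
  calc (-1:ℝ)^r * (PA * ((-1:ℝ)^j * PB) * PC)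
      = (-1:ℝ)^r * (-1:ℝ)^j * PA * (PB * PC) := by ring
    _ = (-1:ℝ)^r * (-1:ℝ)^j * PA * (((-1:ℝ)^m' * poch (1-δ) m' * δ) * PJ) := by
        rw [hBC, hD]
    _ = (-1:ℝ)^r * (-1:ℝ)^j * (-1:ℝ)^m' * δ * poch (1-δ) m' * (PJ * PA) := by ring
    _ = (-1:ℝ)^r * (-1:ℝ)^j * (-1:ℝ)^m' * δ * poch (1-δ) m' * poch (δ+1) (j+r) := by
        rw [hE]
    _ = (-1:ℝ)^(j + r + 1 + (m' + 1)) * δ * poch (δ+1) (j+r) * poch (1-δ) m' := by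
        rw [show j + r + 1 + (m' + 1) = r + (j + (m' + 2)) from by omega,
          pow_add, pow_add, pow_add]
        norm_num
        ring

section V
variable (n m : ℕ) (a b : ℝ)

noncomputable def nodes (l : ℕ) : ℝ := if l < n then a + 1 + l else b + 1 + ((l - n : ℕ):ℝ)

lemma range_split : Finset.range (n+m) = Finset.range n ∪ (Finset.range m).map (addLeftEmbedding n) :=
  Finset.range_add n m

lemma nodes_left {l : ℕ} (hl : l < n) : nodes n a b l = a + 1 + l := if_pos hl
lemma nodes_right (i : ℕ) : nodes n a b (n + i) = b + 1 + i := by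
  rw [nodes, if_neg (by omega)]
  congr 1
  norm_cast
  omega

lemma erase_prod_left (j : ℕ) (hj : j < n) :
    ∏ l ∈ (Finset.range (n+m)).erase j, (nodes n a b j - nodes n a b l)
    = ((-1:ℝ)^(n-1-j) * j.factorial * (n-1-j).factorial) *
      ∏ i ∈ Finset.range m, (a - b + (j:ℝ) - i) := by
  rw [range_split, Finset.erase_union_distrib]
  have hnotmem : j ∉ (Finset.range m).map (addLeftEmbedding n) := by
    simp only [Finset.mem_map, Finset.mem_range, addLeftEmbedding_apply]
    rintro ⟨i, -, rfl⟩; omega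
  rw [Finset.erase_eq_of_notMem hnotmem]
  have hdisj : Disjoint ((Finset.range n).erase j)
      ((Finset.range m).map (addLeftEmbedding n)) := by
    simp only [Finset.disjoint_left, Finset.mem_erase, Finset.mem_range, Finset.mem_map,
      addLeftEmbedding_apply]
    rintro x ⟨-, hx⟩ ⟨i, -, rfl⟩; omega
  rw [Finset.prod_union hdisj, Finset.prod_map]
  have h1 : ∏ l ∈ (Finset.range n).erase j, (nodes n a b j - nodes n a b l)
      = (-1:ℝ)^(n-1-j) * j.factorial * (n-1-j).factorial := by
    rw [← prod_erase_nat n j hj]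
    refine Finset.prod_congr rfl fun l hl => ?_
    obtain ⟨-, hl⟩ := Finset.mem_erase.mp hl
    rw [nodes_left n a b hj, nodes_left n a b (Finset.mem_range.mp hl)]
    ring
  have h2 : ∏ i ∈ Finset.range m, (nodes n a b j - nodes n a b (addLeftEmbedding n i))
      = ∏ i ∈ Finset.range m, (a - b + (j:ℝ) - i) := by
    refine Finset.prod_congr rfl fun i _ => ?_
    rw [addLeftEmbedding_apply, nodes_left n a b hj, nodes_right]
    ring
  rw [h1, h2]

lemma erase_prod_right (j : ℕ) (hj : j < m) :
    ∏ l ∈ (Finset.range (n+m)).erase (n+j), (nodes n a b (n+j) - nodes n a b l)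
    = ((-1:ℝ)^(m-1-j) * j.factorial * (m-1-j).factorial) *
      ∏ i ∈ Finset.range n, (b - a + (j:ℝ) - i) := by
  rw [range_split, Finset.erase_union_distrib]
  have hnotmem : n + j ∉ Finset.range n := by simp
  rw [Finset.erase_eq_of_notMem hnotmem]
  have hmapj : n + j = addLeftEmbedding n j := rfl
  have herase : ((Finset.range m).map (addLeftEmbedding n)).erase (n + j)
      = ((Finset.range m).erase j).map (addLeftEmbedding n) := by
    rw [Finset.map_erase]; rfl
  rw [herase]
  have hdisj : Disjoint (Finset.range n)
      (((Finset.range m).erase j).map (addLeftEmbedding n)) := by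
    simp only [Finset.disjoint_left, Finset.mem_range, Finset.mem_map, Finset.mem_erase,
      addLeftEmbedding_apply]
    rintro x hx ⟨i, -, rfl⟩; omega
  rw [Finset.prod_union hdisj, Finset.prod_map]
  have h1 : ∏ l ∈ Finset.range n, (nodes n a b (n+j) - nodes n a b l)
      = ∏ i ∈ Finset.range n, (b - a + (j:ℝ) - i) := by
    refine Finset.prod_congr rfl fun l hl => ?_
    rw [nodes_right, nodes_left n a b (Finset.mem_range.mp hl)]
    ring
  have h2 : ∏ i ∈ (Finset.range m).erase j,
        (nodes n a b (n+j) - nodes n a b (addLeftEmbedding n i))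
      = (-1:ℝ)^(m-1-j) * j.factorial * (m-1-j).factorial := by
    rw [← prod_erase_nat m j hj]
    refine Finset.prod_congr rfl fun i hi => ?_
    rw [addLeftEmbedding_apply, nodes_right, nodes_right]
    ring
  rw [h1, h2]
  ring

lemma nodes_injOn {α β : ℝ} (hαβ : ∀ k : ℤ, α - β ≠ (k : ℝ)) :
    Set.InjOn (nodes n α β) (Finset.range (n+m)) := by
  intro x hx y hy hxy
  by_cases hx' : x < n <;> by_cases hy' : y < n
  · rw [nodes_left n α β hx', nodes_left n α β hy'] at hxy
    exact_mod_cast (by linarith : (x:ℝ) = y)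
  · exfalso
    obtain ⟨i, rfl⟩ : ∃ i, y = n + i := ⟨y - n, by omega⟩
    rw [nodes_left n α β hx', nodes_right] at hxy
    exact hαβ ((i:ℤ) - x) (by push_cast; linarith)
  · exfalso
    obtain ⟨i, rfl⟩ : ∃ i, x = n + i := ⟨x - n, by omega⟩
    rw [nodes_left n α β hy', nodes_right] at hxy
    exact hαβ ((i:ℤ) - y) (by push_cast; linarith)
  · obtain ⟨i, rfl⟩ : ∃ i, x = n + i := ⟨x - n, by omega⟩
    obtain ⟨i', rfl⟩ : ∃ i', y = n + i' := ⟨y - n, by omega⟩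
    rw [nodes_right, nodes_right] at hxy
    have : (i:ℝ) = i' := by linarith
    have : i = i' := by exact_mod_cast this
    omega

end V

lemma moment (n m : ℕ) (hn : 1 ≤ n) (hm : 1 ≤ m) (α β : ℝ) (hα : -1 < α) (hβ : -1 < β)
    (hαβ : ∀ k : ℤ, α - β ≠ (k : ℝ)) (K : ℕ) (hK : K ≤ n + m - 1) :
    ∫ x in Ioi (0:ℝ),
      ((1 / ((-1 : ℝ) ^ (n + m) * (α - β) * poch (α - β + 1) (n - 1) * poch (β - α + 1) (m - 1)) *
          ∑ k ∈ Finset.range n,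
            genBinom ((n : ℝ) - 1 + α - β) (n - 1 - k) * genBinom ((m : ℝ) - 1 - α + β) k *
              x ^ k / Real.Gamma ((k : ℝ) + α + 1)) * x ^ α +
        (-(1 / ((-1 : ℝ) ^ (n + m) * (α - β) * poch (α - β + 1) (n - 1) *
            poch (β - α + 1) (m - 1))) *
          ∑ k ∈ Finset.range m,
            genBinom ((m : ℝ) - 1 - α + β) (m - 1 - k) * genBinom ((n : ℝ) - 1 + α - β) k *
              x ^ k / Real.Gamma ((k : ℝ) + β + 1)) * x ^ β) *
        x ^ (K : ℝ) * Real.exp (-x)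
      = if K = n + m - 1 then 1 else 0 := by
  set Z : ℝ := (-1 : ℝ) ^ (n + m) * (α - β) * poch (α - β + 1) (n - 1) * poch (β - α + 1) (m - 1)
    with hZdef
  have hδ : ∀ t : ℤ, α - β + (t:ℝ) ≠ 0 := fun t h => hαβ (-t) (by push_cast; linarith)
  have hZ : Z ≠ 0 := by
    rw [hZdef]
    refine mul_ne_zero (mul_ne_zero (mul_ne_zero (pow_ne_zero _ (by norm_num)) ?_) ?_) ?_
    · simpa using hδ 0
    · rw [poch]
      refine Finset.prod_ne_zero_iff.mpr fun i _ => ?_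
      have := hδ (1 + i)
      intro h; apply this; push_cast; linarith
    · rw [poch]
      refine Finset.prod_ne_zero_iff.mpr fun i _ => ?_
      have := hδ (-(1 + i))
      intro h; apply this; push_cast; linarith
  set cA : ℕ → ℝ := fun j => 1/Z *
    (genBinom ((n : ℝ) - 1 + α - β) (n - 1 - j) * genBinom ((m : ℝ) - 1 - α + β) j /
      Real.Gamma ((j : ℝ) + α + 1)) with hcA
  set cB : ℕ → ℝ := fun j => -(1/Z) *
    (genBinom ((m : ℝ) - 1 - α + β) (m - 1 - j) * genBinom ((n : ℝ) - 1 + α - β) j /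
      Real.Gamma ((j : ℝ) + β + 1)) with hcB
  have hEq : Set.EqOn
      (fun x : ℝ =>
        ((1 / Z * ∑ k ∈ Finset.range n,
            genBinom ((n : ℝ) - 1 + α - β) (n - 1 - k) * genBinom ((m : ℝ) - 1 - α + β) k *
              x ^ k / Real.Gamma ((k : ℝ) + α + 1)) * x ^ α +
          (-(1 / Z) * ∑ k ∈ Finset.range m,
            genBinom ((m : ℝ) - 1 - α + β) (m - 1 - k) * genBinom ((n : ℝ) - 1 + α - β) k *
              x ^ k / Real.Gamma ((k : ℝ) + β + 1)) * x ^ β) *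
          x ^ (K : ℝ) * Real.exp (-x))
      (fun x : ℝ =>
        (∑ j ∈ Finset.range n, cA j * x ^ j) * x ^ α * x ^ (K:ℝ) * Real.exp (-x)
        + (∑ j ∈ Finset.range m, cB j * x ^ j) * x ^ β * x ^ (K:ℝ) * Real.exp (-x))
      (Ioi 0) := by
    intro x _
    have h1 : 1 / Z * ∑ k ∈ Finset.range n,
        genBinom ((n : ℝ) - 1 + α - β) (n - 1 - k) * genBinom ((m : ℝ) - 1 - α + β) k *
          x ^ k / Real.Gamma ((k : ℝ) + α + 1) = ∑ j ∈ Finset.range n, cA j * x ^ j := by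
      rw [Finset.mul_sum]
      exact Finset.sum_congr rfl fun k _ => by rw [hcA]; ring
    have h2 : -(1 / Z) * ∑ k ∈ Finset.range m,
        genBinom ((m : ℝ) - 1 - α + β) (m - 1 - k) * genBinom ((n : ℝ) - 1 + α - β) k *
          x ^ k / Real.Gamma ((k : ℝ) + β + 1) = ∑ j ∈ Finset.range m, cB j * x ^ j := by
      rw [Finset.mul_sum]
      exact Finset.sum_congr rfl fun k _ => by rw [hcB]; ring
    simp only [h1, h2]
    ring
  rw [setIntegral_congr_fun measurableSet_Ioi hEq,
    integral_add ((poly_integral α hα n K cA).1) ((poly_integral β hβ m K cB).1),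
    (poly_integral α hα n K cA).2, (poly_integral β hβ m K cB).2]
  -- now combinatorics
  set v : ℕ → ℝ := nodes n α β with hv
  set p : Polynomial ℝ := ∏ t ∈ Finset.range K, (X + Polynomial.C (t:ℝ)) with hp
  have hmonic : p.Monic := monic_prod_of_monic _ _ fun t _ => monic_X_add_C _
  have hpdeg : p.natDegree = K := by
    rw [hp, natDegree_prod_of_monic _ _ fun t _ => monic_X_add_C _]
    simp only [Polynomial.natDegree_X_add_C]
    simp
  have heval : ∀ u : ℝ, p.eval u = ∏ t ∈ Finset.range K, (u + t) := fun u => by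
    rw [hp, eval_prod]; simp
  have hdeglt : p.degree < ((Finset.range (n+m)).card : WithBot ℕ) := by
    rw [Polynomial.degree_eq_natDegree hmonic.ne_zero, hpdeg, Finset.card_range]
    exact_mod_cast (by omega : K < n + m)
  have hdd := divided_diff (nodes_injOn n m hαβ) p hdeglt
  rw [Finset.card_range] at hdd
  have hleft : ∀ j ∈ Finset.range n, cA j * Real.Gamma ((j:ℝ) + α + K + 1)
      = p.eval (v j) * (∏ l ∈ (Finset.range (n+m)).erase j, (v j - v l))⁻¹ := by
    intro j hj'
    have hj : j < n := Finset.mem_range.mp hj'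
    set W := ∏ l ∈ (Finset.range (n+m)).erase j, (v j - v l) with hW
    have hWval : W = ((-1:ℝ)^(n-1-j) * j.factorial * (n-1-j).factorial) *
        ∏ i ∈ Finset.range m, (α - β + (j:ℝ) - i) := erase_prod_left n m α β j hj
    have hcoreL : genBinom ((n : ℝ) - 1 + α - β) (n - 1 - j) *
        genBinom ((m : ℝ) - 1 - α + β) j * W = Z := by
      rw [hWval, genBinom, genBinom]
      have e1 : ∏ i ∈ Finset.range (n-1-j), ((n:ℝ) - 1 + α - β - i)
          = ∏ i ∈ Finset.range (n-1-j), ((n:ℝ) - 1 + (α - β) - i) :=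
        Finset.prod_congr rfl fun _ _ => by ring
      have e2 : ∏ i ∈ Finset.range j, ((m:ℝ) - 1 - α + β - i)
          = ∏ i ∈ Finset.range j, ((m:ℝ) - 1 - (α - β) - i) :=
        Finset.prod_congr rfl fun _ _ => by ring
      have hcp := core_prod n m hn hm (α - β) j hj
      rw [show (1:ℝ) - (α - β) = β - α + 1 from by ring] at hcp
      rw [e1, e2, hZdef]
      have hfa : (((n-1-j).factorial : ℕ):ℝ) ≠ 0 := Nat.cast_ne_zero.mpr (Nat.factorial_ne_zero _)
      have hfb : ((j.factorial : ℕ):ℝ) ≠ 0 := Nat.cast_ne_zero.mpr (Nat.factorial_ne_zero _)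
      field_simp
      linear_combination hcp
    have hWne : W ≠ 0 := by
      intro h
      rw [h, mul_zero] at hcoreL
      exact hZ hcoreL.symm
    have hkey : 1/Z * (genBinom ((n : ℝ) - 1 + α - β) (n - 1 - j) *
        genBinom ((m : ℝ) - 1 - α + β) j) = W⁻¹ := by
      rw [inv_eq_one_div]
      field_simp
      linear_combination hcoreL
    have hgpos : (0:ℝ) < α + 1 + j := by
      have : (0:ℝ) ≤ (j:ℝ) := Nat.cast_nonneg j
      linarith
    have hsh : Real.Gamma ((j:ℝ) + α + (K:ℝ) + 1)
        = (∏ t ∈ Finset.range K, (α + 1 + (j:ℝ) + t)) * Real.Gamma (α + 1 + (j:ℝ)) := by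
      rw [show (j:ℝ) + α + (K:ℝ) + 1 = (α + 1 + (j:ℝ)) + (K:ℕ) from by push_cast; ring]
      exact Gamma_shift _ hgpos K
    have hgval : Real.Gamma ((j:ℝ) + α + 1) = Real.Gamma (α + 1 + (j:ℝ)) := by
      rw [show (j:ℝ) + α + 1 = α + 1 + (j:ℝ) from by ring]
    have hpe : p.eval (v j) = ∏ t ∈ Finset.range K, (α + 1 + (j:ℝ) + t) := by
      rw [heval, hv, nodes_left n α β hj]
    have hΓne : Real.Gamma (α + 1 + (j:ℝ)) ≠ 0 := (Real.Gamma_pos_of_pos hgpos).ne'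
    rw [hcA]
    simp only []
    rw [hsh, hgval, hpe, ← hkey]
    field_simp
  have hright : ∀ j ∈ Finset.range m, cB j * Real.Gamma ((j:ℝ) + β + K + 1)
      = p.eval (v (n+j)) * (∏ l ∈ (Finset.range (n+m)).erase (n+j), (v (n+j) - v l))⁻¹ := by
    intro j hj'
    have hj : j < m := Finset.mem_range.mp hj'
    set W := ∏ l ∈ (Finset.range (n+m)).erase (n+j), (v (n+j) - v l) with hW
    have hWval : W = ((-1:ℝ)^(m-1-j) * j.factorial * (m-1-j).factorial) *
        ∏ i ∈ Finset.range n, (β - α + (j:ℝ) - i) := erase_prod_right n m α β j hj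
    have hcoreR : genBinom ((m : ℝ) - 1 - α + β) (m - 1 - j) *
        genBinom ((n : ℝ) - 1 + α - β) j * W = -Z := by
      rw [hWval, genBinom, genBinom]
      have e1 : ∏ i ∈ Finset.range (m-1-j), ((m:ℝ) - 1 - α + β - i)
          = ∏ i ∈ Finset.range (m-1-j), ((m:ℝ) - 1 + (β - α) - i) :=
        Finset.prod_congr rfl fun _ _ => by ring
      have e2 : ∏ i ∈ Finset.range j, ((n:ℝ) - 1 + α - β - i)
          = ∏ i ∈ Finset.range j, ((n:ℝ) - 1 - (β - α) - i) :=
        Finset.prod_congr rfl fun _ _ => by ring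
      have hcp := core_prod m n hm hn (β - α) j hj
      rw [show (1:ℝ) - (β - α) = α - β + 1 from by ring,
        show m + n = n + m from by omega] at hcp
      rw [e1, e2, hZdef]
      have hfa : (((m-1-j).factorial : ℕ):ℝ) ≠ 0 := Nat.cast_ne_zero.mpr (Nat.factorial_ne_zero _)
      have hfb : ((j.factorial : ℕ):ℝ) ≠ 0 := Nat.cast_ne_zero.mpr (Nat.factorial_ne_zero _)
      field_simp
      linear_combination hcp
    have hWne : W ≠ 0 := by
      intro h
      rw [h, mul_zero] at hcoreR
      apply hZ
      have := hcoreR.symm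
      linarith [this]
    have hkey : -(1/Z) * (genBinom ((m : ℝ) - 1 - α + β) (m - 1 - j) *
        genBinom ((n : ℝ) - 1 + α - β) j) = W⁻¹ := by
      rw [inv_eq_one_div]
      field_simp
      linear_combination -hcoreR
    have hgpos : (0:ℝ) < β + 1 + j := by
      have : (0:ℝ) ≤ (j:ℝ) := Nat.cast_nonneg j
      linarith
    have hsh : Real.Gamma ((j:ℝ) + β + (K:ℝ) + 1)
        = (∏ t ∈ Finset.range K, (β + 1 + (j:ℝ) + t)) * Real.Gamma (β + 1 + (j:ℝ)) := by
      rw [show (j:ℝ) + β + (K:ℝ) + 1 = (β + 1 + (j:ℝ)) + (K:ℕ) from by push_cast; ring]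
      exact Gamma_shift _ hgpos K
    have hgval : Real.Gamma ((j:ℝ) + β + 1) = Real.Gamma (β + 1 + (j:ℝ)) := by
      rw [show (j:ℝ) + β + 1 = β + 1 + (j:ℝ) from by ring]
    have hpe : p.eval (v (n+j)) = ∏ t ∈ Finset.range K, (β + 1 + (j:ℝ) + t) := by
      rw [heval, hv, nodes_right n α β j]
    have hΓne : Real.Gamma (β + 1 + (j:ℝ)) ≠ 0 := (Real.Gamma_pos_of_pos hgpos).ne'
    rw [hcB]
    simp only []
    rw [hsh, hgval, hpe, ← hkey]
    field_simp
  rw [Finset.sum_congr rfl hleft, Finset.sum_congr rfl hright]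
  have hsplit : ∑ i ∈ Finset.range (n+m),
        p.eval (v i) * (∏ l ∈ (Finset.range (n+m)).erase i, (v i - v l))⁻¹
      = (∑ j ∈ Finset.range n,
          p.eval (v j) * (∏ l ∈ (Finset.range (n+m)).erase j, (v j - v l))⁻¹)
        + ∑ j ∈ Finset.range m,
          p.eval (v (n+j)) * (∏ l ∈ (Finset.range (n+m)).erase (n+j), (v (n+j) - v l))⁻¹ :=
    Finset.sum_range_add
      (fun i => p.eval (v i) * (∏ l ∈ (Finset.range (n+m)).erase i, (v i - v l))⁻¹) n m
  rw [← hsplit, hdd]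
  by_cases hKe : K = n + m - 1
  · rw [if_pos hKe, ← hKe, ← hpdeg]
    exact hmonic.coeff_natDegree
  · rw [if_neg hKe]
    exact Polynomial.coeff_eq_zero_of_natDegree_lt (by omega)

/-- Explicit formulas for the type I multiple Laguerre polynomials of the first kind:
`L(x) = C_{n,m}(x) x^α + D_{n,m}(x) x^β` satisfies the type I orthogonality and
normalization conditions for the pair of weights `(x^α e^{-x}, x^β e^{-x})`. -/
theorem typeI_multiple_laguerre_first_kind (n m : ℕ) (hn : 1 ≤ n) (hm : 1 ≤ m)
    (hnm : m ≤ n + 1) (α β : ℝ) (hα : -1 < α) (hβ : -1 < β)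
    (hαβ : ∀ k : ℤ, α - β ≠ (k : ℝ)) :
    let Z : ℝ := (-1 : ℝ) ^ (n + m) * (α - β) * poch (α - β + 1) (n - 1) * poch (β - α + 1) (m - 1)
    let C : ℝ → ℝ := fun x => (1 / Z) *
      ∑ k ∈ Finset.range n,
        genBinom ((n : ℝ) - 1 + α - β) (n - 1 - k) * genBinom ((m : ℝ) - 1 - α + β) k *
          x ^ k / Real.Gamma ((k : ℝ) + α + 1)
    let D : ℝ → ℝ := fun x => -(1 / Z) *
      ∑ k ∈ Finset.range m,
        genBinom ((m : ℝ) - 1 - α + β) (m - 1 - k) * genBinom ((n : ℝ) - 1 + α - β) k *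
          x ^ k / Real.Gamma ((k : ℝ) + β + 1)
    let L : ℝ → ℝ := fun x => C x * x ^ α + D x * x ^ β
    (∀ k : ℕ, k + 2 ≤ n + m →
      ∫ x in Ioi (0:ℝ), L x * x ^ (k : ℝ) * Real.exp (-x) = 0) ∧
    ∫ x in Ioi (0:ℝ), L x * x ^ (((n + m : ℕ) : ℝ) - 1) * Real.exp (-x) = 1 := by
  intro Z C D L
  constructor
  · intro k hk
    have h := moment n m hn hm α β hα hβ hαβ k (by omega)
    rw [if_neg (by omega)] at h
    exact h
  · have h := moment n m hn hm α β hα hβ hαβ (n + m - 1) (le_refl _)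
    rw [if_pos rfl] at h
    have hcast : ((n + m : ℕ) : ℝ) - 1 = (((n + m - 1 : ℕ)) : ℝ) := by
      rw [Nat.cast_sub (by omega)]
      norm_num
    rw [hcast]
    exact h
end
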